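/- arXiv:1906.02048 — 5 statements merged into one kernel-verified Lean document; each statement's English description precedes it below -/
import Mathlib

section
/- Let p_o, p_v ∈ (0,1). If the law L has bounded support and has no atoms different from zero, then bar M_c(p_o,p_v;L) < ∞; more precisely, with C̄ = sup{|x| : x ∈ supp L}, almost surely for every pair of vertices u, v ∈ ℤ² there exists a finite path γ from u to v with max_{N ≤ |γ|} |S_N(γ)| ≤ 6C̄. -/
open MeasureTheory ProbabilityTheory Filter
open scoped ENNReal

/-- Edges of the square lattice `ℤ²`: `(v, true)` is the horizontal edge from `v` to
`v + (1,0)`, and `(v, false)` is the vertical edge from `v` to `v + (0,1)`. -/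
abbrev Edge : Type := (ℤ × ℤ) × Bool

/-- Adjacency in the square lattice: `|u - v|₁ = 1`. -/
def LatAdj (u v : ℤ × ℤ) : Prop := |u.1 - v.1| + |u.2 - v.2| = 1

/-- The (unoriented) edge crossed when stepping from `u` to an adjacent vertex `v`. -/
def stepEdge (u v : ℤ × ℤ) : Edge :=
  if v = (u.1 + 1, u.2) then (u, true)
  else if v = (u.1, u.2 + 1) then (u, false)
  else if u = (v.1 + 1, v.2) then (v, true)
  else (v, false)

/-- The sign of a step: `+1` if the edge is crossed rightward or upward, `-1` otherwise. -/
def stepSign (u v : ℤ × ℤ) : ℝ :=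
  if v = (u.1 + 1, u.2) ∨ v = (u.1, u.2 + 1) then 1 else -1

/-- Partial sums `S_N(γ)` of the environment along a path `γ`:
each crossed edge `e` contributes `± Y_e X_e` according to the direction of crossing. -/
noncomputable def pathSum {Ω : Type} (X Y : Edge → Ω → ℝ) (γ : ℕ → ℤ × ℤ) (N : ℕ) (ω : Ω) : ℝ :=
  ∑ k ∈ Finset.range N,
    stepSign (γ k) (γ (k + 1)) * Y (stepEdge (γ k) (γ (k + 1))) ω *
      X (stepEdge (γ k) (γ (k + 1))) ω

/-- `γ : ℕ → ℤ × ℤ` is an infinite self-avoiding path starting at `b`. -/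
def IsSAPath (b : ℤ × ℤ) (γ : ℕ → ℤ × ℤ) : Prop :=
  γ 0 = b ∧ (∀ n, LatAdj (γ n) (γ (n + 1))) ∧ Function.Injective γ

/-- `Σ(b) = inf_{γ ∈ Γ_b} sup_N |S_N(γ)|`, valued in `ℝ≥0∞`. -/
noncomputable def SigmaRV {Ω : Type} (X Y : Edge → Ω → ℝ) (b : ℤ × ℤ) (ω : Ω) : ℝ≥0∞ :=
  ⨅ (γ : ℕ → ℤ × ℤ) (_ : IsSAPath b γ), ⨆ N : ℕ, ENNReal.ofReal |pathSum X Y γ N ω|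

/-- `M_c = inf {s > 0 : ℙ(Σ(O) ≤ s) > 0}` (`= ∞` if there is no such `s`). -/
noncomputable def Mc {Ω : Type} [MeasureSpace Ω] (X Y : Edge → Ω → ℝ) : ℝ≥0∞ :=
  sInf {s : ℝ≥0∞ | 0 < s ∧ 0 < (ℙ : Measure Ω) {ω | SigmaRV X Y (0, 0) ω ≤ s}}
/-- `γ` (with its first `n+1` vertices) is a finite path of length `n` from `u` to `v`. -/
def IsFinPath (u v : ℤ × ℤ) (n : ℕ) (γ : ℕ → ℤ × ℤ) : Prop :=
  γ 0 = u ∧ γ n = v ∧ ∀ k < n, LatAdj (γ k) (γ (k + 1))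

/-- `sup {|x| : x ∈ supp L}`, expressed as the least `C ≥ 0` with `L {|x| ≤ C} = 1`. -/
noncomputable def suppBound (L : Measure ℝ) : ℝ :=
  sInf {C : ℝ | 0 ≤ C ∧ L {x : ℝ | |x| ≤ C} = 1}

namespace BarMcAux

variable {Ω : Type} (X Y : Edge → Ω → ℝ) (ω : Ω)

/-- The signed weight of a single step. -/
noncomputable def stepW (a b : ℤ × ℤ) : ℝ :=
  stepSign a b * Y (stepEdge a b) ω * X (stepEdge a b) ω

lemma pathSum_eq (γ : ℕ → ℤ × ℤ) (N : ℕ) :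
    pathSum X Y γ N ω = ∑ k ∈ Finset.range N, stepW X Y ω (γ k) (γ (k + 1)) := rfl

lemma pathSum_zero (γ : ℕ → ℤ × ℤ) : pathSum X Y γ 0 ω = 0 := by
  simp [pathSum]

lemma pathSum_succ (γ : ℕ → ℤ × ℤ) (N : ℕ) :
    pathSum X Y γ (N + 1) ω = pathSum X Y γ N ω + stepW X Y ω (γ N) (γ (N + 1)) :=
  Finset.sum_range_succ _ _

lemma pathSum_congr {γ δ : ℕ → ℤ × ℤ} {N : ℕ} (h : ∀ k ≤ N, γ k = δ k) :
    pathSum X Y γ N ω = pathSum X Y δ N ω := by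
  rw [pathSum_eq, pathSum_eq]
  refine Finset.sum_congr rfl fun k hk => ?_
  rw [Finset.mem_range] at hk
  rw [h k (by omega), h (k + 1) (by omega)]

lemma stepW_right (x y : ℤ) :
    stepW X Y ω (x, y) (x + 1, y) = Y ((x, y), true) ω * X ((x, y), true) ω := by
  have h : ((x + 1, y) : ℤ × ℤ) = ((x, y).1 + 1, (x, y).2) := rfl
  rw [stepW, stepEdge, stepSign, if_pos h, if_pos (Or.inl h), one_mul]

lemma stepW_up (x y : ℤ) :
    stepW X Y ω (x, y) (x, y + 1) = Y ((x, y), false) ω * X ((x, y), false) ω := by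
  have h1 : ((x, y + 1) : ℤ × ℤ) ≠ ((x, y).1 + 1, (x, y).2) := by
    simp only [ne_eq, Prod.mk.injEq, not_and]; intro h; omega
  have h2 : ((x, y + 1) : ℤ × ℤ) = ((x, y).1, (x, y).2 + 1) := rfl
  rw [stepW, stepEdge, stepSign, if_neg h1, if_pos h2, if_pos (Or.inr h2), one_mul]

lemma stepW_left (x y : ℤ) :
    stepW X Y ω (x + 1, y) (x, y) = -(Y ((x, y), true) ω * X ((x, y), true) ω) := by
  have h1 : ((x, y) : ℤ × ℤ) ≠ ((x + 1, y).1 + 1, (x + 1, y).2) := by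
    simp only [ne_eq, Prod.mk.injEq, not_and]; intro h; omega
  have h2 : ((x, y) : ℤ × ℤ) ≠ ((x + 1, y).1, (x + 1, y).2 + 1) := by
    simp only [ne_eq, Prod.mk.injEq, not_and]; intro h; omega
  have h3 : ((x + 1, y) : ℤ × ℤ) = ((x, y).1 + 1, (x, y).2) := rfl
  rw [stepW, stepEdge, stepSign, if_neg h1, if_neg h2, if_pos h3,
    if_neg (by rw [not_or]; exact ⟨h1, h2⟩)]
  ring

lemma stepW_down (x y : ℤ) :
    stepW X Y ω (x, y + 1) (x, y) = -(Y ((x, y), false) ω * X ((x, y), false) ω) := by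
  have h1 : ((x, y) : ℤ × ℤ) ≠ ((x, y + 1).1 + 1, (x, y + 1).2) := by
    simp only [ne_eq, Prod.mk.injEq, not_and]; intro h; omega
  have h2 : ((x, y) : ℤ × ℤ) ≠ ((x, y + 1).1, (x, y + 1).2 + 1) := by
    simp only [ne_eq, Prod.mk.injEq, not_and]; intro h; omega
  have h3 : ((x, y + 1) : ℤ × ℤ) ≠ ((x, y).1 + 1, (x, y).2) := by
    simp only [ne_eq, Prod.mk.injEq, not_and]; intro h; omega
  have h4 : ((x, y + 1) : ℤ × ℤ) = ((x, y).1, (x, y).2 + 1) := rfl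
  rw [stepW, stepEdge, stepSign, if_neg h1, if_neg h2, if_neg h3,
    if_neg (by rw [not_or]; exact ⟨h1, h2⟩)]
  ring

lemma latAdj_iff {a b : ℤ × ℤ} :
    LatAdj a b ↔ (a.1 - b.1).natAbs + (a.2 - b.2).natAbs = 1 := by
  unfold LatAdj
  rw [Int.abs_eq_natAbs, Int.abs_eq_natAbs]
  omega

lemma stepW_abs {c : ℝ} (hX : ∀ e, |X e ω| ≤ c) (hY : ∀ e, Y e ω = 1 ∨ Y e ω = -1)
    (a b : ℤ × ℤ) : |stepW X Y ω a b| ≤ c := by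
  rw [stepW, abs_mul, abs_mul]
  have h1 : |stepSign a b| = 1 := by
    rw [stepSign]; split <;> simp
  have h2 : |Y (stepEdge a b) ω| = 1 := by
    rcases hY (stepEdge a b) with h | h <;> rw [h] <;> simp
  rw [h1, h2, one_mul, one_mul]
  exact hX _

lemma pathSum_abs_le {c : ℝ} (hX : ∀ e, |X e ω| ≤ c) (hY : ∀ e, Y e ω = 1 ∨ Y e ω = -1)
    (γ : ℕ → ℤ × ℤ) (N : ℕ) : |pathSum X Y γ N ω| ≤ N * c := by
  induction N with
  | zero => simp [pathSum_zero]
  | succ n ih =>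
      rw [pathSum_succ]
      calc |pathSum X Y γ n ω + stepW X Y ω (γ n) (γ (n + 1))|
          ≤ |pathSum X Y γ n ω| + |stepW X Y ω (γ n) (γ (n + 1))| := abs_add_le _ _
        _ ≤ n * c + c := add_le_add ih (stepW_abs X Y ω hX hY _ _)
        _ = (n + 1 : ℕ) * c := by push_cast; ring


lemma concatPath {u z z' : ℤ × ℤ} {n q : ℕ} {γ δ : ℕ → ℤ × ℤ}
    (hγ : IsFinPath u z n γ) (hδ : IsFinPath z z' q δ) :
    ∃ ε : ℕ → ℤ × ℤ, IsFinPath u z' (n + q) ε ∧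
      (∀ N ≤ n, pathSum X Y ε N ω = pathSum X Y γ N ω) ∧
      (∀ r ≤ q, pathSum X Y ε (n + r) ω = pathSum X Y γ n ω + pathSum X Y δ r ω) := by
  obtain ⟨hγ0, hγn, hγa⟩ := hγ
  obtain ⟨hδ0, hδq, hδa⟩ := hδ
  set ε : ℕ → ℤ × ℤ := fun k => if k ≤ n then γ k else δ (k - n) with hε
  have hε1 : ∀ k ≤ n, ε k = γ k := fun k hk => if_pos hk
  have hε2 : ∀ r : ℕ, ε (n + r) = δ r := by
    intro r
    cases r with
    | zero => simp only [hε, Nat.add_zero, le_refl, if_pos, hγn, hδ0]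
    | succ r =>
        have h1 : ¬ (n + (r + 1) ≤ n) := by omega
        have h2 : n + (r + 1) - n = r + 1 := by omega
        simp only [hε, if_neg h1, h2]
  have hsum1 : ∀ N ≤ n, pathSum X Y ε N ω = pathSum X Y γ N ω := by
    intro N hN
    exact pathSum_congr X Y ω (fun k hk => hε1 k (by omega))
  have hsum2 : ∀ r ≤ q, pathSum X Y ε (n + r) ω
      = pathSum X Y γ n ω + pathSum X Y δ r ω := by
    intro r hr
    induction r with
    | zero => rw [Nat.add_zero, hsum1 n le_rfl, pathSum_zero, add_zero]
    | succ r ih =>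
        have : n + (r + 1) = (n + r) + 1 := by omega
        rw [this, pathSum_succ, ih (by omega), pathSum_succ]
        have e1 : ε (n + r) = δ r := hε2 r
        have e2 : ε (n + r + 1) = δ (r + 1) := by rw [show n + r + 1 = n + (r+1) by omega]; exact hε2 (r+1)
        rw [e1, e2, add_assoc]
  refine ⟨ε, ⟨?_, ?_, ?_⟩, hsum1, hsum2⟩
  · rw [hε1 0 (by omega), hγ0]
  · rw [hε2 q, hδq]
  · intro k hk
    by_cases hkn : k < n
    · rw [hε1 k (by omega), hε1 (k + 1) (by omega)]
      exact hγa k hkn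
    · have hk1 : k = n + (k - n) := by omega
      have hk2 : k + 1 = n + (k - n + 1) := by omega
      have e1 := hε2 (k - n)
      rw [← hk1] at e1
      have e2 := hε2 (k - n + 1)
      rw [← hk2] at e2
      rw [e1, e2]
      exact hδa (k - n) (by omega)

lemma singlePath (z z' : ℤ × ℤ) (h : LatAdj z z') :
    ∃ δ : ℕ → ℤ × ℤ, IsFinPath z z' 1 δ ∧
      ∀ N ≤ 1, pathSum X Y δ N ω = if N = 0 then 0 else stepW X Y ω z z' := by
  refine ⟨fun k => if k = 0 then z else z', ⟨rfl, rfl, ?_⟩, ?_⟩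
  · intro k hk
    have : k = 0 := by omega
    subst this
    simpa using h
  · intro N hN
    interval_cases N
    · simp [pathSum_zero]
    · rw [pathSum_succ, pathSum_zero, zero_add]
      norm_num

lemma loopPath (s0 s1 s2 s3 : ℤ × ℤ) (h01 : LatAdj s0 s1) (h12 : LatAdj s1 s2)
    (h23 : LatAdj s2 s3) (h30 : LatAdj s3 s0) :
    ∃ δ : ℕ → ℤ × ℤ, IsFinPath s0 s0 4 δ ∧
      pathSum X Y δ 4 ω =
        stepW X Y ω s0 s1 + stepW X Y ω s1 s2 + stepW X Y ω s2 s3 + stepW X Y ω s3 s0 := by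
  refine ⟨fun k => if k = 0 then s0 else if k = 1 then s1 else if k = 2 then s2
    else if k = 3 then s3 else s0, ⟨rfl, rfl, ?_⟩, ?_⟩
  · intro k hk
    interval_cases k <;> simpa
  · rw [show (4:ℕ) = 3 + 1 from rfl, pathSum_succ, pathSum_succ, pathSum_succ, pathSum_succ,
      pathSum_zero]
    norm_num

/-- Iterating a closed 4-loop `j` times. -/
lemma loopsPath {c : ℝ} (hc : 0 ≤ c) (hX : ∀ e, |X e ω| ≤ c)
    (hY : ∀ e, Y e ω = 1 ∨ Y e ω = -1)
    {s0 : ℤ × ℤ} {t : ℝ} {δ0 : ℕ → ℤ × ℤ} (hδ0 : IsFinPath s0 s0 4 δ0)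
    (ht : pathSum X Y δ0 4 ω = t) (j : ℕ) :
    ∃ δ : ℕ → ℤ × ℤ, IsFinPath s0 s0 (4 * j) δ ∧
      pathSum X Y δ (4 * j) ω = j * t ∧
      ∀ N ≤ 4 * j, ∃ i : ℕ, i ≤ j ∧ |pathSum X Y δ N ω - i * t| ≤ 3 * c := by
  induction j with
  | zero =>
      refine ⟨fun _ => s0, ⟨rfl, rfl, by omega⟩, by simp [pathSum_zero], ?_⟩
      intro N hN
      have : N = 0 := by omega
      subst this
      exact ⟨0, le_rfl, by simp [pathSum_zero]; positivity⟩
  | succ j ih =>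
      obtain ⟨δ, hδ, hδsum, hδbd⟩ := ih
      obtain ⟨ε, hε, hεsum1, hεsum2⟩ := concatPath X Y ω hδ hδ0
      have hlen : 4 * j + 4 = 4 * (j + 1) := by omega
      refine ⟨ε, by rwa [hlen] at hε, ?_, ?_⟩
      · rw [← hlen, hεsum2 4 le_rfl, hδsum, ht]; push_cast; ring
      · intro N hN
        by_cases h1 : N ≤ 4 * j
        · obtain ⟨i, hi, hb⟩ := hδbd N h1
          exact ⟨i, by omega, by rwa [hεsum1 N h1]⟩
        · have hr : N = 4 * j + (N - 4 * j) := by omega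
          set r := N - 4 * j with hrdef
          have hr4 : r ≤ 4 := by omega
          rw [hr, hεsum2 r hr4, hδsum]
          by_cases h4 : r = 4
          · refine ⟨j + 1, le_rfl, ?_⟩
            rw [h4, ht]
            push_cast
            have : (j:ℝ) * t + t - (j + 1) * t = 0 := by ring
            rw [this, abs_zero]; positivity
          · refine ⟨j, by omega, ?_⟩
            have : (j:ℝ) * t + pathSum X Y δ0 r ω - j * t = pathSum X Y δ0 r ω := by ring
            rw [this]
            calc |pathSum X Y δ0 r ω| ≤ r * c := pathSum_abs_le X Y ω hX hY δ0 r
              _ ≤ 3 * c := by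
                  have : (r : ℝ) ≤ 3 := by exact_mod_cast (by omega : r ≤ 3)
                  nlinarith

lemma round_aux (a t : ℝ) (ht : t ≠ 0) : ∃ m : ℤ, |a + m * t| ≤ |t| / 2 := by
  refine ⟨round (-a / t), ?_⟩
  have h := abs_sub_round (-a / t)
  have heq : a + (round (-a / t) : ℝ) * t = ((-a / t) - (round (-a / t) : ℝ)) * (-t) := by
    field_simp
    ring
  rw [heq, abs_mul, abs_neg]
  calc |(-a / t) - (round (-a / t):ℝ)| * |t| ≤ (1/2) * |t| :=
        mul_le_mul_of_nonneg_right h (abs_nonneg t)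
    _ = |t| / 2 := by ring

lemma affine_bound (S t : ℝ) (i j : ℕ) (hij : i ≤ j) :
    |S + i * t| ≤ max |S| |S + j * t| := by
  have hi : (i : ℝ) ≤ j := by exact_mod_cast hij
  have h0 : (0 : ℝ) ≤ i := by positivity
  have hmS : |S| ≤ max |S| |S + j * t| := le_max_left _ _
  have hmj : |S + j * t| ≤ max |S| |S + j * t| := le_max_right _ _
  have haS := abs_le.1 (le_refl |S|)
  have haj := abs_le.1 (le_refl |S + j * t|)
  rcases le_total 0 t with htt | htt
  · refine abs_le.2 ⟨?_, ?_⟩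
    · nlinarith [neg_abs_le S]
    · nlinarith [le_abs_self (S + j * t)]
  · refine abs_le.2 ⟨?_, ?_⟩
    · nlinarith [neg_abs_le (S + j * t)]
    · nlinarith [le_abs_self S]

lemma latAdj_cases' {ax ay bx by' : ℤ} (h : LatAdj (ax, ay) (bx, by')) :
    (bx = ax + 1 ∧ by' = ay) ∨ (ax = bx + 1 ∧ ay = by') ∨
    (bx = ax ∧ by' = ay + 1) ∨ (ax = bx ∧ ay = by' + 1) := by
  rw [latAdj_iff] at h
  simp only at h
  omega

lemma latAdj_r (x y : ℤ) : LatAdj (x, y) (x + 1, y) := by rw [latAdj_iff]; simp only; omega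
lemma latAdj_l (x y : ℤ) : LatAdj (x + 1, y) (x, y) := by rw [latAdj_iff]; simp only; omega
lemma latAdj_u (x y : ℤ) : LatAdj (x, y) (x, y + 1) := by rw [latAdj_iff]; simp only; omega
lemma latAdj_d (x y : ℤ) : LatAdj (x, y + 1) (x, y) := by rw [latAdj_iff]; simp only; omega

lemma latAdj_symm {a b : ℤ × ℤ} (h : LatAdj a b) : LatAdj b a := by
  rw [latAdj_iff] at h ⊢
  omega

lemma stepW_rev {a b : ℤ × ℤ} (h : LatAdj a b) :
    stepW X Y ω b a = -stepW X Y ω a b := by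
  obtain ⟨ax, ay⟩ := a
  obtain ⟨bx, by'⟩ := b
  rcases latAdj_cases' h with ⟨h1, h2⟩ | ⟨h1, h2⟩ | ⟨h1, h2⟩ | ⟨h1, h2⟩ <;>
    subst h1 <;> subst h2
  · rw [stepW_left, stepW_right]
  · rw [stepW_right, stepW_left, neg_neg]
  · rw [stepW_down, stepW_up]
  · rw [stepW_up, stepW_down, neg_neg]

lemma moveSeg {c : ℝ} (hc : 0 ≤ c) (hX : ∀ e, |X e ω| ≤ c)
    (hY : ∀ e, Y e ω = 1 ∨ Y e ω = -1)
    {s0 s1 s2 s3 : ℤ × ℤ} (h01 : LatAdj s0 s1) (h12 : LatAdj s1 s2)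
    (h23 : LatAdj s2 s3) (h30 : LatAdj s3 s0)
    (hgood : stepW X Y ω s0 s1 + stepW X Y ω s1 s2 + stepW X Y ω s2 s3
        + stepW X Y ω s3 s0 ≠ 0 ∨ stepW X Y ω s0 s1 = 0)
    (S : ℝ) (hS : |S| ≤ 2 * c) :
    ∃ (q : ℕ) (δ : ℕ → ℤ × ℤ), IsFinPath s0 s1 q δ ∧
      (∀ N ≤ q, |S + pathSum X Y δ N ω| ≤ 6 * c) ∧
      |S + pathSum X Y δ q ω| ≤ 2 * c := by
  have h26 : (2 : ℝ) * c ≤ 6 * c := by linarith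
  set w := stepW X Y ω s0 s1 with hwdef
  have hw : |w| ≤ c := stepW_abs X Y ω hX hY _ _
  rcases hgood with hκ | hw0
  · -- gadget case
    set κ := stepW X Y ω s0 s1 + stepW X Y ω s1 s2 + stepW X Y ω s2 s3
        + stepW X Y ω s3 s0 with hκdef
    have hκabs : |κ| ≤ 4 * c := by
      have a1 := stepW_abs X Y ω hX hY s0 s1
      have a2 := stepW_abs X Y ω hX hY s1 s2
      have a3 := stepW_abs X Y ω hX hY s2 s3
      have a4 := stepW_abs X Y ω hX hY s3 s0
      calc |κ| ≤ |stepW X Y ω s0 s1 + stepW X Y ω s1 s2 + stepW X Y ω s2 s3|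
            + |stepW X Y ω s3 s0| := abs_add_le _ _
        _ ≤ (|stepW X Y ω s0 s1 + stepW X Y ω s1 s2| + |stepW X Y ω s2 s3|)
            + |stepW X Y ω s3 s0| := by gcongr; exact abs_add_le _ _
        _ ≤ ((|stepW X Y ω s0 s1| + |stepW X Y ω s1 s2|) + |stepW X Y ω s2 s3|)
            + |stepW X Y ω s3 s0| := by gcongr; exact abs_add_le _ _
        _ ≤ 4 * c := by linarith
    obtain ⟨m, hm⟩ := round_aux (S + w) κ hκ
    -- choose the loop direction and count
    obtain ⟨t, j, hjt, δ0, hδ0, ht⟩ :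
        ∃ (t : ℝ) (j : ℕ), (j : ℝ) * t = (m : ℝ) * κ ∧
          ∃ δ0 : ℕ → ℤ × ℤ, IsFinPath s0 s0 4 δ0 ∧ pathSum X Y δ0 4 ω = t := by
      rcases le_or_gt 0 m with hm0 | hm0
      · obtain ⟨δ0, hδ0, ht⟩ := loopPath X Y ω s0 s1 s2 s3 h01 h12 h23 h30
        refine ⟨κ, m.toNat, ?_, δ0, hδ0, ht⟩
        have h' : ((m.toNat : ℕ) : ℝ) = (m : ℝ) := by exact_mod_cast Int.toNat_of_nonneg hm0
        rw [h']
      · obtain ⟨δ0, hδ0, ht⟩ := loopPath X Y ω s0 s3 s2 s1 (latAdj_symm h30)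
          (latAdj_symm h23) (latAdj_symm h12) (latAdj_symm h01)
        refine ⟨-κ, (-m).toNat, ?_, δ0, hδ0, ?_⟩
        · have h' : (((-m).toNat : ℕ) : ℝ) = ((-m : ℤ) : ℝ) := by
            exact_mod_cast Int.toNat_of_nonneg (by omega : (0:ℤ) ≤ -m)
          rw [h']
          push_cast
          ring
        · rw [ht, stepW_rev X Y ω h30, stepW_rev X Y ω h23, stepW_rev X Y ω h12,
            stepW_rev X Y ω h01, hκdef]
          ring
    obtain ⟨δL, hδL, hδLsum, hδLbd⟩ := loopsPath X Y ω hc hX hY hδ0 ht j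
    obtain ⟨δ1, hδ1, hδ1sum⟩ := singlePath X Y ω s0 s1 h01
    obtain ⟨ε, hε, hεsum1, hεsum2⟩ := concatPath X Y ω hδL hδ1
    have hjκ : |S + (j : ℝ) * t| ≤ 3 * c := by
      rw [hjt]
      have : S + (m : ℝ) * κ = (S + w + m * κ) - w := by ring
      rw [this]
      calc |(S + w + m * κ) - w| ≤ |S + w + m * κ| + |w| := abs_sub _ _
        _ ≤ |κ| / 2 + c := by linarith
        _ ≤ 3 * c := by linarith
    have hfin : |S + pathSum X Y ε (4 * j + 1) ω| ≤ 2 * c := by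
      rw [hεsum2 1 le_rfl, hδLsum, hδ1sum 1 le_rfl]
      simp only [if_neg (one_ne_zero)]
      have : S + ((j : ℝ) * t + w) = S + w + (m : ℝ) * κ := by rw [← hjt]; ring
      rw [this]
      calc |S + w + (m:ℝ) * κ| ≤ |κ| / 2 := hm
        _ ≤ 2 * c := by linarith
    refine ⟨4 * j + 1, ε, hε, ?_, hfin⟩
    intro N hN
    by_cases hNq : N = 4 * j + 1
    · rw [hNq]; linarith [hfin]
    · have hN4 : N ≤ 4 * j := by omega
      rw [hεsum1 N hN4]
      obtain ⟨i, hi, hb⟩ := hδLbd N hN4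
      have h1 : |S + (i : ℝ) * t| ≤ 3 * c := by
        calc |S + (i : ℝ) * t| ≤ max |S| |S + (j : ℝ) * t| := affine_bound S t i j hi
          _ ≤ 3 * c := max_le (by linarith) hjκ
      calc |S + pathSum X Y δL N ω|
          = |(S + (i:ℝ) * t) + (pathSum X Y δL N ω - (i:ℝ) * t)| := by ring_nf
        _ ≤ |S + (i:ℝ) * t| + |pathSum X Y δL N ω - (i:ℝ) * t| := abs_add_le _ _
        _ ≤ 3 * c + 3 * c := add_le_add h1 hb
        _ = 6 * c := by ring
  · -- degenerate case: the crossing edge has zero weight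
    obtain ⟨δ1, hδ1, hδ1sum⟩ := singlePath X Y ω s0 s1 h01
    refine ⟨1, δ1, hδ1, ?_, ?_⟩
    · intro N hN
      interval_cases N
      · rw [hδ1sum 0 (by omega)]
        have : |S| ≤ 6 * c := by linarith
        simpa using this
      · rw [hδ1sum 1 le_rfl]
        simp only [if_neg one_ne_zero, ← hwdef, hw0, add_zero]
        linarith
    · rw [hδ1sum 1 le_rfl]
      simp only [if_neg one_ne_zero, ← hwdef, hw0, add_zero]
      exact hS

/-- The "curl" of the unit face with lower-left corner `(px, py)`. -/
noncomputable def faceKappa (px py : ℤ) : ℝ :=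
  stepW X Y ω (px, py) (px + 1, py) + stepW X Y ω (px + 1, py) (px + 1, py + 1)
    + stepW X Y ω (px + 1, py + 1) (px, py + 1) + stepW X Y ω (px, py + 1) (px, py)

/-- The good-face dichotomy. -/
def FaceGood (px py : ℤ) : Prop :=
  faceKappa X Y ω px py ≠ 0 ∨
    (X ((px, py), true) ω = 0 ∧ X ((px, py), false) ω = 0)

lemma faceKappa_eq (px py : ℤ) :
    faceKappa X Y ω px py =
      Y ((px, py), true) ω * X ((px, py), true) ω
      + Y ((px + 1, py), false) ω * X ((px + 1, py), false) ω
      - Y ((px, py + 1), true) ω * X ((px, py + 1), true) ω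
      - Y ((px, py), false) ω * X ((px, py), false) ω := by
  rw [faceKappa, stepW_right, stepW_up, stepW_left, stepW_down]
  ring

lemma move {c : ℝ} (hc : 0 ≤ c) (hX : ∀ e, |X e ω| ≤ c)
    (hY : ∀ e, Y e ω = 1 ∨ Y e ω = -1)
    (hGF : ∀ px py : ℤ, FaceGood X Y ω px py)
    (z z' : ℤ × ℤ) (hadj : LatAdj z z') (S : ℝ) (hS : |S| ≤ 2 * c) :
    ∃ (q : ℕ) (δ : ℕ → ℤ × ℤ), IsFinPath z z' q δ ∧
      (∀ N ≤ q, |S + pathSum X Y δ N ω| ≤ 6 * c) ∧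
      |S + pathSum X Y δ q ω| ≤ 2 * c := by
  obtain ⟨zx, zy⟩ := z
  obtain ⟨wx, wy⟩ := z'
  rcases latAdj_cases' hadj with ⟨h1, h2⟩ | ⟨h1, h2⟩ | ⟨h1, h2⟩ | ⟨h1, h2⟩
  · -- right move
    subst wx; subst wy
    refine moveSeg X Y ω hc hX hY (latAdj_r zx zy) (latAdj_u (zx + 1) zy)
      (latAdj_l zx (zy + 1)) (latAdj_d zx zy) ?_ S hS
    rcases hGF zx zy with hκ | ⟨hz, _⟩
    · left; rw [faceKappa] at hκ; exact hκ
    · right; rw [stepW_right, hz, mul_zero]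
  · -- left move
    subst zx; subst zy
    refine moveSeg X Y ω hc hX hY (latAdj_l wx wy) (latAdj_u wx wy)
      (latAdj_r wx (wy + 1)) (latAdj_d (wx + 1) wy) ?_ S hS
    rcases hGF wx wy with hκ | ⟨hz, _⟩
    · left
      rw [faceKappa_eq] at hκ
      rw [stepW_left, stepW_up, stepW_right, stepW_down]
      intro hcon
      apply hκ
      linarith
    · right; rw [stepW_left, hz, mul_zero, neg_zero]
  · -- up move
    subst wx; subst wy
    refine moveSeg X Y ω hc hX hY (latAdj_u zx zy) (latAdj_r zx (zy + 1))
      (latAdj_d (zx + 1) zy) (latAdj_l zx zy) ?_ S hS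
    rcases hGF zx zy with hκ | ⟨_, hz⟩
    · left
      rw [faceKappa_eq] at hκ
      rw [stepW_up, stepW_right, stepW_down, stepW_left]
      intro hcon
      apply hκ
      linarith
    · right; rw [stepW_up, hz, mul_zero]
  · -- down move
    subst zx; subst zy
    refine moveSeg X Y ω hc hX hY (latAdj_d wx wy) (latAdj_r wx wy)
      (latAdj_u (wx + 1) wy) (latAdj_l wx (wy + 1)) ?_ S hS
    rcases hGF wx wy with hκ | ⟨_, hz⟩
    · left
      rw [faceKappa_eq] at hκ
      rw [stepW_down, stepW_right, stepW_up, stepW_left]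
      intro hcon
      apply hκ
      linarith
    · right; rw [stepW_down, hz, mul_zero, neg_zero]

lemma reach {c : ℝ} (hc : 0 ≤ c) (hX : ∀ e, |X e ω| ≤ c)
    (hY : ∀ e, Y e ω = 1 ∨ Y e ω = -1)
    (hGF : ∀ px py : ℤ, FaceGood X Y ω px py) (u v : ℤ × ℤ) :
    ∀ (d : ℕ) (z : ℤ × ℤ), (v.1 - z.1).natAbs + (v.2 - z.2).natAbs = d →
    ∀ (n : ℕ) (γ : ℕ → ℤ × ℤ), IsFinPath u z n γ →
      (∀ N ≤ n, |pathSum X Y γ N ω| ≤ 6 * c) → |pathSum X Y γ n ω| ≤ 2 * c →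
    ∃ (n' : ℕ) (γ' : ℕ → ℤ × ℤ), IsFinPath u v n' γ' ∧
      ∀ N ≤ n', |pathSum X Y γ' N ω| ≤ 6 * c := by
  intro d
  induction d with
  | zero =>
      intro z hz n γ hγ hb _
      have : z = v := by
        obtain ⟨zx, zy⟩ := z; obtain ⟨vx, vy⟩ := v
        simp only at hz
        have h1 : vx = zx := by omega
        have h2 : vy = zy := by omega
        rw [h1, h2]
      rw [this] at hγ
      exact ⟨n, γ, hγ, hb⟩
  | succ d ih =>
      intro z hz n γ hγ hb hfin
      -- pick the next vertex towards v
      obtain ⟨z', hadj, hd⟩ : ∃ z' : ℤ × ℤ, LatAdj z z' ∧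
          (v.1 - z'.1).natAbs + (v.2 - z'.2).natAbs = d := by
        obtain ⟨zx, zy⟩ := z; obtain ⟨vx, vy⟩ := v
        simp only at hz ⊢
        by_cases h1 : zx < vx
        · exact ⟨(zx + 1, zy), latAdj_r zx zy, by simp only; omega⟩
        · by_cases h2 : vx < zx
          · refine ⟨(zx - 1, zy), ?_, by simp only; omega⟩
            have := latAdj_l (zx - 1) zy
            simpa using this
          · by_cases h3 : zy < vy
            · exact ⟨(zx, zy + 1), latAdj_u zx zy, by simp only; omega⟩
            · refine ⟨(zx, zy - 1), ?_, by simp only; omega⟩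
              have := latAdj_d zx (zy - 1)
              simpa using this
      obtain ⟨q, δ, hδ, hδb, hδfin⟩ := move X Y ω hc hX hY hGF z z' hadj
        (pathSum X Y γ n ω) hfin
      obtain ⟨ε, hε, hεsum1, hεsum2⟩ := concatPath X Y ω hγ hδ
      refine ih z' hd (n + q) ε hε ?_ ?_
      · intro N hN
        by_cases hNn : N ≤ n
        · rw [hεsum1 N hNn]; exact hb N hNn
        · have : N = n + (N - n) := by omega
          rw [this, hεsum2 (N - n) (by omega)]
          exact hδb (N - n) (by omega)
      · rw [hεsum2 q le_rfl]
        exact hδfin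

lemma det {c : ℝ} (hc : 0 ≤ c) (hX : ∀ e, |X e ω| ≤ c)
    (hY : ∀ e, Y e ω = 1 ∨ Y e ω = -1)
    (hGF : ∀ px py : ℤ, FaceGood X Y ω px py) (u v : ℤ × ℤ) :
    ∃ (n : ℕ) (γ : ℕ → ℤ × ℤ), IsFinPath u v n γ ∧
      ∀ N ≤ n, |pathSum X Y γ N ω| ≤ 6 * c := by
  refine reach X Y ω hc hX hY hGF u v _ u rfl 0 (fun _ => u) ⟨rfl, rfl, by omega⟩ ?_ ?_
  · intro N hN
    have : N = 0 := by omega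
    rw [this, pathSum_zero]
    simpa using by positivity
  · rw [pathSum_zero]
    simpa using by positivity

lemma suppBound_nonneg (L : Measure ℝ)
    (hbdd : ∃ C : ℝ, 0 ≤ C ∧ L {x : ℝ | |x| ≤ C} = 1) : 0 ≤ suppBound L := by
  obtain ⟨C, hC⟩ := hbdd
  exact le_csInf ⟨C, hC⟩ fun b hb => hb.1

lemma suppBound_full (L : Measure ℝ) [IsProbabilityMeasure L]
    (hbdd : ∃ C : ℝ, 0 ≤ C ∧ L {x : ℝ | |x| ≤ C} = 1) :
    L {x : ℝ | |x| ≤ suppBound L} = 1 := by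
  set c := suppBound L with hc
  have hbb : BddBelow {C : ℝ | 0 ≤ C ∧ L {x : ℝ | |x| ≤ C} = 1} := ⟨0, fun b hb => hb.1⟩
  have hne : {C : ℝ | 0 ≤ C ∧ L {x : ℝ | |x| ≤ C} = 1}.Nonempty := hbdd
  have hmeas : ∀ a : ℝ, MeasurableSet {x : ℝ | |x| ≤ a} := fun a =>
    measurableSet_le (measurable_abs) measurable_const
  have key : ∀ n : ℕ, L {x : ℝ | |x| ≤ c + 1 / (n + 1)} = 1 := by
    intro n
    have hlt : c < c + 1 / (n + 1) := by
      have : (0:ℝ) < 1 / (n+1) := by positivity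
      linarith
    obtain ⟨C, hCA, hC⟩ := (csInf_lt_iff hbb hne).1 hlt
    refine le_antisymm prob_le_one ?_
    rw [← hCA.2]
    exact measure_mono fun x hx => le_trans hx (le_of_lt hC)
  have hcap : {x : ℝ | |x| ≤ c} = ⋂ n : ℕ, {x : ℝ | |x| ≤ c + 1 / (n + 1)} := by
    ext x
    simp only [Set.mem_iInter, Set.mem_setOf_eq]
    constructor
    · intro h n
      have : (0:ℝ) < 1 / (n+1) := by positivity
      linarith
    · intro h
      by_contra hcon
      push_neg at hcon
      obtain ⟨n, hn⟩ := exists_nat_one_div_lt (show (0:ℝ) < |x| - c by linarith)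
      have h2 := h n
      have : (1:ℝ) / (n + 1) < |x| - c := hn
      linarith
  have hcompl : L {x : ℝ | |x| ≤ c}ᶜ = 0 := by
    rw [hcap, Set.compl_iInter]
    refine measure_iUnion_null fun n => ?_
    have h1 : L {x : ℝ | |x| ≤ c + 1 / (n + 1)}ᶜ = 0 := by
      rw [measure_compl (hmeas _) (measure_ne_top _ _), key n, measure_univ, tsub_self]
    exact h1
  have := measure_add_measure_compl (μ := L) (hmeas c)
  rw [hcompl, add_zero, measure_univ] at this
  exact this

lemma atom0 {Ω : Type} [MeasureSpace Ω] [IsProbabilityMeasure (ℙ : Measure Ω)]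
    (Z W : Ω → ℝ) (hZ : Measurable Z) (hW : Measurable W) (hind : IndepFun Z W ℙ)
    (hatom : ∀ t : ℝ, t ≠ 0 → (ℙ : Measure Ω) {ω | Z ω = t} = 0) :
    (ℙ : Measure Ω) {ω | Z ω ≠ 0 ∧ Z ω + W ω = 0} = 0 := by
  have hmap : Measure.map (fun ω => (W ω, Z ω)) ℙ
      = (Measure.map W ℙ).prod (Measure.map Z ℙ) :=
    (indepFun_iff_map_prod_eq_prod_map_map hW.aemeasurable hZ.aemeasurable).1 hind.symm
  set T : Set (ℝ × ℝ) := {q : ℝ × ℝ | q.2 ≠ 0 ∧ q.2 + q.1 = 0} with hT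
  have hTmeas : MeasurableSet T := by
    have h1 : MeasurableSet {q : ℝ × ℝ | q.2 ≠ 0} :=
      (measurable_snd (measurableSet_singleton (0:ℝ))).compl
    have h2 : MeasurableSet {q : ℝ × ℝ | q.2 + q.1 = 0} :=
      (measurable_snd.add measurable_fst) (measurableSet_singleton (0:ℝ))
    exact h1.inter h2
  have hpre : {ω | Z ω ≠ 0 ∧ Z ω + W ω = 0} = (fun ω => (W ω, Z ω)) ⁻¹' T := rfl
  rw [hpre, ← Measure.map_apply (hW.prodMk hZ) hTmeas, hmap,
    Measure.prod_apply hTmeas]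
  have hslice : ∀ w : ℝ, (Measure.map Z ℙ) (Prod.mk w ⁻¹' T) = 0 := by
    intro w
    by_cases hw : w = 0
    · have : Prod.mk w ⁻¹' T = ∅ := by
        ext z
        simp only [Set.mem_preimage, hT, Set.mem_setOf_eq, Set.mem_empty_iff_false, hw,
          iff_false, not_and]
        intro h1 h2
        exact h1 (by linarith)
      rw [this, measure_empty]
    · have : Prod.mk w ⁻¹' T = {-w} := by
        ext z
        simp only [Set.mem_preimage, hT, Set.mem_setOf_eq, Set.mem_singleton_iff]
        constructor
        · intro h; linarith [h.2]
        · intro h; subst h; constructor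
          · simpa using hw
          · ring
      rw [this, Measure.map_apply hZ (measurableSet_singleton _)]
      have : Z ⁻¹' {-w} = {ω | Z ω = -w} := rfl
      rw [this]
      exact hatom (-w) (neg_ne_zero.2 hw)
  calc ∫⁻ w, (Measure.map Z ℙ) (Prod.mk w ⁻¹' T) ∂(Measure.map W ℙ)
      = ∫⁻ _, 0 ∂(Measure.map W ℙ) := by
        refine MeasureTheory.lintegral_congr fun w => hslice w
    _ = 0 := MeasureTheory.lintegral_zero

lemma indep_extract {Ω : Type} [MeasureSpace Ω] [IsProbabilityMeasure (ℙ : Measure Ω)]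
    (X Y : Edge → Ω → ℝ) (hmX : ∀ e, Measurable (X e)) (hmY : ∀ e, Measurable (Y e))
    (hindep : iIndepFun (Sum.elim X Y) ℙ)
    (e a b d : Edge) (hea : e ≠ a) (heb : e ≠ b) (hed : e ≠ d)
    (σ σa σb σd : ℝ) :
    IndepFun (fun ω => σ * (Y e ω * X e ω))
      (fun ω => σa * (Y a ω * X a ω) + σb * (Y b ω * X b ω) + σd * (Y d ω * X d ω)) ℙ := by
  classical
  have hmf : ∀ i : Edge ⊕ Edge, Measurable (Sum.elim X Y i) := by
    rintro (i | i)
    · exact hmX i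
    · exact hmY i
  set S : Finset (Edge ⊕ Edge) := {Sum.inl e, Sum.inr e} with hS
  set T : Finset (Edge ⊕ Edge) :=
    {Sum.inl a, Sum.inr a, Sum.inl b, Sum.inr b, Sum.inl d, Sum.inr d} with hTd
  have hST : Disjoint S T := by
    rw [Finset.disjoint_left]
    intro i hiS hiT
    simp only [hS, hTd, Finset.mem_insert, Finset.mem_singleton] at hiS hiT
    rcases hiS with h | h <;> subst h <;>
      simp only [Sum.inl.injEq, Sum.inr.injEq, reduceCtorEq, false_or, or_false] at hiT <;>
      tauto
  have h1 := hindep.indepFun_finset S T hST hmf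
  have heS1 : Sum.inr e ∈ S := by simp [hS]
  have heS2 : Sum.inl e ∈ S := by simp [hS]
  have haT1 : Sum.inr a ∈ T := by simp [hTd]
  have haT2 : Sum.inl a ∈ T := by simp [hTd]
  have hbT1 : Sum.inr b ∈ T := by simp [hTd]
  have hbT2 : Sum.inl b ∈ T := by simp [hTd]
  have hdT1 : Sum.inr d ∈ T := by simp [hTd]
  have hdT2 : Sum.inl d ∈ T := by simp [hTd]
  have hφS : Measurable (fun v : (∀ _ : S, ℝ) =>
      σ * (v ⟨Sum.inr e, heS1⟩ * v ⟨Sum.inl e, heS2⟩)) := by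
    apply Measurable.const_mul
    exact (measurable_pi_apply _).mul (measurable_pi_apply _)
  have hφT : Measurable (fun v : (∀ _ : T, ℝ) =>
      σa * (v ⟨Sum.inr a, haT1⟩ * v ⟨Sum.inl a, haT2⟩)
      + σb * (v ⟨Sum.inr b, hbT1⟩ * v ⟨Sum.inl b, hbT2⟩)
      + σd * (v ⟨Sum.inr d, hdT1⟩ * v ⟨Sum.inl d, hdT2⟩)) := by
    apply Measurable.add
    apply Measurable.add
    · apply Measurable.const_mul
      exact (measurable_pi_apply _).mul (measurable_pi_apply _)
    · apply Measurable.const_mul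
      exact (measurable_pi_apply _).mul (measurable_pi_apply _)
    · apply Measurable.const_mul
      exact (measurable_pi_apply _).mul (measurable_pi_apply _)
  exact h1.comp hφS hφT

lemma bad_null {Ω : Type} [MeasureSpace Ω] [IsProbabilityMeasure (ℙ : Measure Ω)]
    (L : Measure ℝ) (X Y : Edge → Ω → ℝ)
    (hmX : ∀ e, Measurable (X e)) (hmY : ∀ e, Measurable (Y e))
    (hindep : iIndepFun (Sum.elim X Y) ℙ)
    (hXlaw : ∀ e, Measure.map (X e) ℙ = L)
    (hYval : ∀ e ω, Y e ω = 1 ∨ Y e ω = -1)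
    (hatoms : ∀ x : ℝ, x ≠ 0 → L {x} = 0)
    (e a b d : Edge) (hea : e ≠ a) (heb : e ≠ b) (hed : e ≠ d)
    (σ σa σb σd : ℝ) (hσ : σ = 1 ∨ σ = -1) :
    (ℙ : Measure Ω) {ω | X e ω ≠ 0 ∧
      σ * (Y e ω * X e ω) + (σa * (Y a ω * X a ω) + σb * (Y b ω * X b ω)
        + σd * (Y d ω * X d ω)) = 0} = 0 := by
  have hZm : Measurable (fun ω => σ * (Y e ω * X e ω)) :=
    ((hmY e).mul (hmX e)).const_mul σ
  have hWm : Measurable (fun ω => σa * (Y a ω * X a ω) + σb * (Y b ω * X b ω)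
      + σd * (Y d ω * X d ω)) := by
    apply Measurable.add
    apply Measurable.add
    · exact ((hmY a).mul (hmX a)).const_mul σa
    · exact ((hmY b).mul (hmX b)).const_mul σb
    · exact ((hmY d).mul (hmX d)).const_mul σd
  have hind := indep_extract X Y hmX hmY hindep e a b d hea heb hed σ σa σb σd
  have hXs : ∀ t : ℝ, t ≠ 0 → (ℙ : Measure Ω) {ω | X e ω = t} = 0 := by
    intro t ht
    have h1 : {ω | X e ω = t} = X e ⁻¹' {t} := rfl
    rw [h1, ← Measure.map_apply (hmX e) (measurableSet_singleton t), hXlaw e]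
    exact hatoms t ht
  have hatomZ : ∀ t : ℝ, t ≠ 0 →
      (ℙ : Measure Ω) {ω | σ * (Y e ω * X e ω) = t} = 0 := by
    intro t ht
    have hsub : {ω | σ * (Y e ω * X e ω) = t}
        ⊆ {ω | X e ω = t} ∪ {ω | X e ω = -t} := by
      intro ω hω
      simp only [Set.mem_setOf_eq] at hω
      simp only [Set.mem_union, Set.mem_setOf_eq]
      rcases hσ with h | h <;> rcases hYval e ω with hy | hy <;> rw [h, hy] at hω <;>
        [left; right; right; left] <;> linarith
    exact measure_mono_null hsub
      (measure_union_null (hXs t ht) (hXs (-t) (neg_ne_zero.2 ht)))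
  have hkey := atom0 _ _ hZm hWm hind hatomZ
  refine measure_mono_null (fun ω hω => ?_) hkey
  simp only [Set.mem_setOf_eq] at hω ⊢
  refine ⟨?_, hω.2⟩
  have hx := hω.1
  rcases hσ with h | h <;> rcases hYval e ω with hy | hy <;> rw [h, hy] <;>
    intro hcon <;> apply hx <;> linarith

lemma ae_X_bound {Ω : Type} [MeasureSpace Ω] [IsProbabilityMeasure (ℙ : Measure Ω)]
    (L : Measure ℝ) [IsProbabilityMeasure L] {f : Ω → ℝ}
    (hm : Measurable f) (hlaw : Measure.map f ℙ = L)
    (hbdd : ∃ C : ℝ, 0 ≤ C ∧ L {x : ℝ | |x| ≤ C} = 1) :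
    ∀ᵐ ω ∂(ℙ : Measure Ω), |f ω| ≤ suppBound L := by
  have hmeas : MeasurableSet {x : ℝ | |x| ≤ suppBound L} :=
    measurableSet_le measurable_abs measurable_const
  rw [ae_iff]
  have h1 : {ω | ¬ |f ω| ≤ suppBound L} = f ⁻¹' ({x : ℝ | |x| ≤ suppBound L}ᶜ) := rfl
  rw [h1, ← Measure.map_apply hm hmeas.compl, hlaw,
    measure_compl hmeas (measure_ne_top _ _), suppBound_full L hbdd, measure_univ, tsub_self]

lemma face_ae {Ω : Type} [MeasureSpace Ω] [IsProbabilityMeasure (ℙ : Measure Ω)]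
    (L : Measure ℝ) (X Y : Edge → Ω → ℝ)
    (hmX : ∀ e, Measurable (X e)) (hmY : ∀ e, Measurable (Y e))
    (hindep : iIndepFun (Sum.elim X Y) ℙ)
    (hXlaw : ∀ e, Measure.map (X e) ℙ = L)
    (hYval : ∀ e ω, Y e ω = 1 ∨ Y e ω = -1)
    (hatoms : ∀ x : ℝ, x ≠ 0 → L {x} = 0) (px py : ℤ) :
    ∀ᵐ ω ∂(ℙ : Measure Ω), FaceGood X Y ω px py := by
  classical
  have hd12 : (((px, py), true) : Edge) ≠ ((px + 1, py), false) := by simp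
  have hd13 : (((px, py), true) : Edge) ≠ ((px, py + 1), true) := by
    intro h
    injection h with ha hb
    injection ha with h3 h4
    omega
  have hd14 : (((px, py), true) : Edge) ≠ ((px, py), false) := by simp
  have hd41 : (((px, py), false) : Edge) ≠ ((px, py), true) := by simp
  have hd42 : (((px, py), false) : Edge) ≠ ((px + 1, py), false) := by
    intro h
    injection h with ha hb
    injection ha with h3 h4
    omega
  have hd43 : (((px, py), false) : Edge) ≠ ((px, py + 1), true) := by simp
  have h1 := bad_null L X Y hmX hmY hindep hXlaw hYval hatoms
    ((px, py), true) ((px + 1, py), false) ((px, py + 1), true) ((px, py), false)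
    hd12 hd13 hd14 1 1 (-1) (-1) (Or.inl rfl)
  have h4 := bad_null L X Y hmX hmY hindep hXlaw hYval hatoms
    ((px, py), false) ((px, py), true) ((px + 1, py), false) ((px, py + 1), true)
    hd41 hd42 hd43 (-1) 1 1 (-1) (Or.inr rfl)
  rw [ae_iff]
  refine measure_mono_null (fun ω hω => ?_) (measure_union_null h1 h4)
  simp only [Set.mem_setOf_eq] at hω
  have hκ : faceKappa X Y ω px py = 0 := by
    by_contra h
    exact hω (Or.inl h)
  have hz : ¬(X ((px, py), true) ω = 0 ∧ X ((px, py), false) ω = 0) :=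
    fun h => hω (Or.inr h)
  rw [faceKappa_eq] at hκ
  simp only [Set.mem_union, Set.mem_setOf_eq]
  rcases not_and_or.1 hz with h | h
  · left
    exact ⟨h, by linarith⟩
  · right
    exact ⟨h, by linarith⟩

end BarMcAux


/-- Theorem 3 (⇐): for `p_o, p_v ∈ (0,1)`, if `L` has bounded support and no atoms other
than possibly at `0`, then `M̄_c < ∞`: with `C̄ = sup {|x| : x ∈ supp L}`, almost surely
every pair of vertices `u, v` is joined by a finite path all of whose partial sums are
bounded in absolute value by `6 C̄`. -/
theorem barMc_finite_of_bounded_support_no_atoms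
    {Ω : Type} [MeasureSpace Ω] [IsProbabilityMeasure (ℙ : Measure Ω)]
    (L : Measure ℝ) [IsProbabilityMeasure L] (hL : L ≠ Measure.dirac 0)
    (p_o p_v : ℝ) (hpo : p_o ∈ Set.Ioo (0 : ℝ) 1) (hpv : p_v ∈ Set.Ioo (0 : ℝ) 1)
    (X Y : Edge → Ω → ℝ)
    (hmX : ∀ e, Measurable (X e)) (hmY : ∀ e, Measurable (Y e))
    (hindep : iIndepFun (Sum.elim X Y) ℙ)
    (hXlaw : ∀ e, Measure.map (X e) ℙ = L)
    (hYval : ∀ e ω, Y e ω = 1 ∨ Y e ω = -1)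
    (hYo : ∀ v : ℤ × ℤ, (ℙ : Measure Ω) {ω | Y (v, true) ω = 1} = ENNReal.ofReal p_o)
    (hYv : ∀ v : ℤ × ℤ, (ℙ : Measure Ω) {ω | Y (v, false) ω = 1} = ENNReal.ofReal p_v)
    (hbdd : ∃ C : ℝ, 0 ≤ C ∧ L {x : ℝ | |x| ≤ C} = 1)
    (hatoms : ∀ x : ℝ, x ≠ 0 → L {x} = 0) :
    ∀ᵐ ω ∂(ℙ : Measure Ω), ∀ u v : ℤ × ℤ, ∃ (n : ℕ) (γ : ℕ → ℤ × ℤ),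
      IsFinPath u v n γ ∧ ∀ N ≤ n, |pathSum X Y γ N ω| ≤ 6 * suppBound L := by
  classical
  have hc0 := BarMcAux.suppBound_nonneg L hbdd
  have hA : ∀ᵐ ω ∂(ℙ : Measure Ω), ∀ e : Edge, |X e ω| ≤ suppBound L :=
    ae_all_iff.2 fun e => BarMcAux.ae_X_bound L (hmX e) (hXlaw e) hbdd
  have hB : ∀ᵐ ω ∂(ℙ : Measure Ω), ∀ p : ℤ × ℤ, BarMcAux.FaceGood X Y ω p.1 p.2 :=
    ae_all_iff.2 fun p =>
      BarMcAux.face_ae L X Y hmX hmY hindep hXlaw hYval hatoms p.1 p.2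
  filter_upwards [hA, hB] with ω h1 h2
  intro u v
  exact BarMcAux.det X Y ω hc0 h1 (fun e => hYval e ω) (fun px py => h2 (px, py)) u v
end

section
/- Let φ : ℕ → ℝ₊ satisfy φ(N) = o(√N) as N → ∞. Let (X_n)_{n∈ℕ} be i.i.d. random variables almost surely equal to a nonzero constant, and let (Z_n)_{n∈ℕ} be an independent sequence of independent ±1-valued random variables with r_n = P(Z_n = +1) satisfying liminf_{N→∞} (1/N) Σ_{k=1}^N r_k(1−r_k) > 0. Then lim_{N→∞} P(|Σ_{k=1}^N Z_k X_k| > φ(N)) = 1. -/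
open MeasureTheory ProbabilityTheory Filter
open scoped ENNReal

section AuxCLT

variable {Ω : Type} [MeasureSpace Ω] [IsProbabilityMeasure (ℙ : Measure Ω)]

private lemma bddInt {f : Ω → ℝ} (hm : Measurable f) {C : ℝ} (h : ∀ ω, |f ω| ≤ C) :
    Integrable f (ℙ : Measure Ω) :=
  (integrable_const C).mono' hm.aestronglyMeasurable
    (Filter.Eventually.of_forall (by simpa [Real.norm_eq_abs] using h))

private lemma sum_int_valued {Ω' : Type} (Z : ℕ → Ω' → ℝ)
    (hZval : ∀ n ω, Z n ω = 1 ∨ Z n ω = -1) (N : ℕ) (ω : Ω') :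
    ∃ j : ℤ, ∑ k ∈ Finset.range N, Z k ω = (j : ℝ) := by
  induction N with
  | zero => exact ⟨0, by simp⟩
  | succ n ih =>
    obtain ⟨j, hj⟩ := ih
    rcases hZval n ω with h | h
    · exact ⟨j + 1, by rw [Finset.sum_range_succ, hj, h]; push_cast; ring⟩
    · exact ⟨j - 1, by rw [Finset.sum_range_succ, hj, h]; push_cast; ring⟩

private lemma charProd (Z : ℕ → Ω → ℝ) (hmZ : ∀ n, Measurable (Z n))
    (hZval : ∀ n ω, Z n ω = 1 ∨ Z n ω = -1)
    (hInd : ∀ n, IndepFun (fun ω => ∑ k ∈ Finset.range n, Z k ω) (Z n) (ℙ : Measure Ω))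
    (θ : ℝ) (N : ℕ) :
    (∫ ω, Real.cos (θ * ∑ k ∈ Finset.range N, Z k ω))^2
      + (∫ ω, Real.sin (θ * ∑ k ∈ Finset.range N, Z k ω))^2
      = ∏ k ∈ Finset.range N,
          (Real.cos θ ^ 2 + (∫ ω, Z k ω)^2 * Real.sin θ ^ 2) := by
  induction N with
  | zero => simp
  | succ n ih =>
    have hSm : Measurable (fun ω => ∑ k ∈ Finset.range n, Z k ω) :=
      Finset.measurable_sum _ (fun k _ => hmZ k)
    have hZb : ∀ ω, |Z n ω| ≤ 1 := fun ω => by rcases hZval n ω with h | h <;> simp [h]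
    have hintZ : Integrable (Z n) (ℙ : Measure Ω) := bddInt (hmZ n) hZb
    have hmcos : Measurable (fun ω => Real.cos (θ * ∑ k ∈ Finset.range n, Z k ω)) :=
      Real.measurable_cos.comp (measurable_const.mul hSm)
    have hmsin : Measurable (fun ω => Real.sin (θ * ∑ k ∈ Finset.range n, Z k ω)) :=
      Real.measurable_sin.comp (measurable_const.mul hSm)
    have hintcos : Integrable (fun ω => Real.cos (θ * ∑ k ∈ Finset.range n, Z k ω))
        (ℙ : Measure Ω) := bddInt hmcos (fun ω => Real.abs_cos_le_one _)
    have hintsin : Integrable (fun ω => Real.sin (θ * ∑ k ∈ Finset.range n, Z k ω))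
        (ℙ : Measure Ω) := bddInt hmsin (fun ω => Real.abs_sin_le_one _)
    have hintsinZ : Integrable (fun ω => Real.sin (θ * ∑ k ∈ Finset.range n, Z k ω) * Z n ω)
        (ℙ : Measure Ω) := bddInt (hmsin.mul (hmZ n))
        (fun ω => by rw [abs_mul]
                     exact mul_le_one₀ (Real.abs_sin_le_one _) (abs_nonneg _) (hZb ω))
    have hintcosZ : Integrable (fun ω => Real.cos (θ * ∑ k ∈ Finset.range n, Z k ω) * Z n ω)
        (ℙ : Measure Ω) := bddInt (hmcos.mul (hmZ n))
        (fun ω => by rw [abs_mul]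
                     exact mul_le_one₀ (Real.abs_cos_le_one _) (abs_nonneg _) (hZb ω))
    have hIndSin : IndepFun (fun ω => Real.sin (θ * ∑ k ∈ Finset.range n, Z k ω)) (Z n)
        (ℙ : Measure Ω) :=
      (hInd n).comp (Real.measurable_sin.comp (measurable_const.mul measurable_id)) measurable_id
    have hIndCos : IndepFun (fun ω => Real.cos (θ * ∑ k ∈ Finset.range n, Z k ω)) (Z n)
        (ℙ : Measure Ω) :=
      (hInd n).comp (Real.measurable_cos.comp (measurable_const.mul measurable_id)) measurable_id
    have hmulsin : ∫ ω, Real.sin (θ * ∑ k ∈ Finset.range n, Z k ω) * Z n ω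
        = (∫ ω, Real.sin (θ * ∑ k ∈ Finset.range n, Z k ω)) * ∫ ω, Z n ω := by
      have := hIndSin.integral_mul_eq_mul_integral hintsin.aestronglyMeasurable hintZ.aestronglyMeasurable
      simpa [Pi.mul_apply] using this
    have hmulcos : ∫ ω, Real.cos (θ * ∑ k ∈ Finset.range n, Z k ω) * Z n ω
        = (∫ ω, Real.cos (θ * ∑ k ∈ Finset.range n, Z k ω)) * ∫ ω, Z n ω := by
      have := hIndCos.integral_mul_eq_mul_integral hintcos.aestronglyMeasurable hintZ.aestronglyMeasurable
      simpa [Pi.mul_apply] using this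
    have hcos_pt : ∀ ω, Real.cos (θ * ∑ k ∈ Finset.range (n+1), Z k ω)
        = Real.cos θ * Real.cos (θ * ∑ k ∈ Finset.range n, Z k ω)
          - Real.sin θ * (Real.sin (θ * ∑ k ∈ Finset.range n, Z k ω) * Z n ω) := by
      intro ω
      rw [Finset.sum_range_succ, mul_add, Real.cos_add]
      rcases hZval n ω with h | h <;> rw [h] <;>
        simp [Real.cos_neg, Real.sin_neg] <;> ring
    have hsin_pt : ∀ ω, Real.sin (θ * ∑ k ∈ Finset.range (n+1), Z k ω)
        = Real.cos θ * Real.sin (θ * ∑ k ∈ Finset.range n, Z k ω)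
          + Real.sin θ * (Real.cos (θ * ∑ k ∈ Finset.range n, Z k ω) * Z n ω) := by
      intro ω
      rw [Finset.sum_range_succ, mul_add, Real.sin_add]
      rcases hZval n ω with h | h <;> rw [h] <;>
        simp [Real.cos_neg, Real.sin_neg] <;> ring
    have hC : ∫ ω, Real.cos (θ * ∑ k ∈ Finset.range (n+1), Z k ω)
        = Real.cos θ * (∫ ω, Real.cos (θ * ∑ k ∈ Finset.range n, Z k ω))
          - Real.sin θ * ((∫ ω, Real.sin (θ * ∑ k ∈ Finset.range n, Z k ω)) * ∫ ω, Z n ω) := by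
      simp_rw [hcos_pt]
      rw [integral_sub (hintcos.const_mul _) (hintsinZ.const_mul _),
        integral_const_mul, integral_const_mul, hmulsin]
    have hS : ∫ ω, Real.sin (θ * ∑ k ∈ Finset.range (n+1), Z k ω)
        = Real.cos θ * (∫ ω, Real.sin (θ * ∑ k ∈ Finset.range n, Z k ω))
          + Real.sin θ * ((∫ ω, Real.cos (θ * ∑ k ∈ Finset.range n, Z k ω)) * ∫ ω, Z n ω) := by
      simp_rw [hsin_pt]
      rw [integral_add (hintsin.const_mul _) (hintcosZ.const_mul _),
        integral_const_mul, integral_const_mul, hmulcos]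
    rw [Finset.prod_range_succ, ← ih, hC, hS]
    ring

private lemma gauss_int_bound {b : ℝ} (hb : 0 < b) :
    ∫ θ in Set.Ioc (-Real.pi) Real.pi, Real.exp (-b * Real.sin θ ^ 2)
      ≤ 2 * Real.sqrt (Real.pi ^ 3 / (4 * b)) := by
  have hπ := Real.pi_pos
  set g : ℝ → ℝ := fun θ => Real.exp (-b * Real.sin θ ^ 2) with hg
  have hgc : Continuous g := by fun_prop
  have hint : ∀ u v : ℝ, IntervalIntegrable g MeasureTheory.volume u v :=
    fun u v => hgc.intervalIntegrable u v
  set c : ℝ := 4 * b / Real.pi ^ 2 with hcdef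
  have hc : 0 < c := by positivity
  have e1 : ∫ x in (0:ℝ)..Real.pi, g x = ∫ x in (-Real.pi)..(0:ℝ), g x := by
    have h := intervalIntegral.integral_comp_neg (a := (0:ℝ)) (b := Real.pi) g
    simpa [hg, Real.sin_neg, neg_sq] using h
  have e2 : ∫ x in (Real.pi/2)..Real.pi, g x = ∫ x in (0:ℝ)..(Real.pi/2), g x := by
    have h := intervalIntegral.integral_comp_sub_left (a := (0:ℝ)) (b := Real.pi/2) g Real.pi
    rw [show Real.pi - Real.pi/2 = Real.pi/2 by ring, sub_zero] at h
    simp only [hg, Real.sin_pi_sub] at h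
    exact h.symm
  have hsplit1 : ∫ x in (-Real.pi)..Real.pi, g x
      = (∫ x in (-Real.pi)..(0:ℝ), g x) + ∫ x in (0:ℝ)..Real.pi, g x :=
    (intervalIntegral.integral_add_adjacent_intervals (hint _ _) (hint _ _)).symm
  have hsplit2 : ∫ x in (0:ℝ)..Real.pi, g x
      = (∫ x in (0:ℝ)..(Real.pi/2), g x) + ∫ x in (Real.pi/2)..Real.pi, g x :=
    (intervalIntegral.integral_add_adjacent_intervals (hint _ _) (hint _ _)).symm
  have hJ : ∫ x in (0:ℝ)..(Real.pi/2), g x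
      ≤ ∫ x in (0:ℝ)..(Real.pi/2), Real.exp (-c * x ^ 2) := by
    apply intervalIntegral.integral_mono_on (by linarith) (hint _ _)
      ((Continuous.intervalIntegrable (by fun_prop) _ _))
    intro x hx
    obtain ⟨hx0, hx2⟩ := hx
    have hs := Real.mul_le_sin hx0 hx2
    have h0 : 0 ≤ 2 / Real.pi * x := by positivity
    have hsq : (2 / Real.pi * x) ^ 2 ≤ Real.sin x ^ 2 := by
      apply pow_le_pow_left₀ h0 hs
    have hce : c * x ^ 2 = b * (2 / Real.pi * x) ^ 2 := by
      rw [hcdef]; field_simp; ring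
    apply Real.exp_le_exp.2
    rw [neg_mul, neg_mul, neg_le_neg_iff, hce]
    exact mul_le_mul_of_nonneg_left hsq hb.le
  have hT : ∫ x in (0:ℝ)..(Real.pi/2), Real.exp (-c * x ^ 2)
      ≤ ∫ x in Set.Ioi (0:ℝ), Real.exp (-c * x ^ 2) := by
    rw [intervalIntegral.integral_of_le (by linarith)]
    exact setIntegral_mono_set (integrable_exp_neg_mul_sq hc).integrableOn
      (Filter.Eventually.of_forall fun x => (Real.exp_pos _).le)
      (HasSubset.Subset.eventuallyLE Set.Ioc_subset_Ioi_self)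
  have hgauss : ∫ x in Set.Ioi (0:ℝ), Real.exp (-c * x ^ 2) = Real.sqrt (Real.pi / c) / 2 :=
    integral_gaussian_Ioi c
  have hpc : Real.pi / c = Real.pi ^ 3 / (4 * b) := by
    rw [hcdef]; field_simp
  have hIoc : ∫ θ in Set.Ioc (-Real.pi) Real.pi, g θ = ∫ x in (-Real.pi)..Real.pi, g x :=
    (intervalIntegral.integral_of_le (by linarith)).symm
  calc ∫ θ in Set.Ioc (-Real.pi) Real.pi, g θ
      = (∫ x in (-Real.pi)..(0:ℝ), g x) + ((∫ x in (0:ℝ)..(Real.pi/2), g x)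
          + ∫ x in (Real.pi/2)..Real.pi, g x) := by rw [hIoc, hsplit1, hsplit2]
    _ = 4 * ∫ x in (0:ℝ)..(Real.pi/2), g x := by rw [← e1, hsplit2, e2]; ring
    _ ≤ 4 * (Real.sqrt (Real.pi / c) / 2) := by
        have := hJ.trans (hT.trans_eq hgauss)
        linarith
    _ = 2 * Real.sqrt (Real.pi ^ 3 / (4 * b)) := by rw [hpc]; ring

private lemma point_bound (Z : ℕ → Ω → ℝ) (hmZ : ∀ n, Measurable (Z n))
    (hZval : ∀ n ω, Z n ω = 1 ∨ Z n ω = -1)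
    (hInd : ∀ n, IndepFun (fun ω => ∑ k ∈ Finset.range n, Z k ω) (Z n) (ℙ : Measure Ω))
    (N : ℕ) (m : ℤ)
    (hB : 0 < ∑ k ∈ Finset.range N, (1 - (∫ ω, Z k ω)^2)) :
    ((ℙ : Measure Ω) {ω | ∑ k ∈ Finset.range N, Z k ω = (m:ℝ)}).toReal
      ≤ 4 / Real.sqrt (∑ k ∈ Finset.range N, (1 - (∫ ω, Z k ω)^2)) := by
  have hπ := Real.pi_pos
  set B : ℝ := ∑ k ∈ Finset.range N, (1 - (∫ ω, Z k ω)^2) with hBdef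
  set S : Ω → ℝ := fun ω => ∑ k ∈ Finset.range N, Z k ω with hSdef
  have hSm : Measurable S := Finset.measurable_sum _ (fun k _ => hmZ k)
  have hE : MeasurableSet {ω | S ω = (m:ℝ)} := hSm (measurableSet_singleton _)
  -- pointwise char function bound
  have hchar : ∀ θ : ℝ, |∫ ω, Real.cos (θ * (S ω - m))|
      ≤ Real.exp (-(B/2) * Real.sin θ ^ 2) := by
    intro θ
    have hCP : (∫ ω, Real.cos (θ * S ω))^2 + (∫ ω, Real.sin (θ * S ω))^2
        = ∏ k ∈ Finset.range N, (Real.cos θ ^ 2 + (∫ ω, Z k ω)^2 * Real.sin θ ^ 2) := by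
      simpa only [hSdef] using charProd Z hmZ hZval hInd θ N
    have hprod_le : ∏ k ∈ Finset.range N,
        (Real.cos θ ^ 2 + (∫ ω, Z k ω)^2 * Real.sin θ ^ 2)
        ≤ Real.exp (-B * Real.sin θ ^ 2) := by
      have h1 : ∀ k ∈ Finset.range N,
          Real.cos θ ^ 2 + (∫ ω, Z k ω)^2 * Real.sin θ ^ 2
            ≤ Real.exp (-((1 - (∫ ω, Z k ω)^2) * Real.sin θ ^ 2)) := by
        intro k _
        have hpyth := Real.sin_sq_add_cos_sq θ
        have hexp := Real.add_one_le_exp (-((1 - (∫ ω, Z k ω)^2) * Real.sin θ ^ 2))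
        nlinarith
      calc ∏ k ∈ Finset.range N, (Real.cos θ ^ 2 + (∫ ω, Z k ω)^2 * Real.sin θ ^ 2)
          ≤ ∏ k ∈ Finset.range N,
              Real.exp (-((1 - (∫ ω, Z k ω)^2) * Real.sin θ ^ 2)) :=
            Finset.prod_le_prod (fun k _ => by positivity) h1
        _ = Real.exp (∑ k ∈ Finset.range N, -((1 - (∫ ω, Z k ω)^2) * Real.sin θ ^ 2)) :=
            (Real.exp_sum _ _).symm
        _ = Real.exp (-B * Real.sin θ ^ 2) := by
            rw [hBdef]; congr 1
            rw [neg_mul, Finset.sum_mul, ← Finset.sum_neg_distrib]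
    have hmcos : Measurable (fun ω => Real.cos (θ * S ω)) :=
      Real.measurable_cos.comp (measurable_const.mul hSm)
    have hmsin : Measurable (fun ω => Real.sin (θ * S ω)) :=
      Real.measurable_sin.comp (measurable_const.mul hSm)
    have hintcos : Integrable (fun ω => Real.cos (θ * S ω)) (ℙ : Measure Ω) :=
      bddInt hmcos (fun ω => Real.abs_cos_le_one _)
    have hintsin : Integrable (fun ω => Real.sin (θ * S ω)) (ℙ : Measure Ω) :=
      bddInt hmsin (fun ω => Real.abs_sin_le_one _)
    have h1 : ∫ ω, Real.cos (θ * (S ω - m))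
        = Real.cos (θ * m) * (∫ ω, Real.cos (θ * S ω))
          + Real.sin (θ * m) * (∫ ω, Real.sin (θ * S ω)) := by
      have hpt : ∀ ω, Real.cos (θ * (S ω - m))
          = Real.cos (θ * m) * Real.cos (θ * S ω) + Real.sin (θ * m) * Real.sin (θ * S ω) := by
        intro ω
        rw [mul_sub, Real.cos_sub]
        ring
      simp_rw [hpt]
      rw [integral_add (hintcos.const_mul _) (hintsin.const_mul _),
        integral_const_mul, integral_const_mul]
    set C := ∫ ω, Real.cos (θ * S ω)
    set S' := ∫ ω, Real.sin (θ * S ω)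
    have h2 : (∫ ω, Real.cos (θ * (S ω - m)))^2 ≤ C^2 + S'^2 := by
      rw [h1]
      have hpyth := Real.sin_sq_add_cos_sq (θ * m)
      nlinarith [sq_nonneg (Real.sin (θ * m) * C - Real.cos (θ * m) * S')]
    have h3 : C^2 + S'^2 ≤ Real.exp (-B * Real.sin θ ^ 2) := hCP.trans_le hprod_le
    have h4 : |∫ ω, Real.cos (θ * (S ω - m))| ≤ Real.sqrt (Real.exp (-B * Real.sin θ ^ 2)) := by
      rw [← Real.sqrt_sq_eq_abs]
      exact Real.sqrt_le_sqrt (h2.trans h3)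
    rw [← Real.exp_half] at h4
    calc |∫ ω, Real.cos (θ * (S ω - m))| ≤ Real.exp (-B * Real.sin θ ^ 2 / 2) := h4
      _ = Real.exp (-(B/2) * Real.sin θ ^ 2) := by ring_nf
  -- Fubini
  set ν : Measure ℝ := MeasureTheory.volume.restrict (Set.Ioc (-Real.pi) Real.pi) with hν
  haveI : IsFiniteMeasure ν := by
    constructor
    rw [hν, Measure.restrict_apply_univ, Real.volume_Ioc]
    exact ENNReal.ofReal_lt_top
  have hFm : Measurable (Function.uncurry fun (ω : Ω) (θ : ℝ) => Real.cos (θ * (S ω - m))) :=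
    Real.measurable_cos.comp
      (measurable_snd.mul ((hSm.comp measurable_fst).sub measurable_const))
  have hFint : Integrable (Function.uncurry fun (ω : Ω) (θ : ℝ) => Real.cos (θ * (S ω - m)))
      ((ℙ : Measure Ω).prod ν) := by
    apply (integrable_const (1:ℝ)).mono' hFm.aestronglyMeasurable
    exact Filter.Eventually.of_forall fun p => by
      simpa [Real.norm_eq_abs, Function.uncurry_def] using Real.abs_cos_le_one _
  have hswap : ∫ ω, (∫ θ, Real.cos (θ * (S ω - m)) ∂ν) ∂(ℙ : Measure Ω)
      = ∫ θ, (∫ ω, Real.cos (θ * (S ω - m)) ∂(ℙ : Measure Ω)) ∂ν :=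
    MeasureTheory.integral_integral_swap hFint
  -- inner integral computation
  have hinner : ∀ ω, (∫ θ, Real.cos (θ * (S ω - m)) ∂ν)
      = Set.indicator {ω | S ω = (m:ℝ)} (fun _ => 2 * Real.pi) ω := by
    intro ω
    obtain ⟨j, hj⟩ := sum_int_valued Z hZval N ω
    have hjS : S ω = (j:ℝ) := hj
    by_cases hjm : j = m
    · have h0 : S ω - m = 0 := by rw [hjS, hjm]; ring
      have : ∀ θ : ℝ, Real.cos (θ * (S ω - m)) = 1 := fun θ => by
        rw [h0, mul_zero, Real.cos_zero]
      rw [hν]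
      simp only [this]
      rw [setIntegral_const, measureReal_def, Real.volume_Ioc, smul_eq_mul, mul_one,
        ENNReal.toReal_ofReal (by linarith)]
      rw [Set.indicator_of_mem (by simp only [Set.mem_setOf_eq, hjS, hjm])]
      ring
    · have hc0 : S ω - m = ((j - m : ℤ) : ℝ) := by rw [hjS]; push_cast; ring
      have hcne : ((j - m : ℤ) : ℝ) ≠ 0 := by
        simp only [ne_eq, Int.cast_eq_zero, sub_eq_zero]
        exact hjm
      rw [hν, ← intervalIntegral.integral_of_le (by linarith), hc0]
      have hcomp := intervalIntegral.integral_comp_mul_right (a := -Real.pi) (b := Real.pi)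
        Real.cos hcne
      rw [hcomp, integral_cos]
      have hsin : Real.sin (Real.pi * ((j - m : ℤ) : ℝ)) = 0 := by
        rw [mul_comm]; exact Real.sin_int_mul_pi _
      rw [Set.indicator_of_notMem (by
            simp only [Set.mem_setOf_eq, hjS]
            exact fun h => hjm (by exact_mod_cast h))]
      rw [show -Real.pi * ((j - m : ℤ) : ℝ) = -(Real.pi * ((j - m : ℤ) : ℝ)) by ring]
      rw [Real.sin_neg, hsin]
      simp
  have hleft : ∫ ω, (∫ θ, Real.cos (θ * (S ω - m)) ∂ν) ∂(ℙ : Measure Ω)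
      = ((ℙ : Measure Ω) {ω | S ω = (m:ℝ)}).toReal * (2 * Real.pi) := by
    simp_rw [hinner]
    rw [integral_indicator_const _ hE]
    simp [mul_comm]
    rfl
  have hright : ∫ θ, (∫ ω, Real.cos (θ * (S ω - m)) ∂(ℙ : Measure Ω)) ∂ν
      ≤ ∫ θ, Real.exp (-(B/2) * Real.sin θ ^ 2) ∂ν := by
    have hgint : Integrable (fun θ => Real.exp (-(B/2) * Real.sin θ ^ 2)) ν := by
      rw [hν]
      exact (Continuous.integrableOn_Ioc (by fun_prop))
    calc ∫ θ, (∫ ω, Real.cos (θ * (S ω - m)) ∂(ℙ : Measure Ω)) ∂ν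
        ≤ ‖∫ θ, (∫ ω, Real.cos (θ * (S ω - m)) ∂(ℙ : Measure Ω)) ∂ν‖ := by
          rw [Real.norm_eq_abs]; exact le_abs_self _
      _ ≤ ∫ θ, Real.exp (-(B/2) * Real.sin θ ^ 2) ∂ν :=
          norm_integral_le_of_norm_le hgint (Filter.Eventually.of_forall fun θ => by
            rw [Real.norm_eq_abs]
            calc |∫ ω, Real.cos (θ * (S ω - m)) ∂(ℙ : Measure Ω)|
                ≤ Real.exp (-(B/2) * Real.sin θ ^ 2) := hchar θ)
  have hgauss : ∫ θ, Real.exp (-(B/2) * Real.sin θ ^ 2) ∂ν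
      ≤ 2 * Real.sqrt (Real.pi ^ 3 / (4 * (B/2))) := by
    rw [hν]
    exact gauss_int_bound (by linarith)
  have hkey : ((ℙ : Measure Ω) {ω | S ω = (m:ℝ)}).toReal * (2 * Real.pi)
      ≤ 2 * Real.sqrt (Real.pi ^ 3 / (2 * B)) := by
    rw [show Real.pi ^ 3 / (2 * B) = Real.pi ^ 3 / (4 * (B/2)) by ring]
    calc ((ℙ : Measure Ω) {ω | S ω = (m:ℝ)}).toReal * (2 * Real.pi)
        = ∫ ω, (∫ θ, Real.cos (θ * (S ω - m)) ∂ν) ∂(ℙ : Measure Ω) := hleft.symm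
      _ = ∫ θ, (∫ ω, Real.cos (θ * (S ω - m)) ∂(ℙ : Measure Ω)) ∂ν := hswap
      _ ≤ ∫ θ, Real.exp (-(B/2) * Real.sin θ ^ 2) ∂ν := hright
      _ ≤ 2 * Real.sqrt (Real.pi ^ 3 / (4 * (B/2))) := hgauss
  -- final arithmetic
  set P := ((ℙ : Measure Ω) {ω | S ω = (m:ℝ)}).toReal with hP
  have hsB : 0 < Real.sqrt B := Real.sqrt_pos.2 hB
  have hsplit : Real.sqrt (Real.pi ^ 3 / (2 * B)) = Real.sqrt (Real.pi ^ 3 / 2) / Real.sqrt B := by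
    rw [show Real.pi ^ 3 / (2 * B) = (Real.pi ^ 3 / 2) / B by ring]
    exact Real.sqrt_div (by positivity) B
  have h4 : Real.sqrt (Real.pi ^ 3 / 2) ≤ 4 * Real.pi := by
    have hle : Real.pi ^ 3 / 2 ≤ (4 * Real.pi) ^ 2 := by
      nlinarith [Real.pi_le_four, Real.pi_pos]
    calc Real.sqrt (Real.pi ^ 3 / 2) ≤ Real.sqrt ((4 * Real.pi) ^ 2) := Real.sqrt_le_sqrt hle
      _ = 4 * Real.pi := Real.sqrt_sq (by positivity)
  have hPB : P * Real.sqrt B ≤ 4 := by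
    have k2 : P * (2 * Real.pi) * Real.sqrt B ≤ 2 * (Real.sqrt (Real.pi ^ 3 / 2)) := by
      rw [hsplit] at hkey
      calc P * (2 * Real.pi) * Real.sqrt B
          ≤ (2 * (Real.sqrt (Real.pi ^ 3 / 2) / Real.sqrt B)) * Real.sqrt B :=
            mul_le_mul_of_nonneg_right hkey (Real.sqrt_nonneg _)
        _ = 2 * (Real.sqrt (Real.pi ^ 3 / 2)) := by
            rw [mul_assoc, div_mul_cancel₀ _ hsB.ne']
    nlinarith [h4, hπ, k2, Real.sqrt_nonneg B]
  show P ≤ 4 / Real.sqrt B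
  rw [le_div_iff₀ hsB]
  exact hPB

end AuxCLT

/-- Lemma (CLT), part a: if the `X_n` are i.i.d. and a.s. equal to a nonzero constant `c`,
the `Z_n` are independent signs independent of the `X_n`'s with
`liminf_N (1/N) ∑_{k<N} r_k (1 - r_k) > 0` where `r_k = ℙ(Z_k = 1)`, and `φ(N) = o(√N)`
is nonnegative, then `ℙ(|∑_{k<N} Z_k X_k| > φ(N)) → 1`. -/
theorem prob_sum_exceeds_small_phi_of_const
    {Ω : Type} [MeasureSpace Ω] [IsProbabilityMeasure (ℙ : Measure Ω)]
    (φ : ℕ → ℝ) (hφ0 : ∀ N, 0 ≤ φ N)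
    (hφ : Tendsto (fun N => φ N / Real.sqrt N) atTop (nhds 0))
    (X Z : ℕ → Ω → ℝ)
    (hmX : ∀ n, Measurable (X n)) (hmZ : ∀ n, Measurable (Z n))
    (c : ℝ) (hc : c ≠ 0) (hXc : ∀ n, X n =ᵐ[(ℙ : Measure Ω)] fun _ => c)
    (hZval : ∀ n ω, Z n ω = 1 ∨ Z n ω = -1)
    (hindep : iIndepFun (Sum.elim X Z) ℙ)
    (r : ℕ → ℝ) (hr : ∀ n, r n = ((ℙ : Measure Ω) {ω | Z n ω = 1}).toReal)
    (hliminf : 0 < Filter.liminf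
      (fun N : ℕ => (∑ k ∈ Finset.range N, r k * (1 - r k)) / N) atTop) :
    Tendsto
      (fun N => (ℙ : Measure Ω) {ω | φ N < |∑ k ∈ Finset.range N, Z k ω * X k ω|})
      atTop (nhds 1) := by
  have hπ := Real.pi_pos
  -- independence of partial sums from the next sign
  have hIndZ : ∀ n, IndepFun (fun ω => ∑ k ∈ Finset.range n, Z k ω) (Z n) (ℙ : Measure Ω) := by
    intro n
    have hgmeas : ∀ i, Measurable (Sum.elim X Z i) := by
      rintro (i | i)
      · exact hmX i
      · exact hmZ i
    have h := hindep.indepFun_finsetSum_of_notMem hgmeas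
      (s := (Finset.range n).image Sum.inr) (i := Sum.inr n) (by simp)
    have hs : (∑ j ∈ (Finset.range n).image Sum.inr, Sum.elim X Z j)
        = fun ω => ∑ k ∈ Finset.range n, Z k ω := by
      rw [Finset.sum_image (by intro x _ y _ hxy; exact Sum.inr_injective hxy)]
      funext ω
      rw [Finset.sum_apply]
      rfl
    rw [hs] at h
    exact h
  -- basic facts about r and the means
  have hr0 : ∀ k, 0 ≤ r k := fun k => (hr k) ▸ ENNReal.toReal_nonneg
  have hr1 : ∀ k, r k ≤ 1 := by
    intro k
    rw [hr k]
    calc ((ℙ : Measure Ω) {ω | Z k ω = 1}).toReal ≤ (1 : ℝ≥0∞).toReal :=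
        ENNReal.toReal_mono ENNReal.one_ne_top prob_le_one
      _ = 1 := by simp
  have ha : ∀ k, (∫ ω, Z k ω) = 2 * r k - 1 := by
    intro k
    have hEk : MeasurableSet {ω | Z k ω = 1} := hmZ k (measurableSet_singleton 1)
    have hZeq : (Z k) = fun ω => 2 * Set.indicator {ω | Z k ω = 1} (fun _ => (1:ℝ)) ω - 1 := by
      funext ω
      rcases hZval k ω with h | h
      · rw [Set.indicator_of_mem (by exact h), h]; norm_num
      · rw [Set.indicator_of_notMem (by simp only [Set.mem_setOf_eq, h]; norm_num), h]
        norm_num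
    rw [hZeq]
    have hii : Integrable (Set.indicator {ω | Z k ω = 1} (fun _ => (1:ℝ))) (ℙ : Measure Ω) :=
      (integrable_const (1:ℝ)).indicator hEk
    rw [integral_sub (hii.const_mul 2) (integrable_const 1), integral_const_mul,
      integral_indicator_const _ hEk, integral_const]
    simp [measure_univ, hr k]
    rfl
  -- the threshold for the pure sign sum
  set t : ℕ → ℝ := fun N => φ N / |c| with htdef
  have hct : (0:ℝ) < |c| := abs_pos.2 hc
  have ht0 : ∀ N, 0 ≤ t N := fun N => div_nonneg (hφ0 N) hct.le
  have htlim : Tendsto (fun N => t N / Real.sqrt N) atTop (nhds 0) := by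
    have heq : (fun N : ℕ => t N / Real.sqrt N) = fun N : ℕ => (φ N / Real.sqrt N) / |c| := by
      funext N
      rw [htdef]
      simp only
      rw [div_right_comm]
    rw [heq]
    simpa using hφ.div_const |c|
  -- variance sums
  have hBr : ∀ N, (∑ k ∈ Finset.range N, (1 - (∫ ω, Z k ω)^2))
      = 4 * ∑ k ∈ Finset.range N, r k * (1 - r k) := by
    intro N
    rw [Finset.mul_sum]
    exact Finset.sum_congr rfl fun k _ => by rw [ha k]; ring
  have hbdd : IsBoundedUnder (· ≥ ·) atTop
      (fun N : ℕ => (∑ k ∈ Finset.range N, r k * (1 - r k)) / N) := by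
    refine ⟨0, Filter.eventually_map.2 (Filter.Eventually.of_forall fun N => ?_)⟩
    exact div_nonneg (Finset.sum_nonneg fun k _ =>
      mul_nonneg (hr0 k) (by linarith [hr1 k])) (Nat.cast_nonneg N)
  set β := Filter.liminf
      (fun N : ℕ => (∑ k ∈ Finset.range N, r k * (1 - r k)) / N) atTop / 2 with hβdef
  have hβ : 0 < β := half_pos hliminf
  have hev : ∀ᶠ N in atTop, β < (∑ k ∈ Finset.range N, r k * (1 - r k)) / N :=
    eventually_lt_of_lt_liminf (by rw [hβdef]; exact half_lt_self hliminf) hbdd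
  -- measurability of events
  have hmS : ∀ N, Measurable (fun ω => ∑ k ∈ Finset.range N, Z k ω) :=
    fun N => Finset.measurable_sum _ fun k _ => hmZ k
  have hbadmeas : ∀ N, MeasurableSet {ω | |∑ k ∈ Finset.range N, Z k ω| ≤ t N} :=
    fun N => measurableSet_le (hmS N).abs measurable_const
  -- eventual quantitative bound
  have hbound : ∀ᶠ N in atTop,
      ((ℙ : Measure Ω) {ω | |∑ k ∈ Finset.range N, Z k ω| ≤ t N}).toReal
        ≤ (4 / Real.sqrt (4 * β)) * ((2 * t N + 3) / Real.sqrt N) := by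
    filter_upwards [hev] with N hN
    have hNpos : 0 < N := by
      by_contra h
      have h0 : N = 0 := Nat.eq_zero_of_not_pos h
      rw [h0] at hN
      norm_num at hN
      linarith
    have hNR : (0:ℝ) < (N:ℝ) := Nat.cast_pos.2 hNpos
    have hσ : β * N < ∑ k ∈ Finset.range N, r k * (1 - r k) := (lt_div_iff₀ hNR).1 hN
    have hBpos : 0 < ∑ k ∈ Finset.range N, (1 - (∫ ω, Z k ω)^2) := by
      rw [hBr N]
      nlinarith [mul_pos hβ hNR]
    have hB4 : 4 * (β * N) ≤ ∑ k ∈ Finset.range N, (1 - (∫ ω, Z k ω)^2) := by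
      rw [hBr N]
      linarith
    have hsub : {ω | |∑ k ∈ Finset.range N, Z k ω| ≤ t N}
        ⊆ ⋃ j ∈ Finset.Icc (-(⌈t N⌉)) ⌈t N⌉,
            {ω | ∑ k ∈ Finset.range N, Z k ω = (j:ℝ)} := by
      intro ω hω
      obtain ⟨j, hj⟩ := sum_int_valued Z hZval N ω
      simp only [Set.mem_setOf_eq] at hω
      rw [hj] at hω
      have habs := abs_le.1 hω
      have hjc : (j:ℝ) ≤ ((⌈t N⌉ : ℤ) : ℝ) := le_trans habs.2 (Int.le_ceil _)
      have hjc2 : ((-(⌈t N⌉) : ℤ) : ℝ) ≤ (j:ℝ) := by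
        push_cast
        have := Int.le_ceil (t N)
        linarith [habs.1]
      have hjmem : j ∈ Finset.Icc (-(⌈t N⌉)) ⌈t N⌉ := by
        rw [Finset.mem_Icc]
        exact ⟨by exact_mod_cast hjc2, by exact_mod_cast hjc⟩
      exact Set.mem_biUnion hjmem hj
    have hcard : ((Finset.Icc (-(⌈t N⌉)) ⌈t N⌉).card : ℝ) ≤ 2 * t N + 3 := by
      rw [Int.card_Icc]
      have hc1 : (⌈t N⌉ : ℝ) ≤ t N + 1 := by linarith [Int.ceil_lt_add_one (t N)]
      have hc0 : (0:ℤ) ≤ ⌈t N⌉ := Int.ceil_nonneg (ht0 N)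
      have he1 : (⌈t N⌉ + 1 - -(⌈t N⌉)) = 2 * ⌈t N⌉ + 1 := by ring
      rw [he1]
      have he2 : (((2 * ⌈t N⌉ + 1).toNat : ℕ) : ℝ) = 2 * (⌈t N⌉ : ℝ) + 1 := by
        have h3 : ((2 * ⌈t N⌉ + 1).toNat : ℤ) = 2 * ⌈t N⌉ + 1 :=
          Int.toNat_of_nonneg (by linarith)
        rw [← Int.cast_natCast (R := ℝ), h3]
        push_cast
        ring
      rw [he2]
      linarith
    have hpt : ∀ j : ℤ, ((ℙ : Measure Ω) {ω | ∑ k ∈ Finset.range N, Z k ω = (j:ℝ)}).toReal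
        ≤ 4 / Real.sqrt (∑ k ∈ Finset.range N, (1 - (∫ ω, Z k ω)^2)) :=
      fun j => point_bound Z hmZ hZval hIndZ N j hBpos
    have hμ1 : (ℙ : Measure Ω) {ω | |∑ k ∈ Finset.range N, Z k ω| ≤ t N}
        ≤ ∑ j ∈ Finset.Icc (-(⌈t N⌉)) ⌈t N⌉,
            (ℙ : Measure Ω) {ω | ∑ k ∈ Finset.range N, Z k ω = (j:ℝ)} :=
      (measure_mono hsub).trans (measure_biUnion_finset_le _ _)
    have hμ2 : ((ℙ : Measure Ω) {ω | |∑ k ∈ Finset.range N, Z k ω| ≤ t N}).toReal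
        ≤ ∑ j ∈ Finset.Icc (-(⌈t N⌉)) ⌈t N⌉,
            ((ℙ : Measure Ω) {ω | ∑ k ∈ Finset.range N, Z k ω = (j:ℝ)}).toReal := by
      calc ((ℙ : Measure Ω) {ω | |∑ k ∈ Finset.range N, Z k ω| ≤ t N}).toReal
          ≤ (∑ j ∈ Finset.Icc (-(⌈t N⌉)) ⌈t N⌉,
              (ℙ : Measure Ω) {ω | ∑ k ∈ Finset.range N, Z k ω = (j:ℝ)}).toReal :=
            ENNReal.toReal_mono (ENNReal.sum_ne_top.2 fun j _ => measure_ne_top _ _) hμ1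
        _ = _ := ENNReal.toReal_sum fun j _ => measure_ne_top _ _
    have hsN : 0 < Real.sqrt (4 * (β * N)) := Real.sqrt_pos.2 (by positivity)
    calc ((ℙ : Measure Ω) {ω | |∑ k ∈ Finset.range N, Z k ω| ≤ t N}).toReal
        ≤ ∑ j ∈ Finset.Icc (-(⌈t N⌉)) ⌈t N⌉,
            ((ℙ : Measure Ω) {ω | ∑ k ∈ Finset.range N, Z k ω = (j:ℝ)}).toReal := hμ2
      _ ≤ ∑ _j ∈ Finset.Icc (-(⌈t N⌉)) ⌈t N⌉,
            (4 / Real.sqrt (∑ k ∈ Finset.range N, (1 - (∫ ω, Z k ω)^2))) :=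
          Finset.sum_le_sum fun j _ => hpt j
      _ = ((Finset.Icc (-(⌈t N⌉)) ⌈t N⌉).card : ℝ)
            * (4 / Real.sqrt (∑ k ∈ Finset.range N, (1 - (∫ ω, Z k ω)^2))) := by
          rw [Finset.sum_const, nsmul_eq_mul]
      _ ≤ (2 * t N + 3) * (4 / Real.sqrt (4 * (β * N))) := by
          apply mul_le_mul hcard ?_ (by positivity) (by linarith [ht0 N])
          exact div_le_div_of_nonneg_left (by norm_num) hsN (Real.sqrt_le_sqrt hB4)
      _ = (4 / Real.sqrt (4 * β)) * ((2 * t N + 3) / Real.sqrt N) := by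
          have h1 : Real.sqrt (4 * β) ≠ 0 := ne_of_gt (Real.sqrt_pos.2 (by positivity))
          have h2 : Real.sqrt (N:ℝ) ≠ 0 := ne_of_gt (Real.sqrt_pos.2 hNR)
          rw [show (4 * (β * (N:ℝ)) : ℝ) = (4 * β) * (N:ℝ) by ring,
            Real.sqrt_mul (by positivity)]
          field_simp
  -- the upper bound tends to zero
  have hg0 : Tendsto (fun N : ℕ => (4 / Real.sqrt (4 * β)) * ((2 * t N + 3) / Real.sqrt N))
      atTop (nhds 0) := by
    have h3 : Tendsto (fun N : ℕ => 1 / Real.sqrt N) atTop (nhds 0) := by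
      have heq : (fun N : ℕ => 1 / Real.sqrt (N:ℝ)) = fun N : ℕ => Real.sqrt ((N:ℝ)⁻¹) := by
        funext N
        rw [Real.sqrt_inv, one_div]
      rw [heq]
      have h4 : Tendsto (fun N : ℕ => ((N:ℝ))⁻¹) atTop (nhds 0) :=
        tendsto_inv_atTop_nhds_zero_nat
      simpa using h4.sqrt
    have h1 : Tendsto (fun N : ℕ => (2 * t N + 3) / Real.sqrt N) atTop (nhds 0) := by
      have heq : (fun N : ℕ => (2 * t N + 3) / Real.sqrt N)
          = fun N : ℕ => 2 * (t N / Real.sqrt N) + 3 * (1 / Real.sqrt N) := by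
        funext N
        rw [add_div]
        ring
      rw [heq]
      have := (htlim.const_mul 2).add (h3.const_mul 3)
      simpa using this
    simpa using h1.const_mul (4 / Real.sqrt (4 * β))
  -- probability of the bad event tends to zero
  have hts : Tendsto
      (fun N => ((ℙ : Measure Ω) {ω | |∑ k ∈ Finset.range N, Z k ω| ≤ t N}).toReal)
      atTop (nhds 0) :=
    squeeze_zero' (Filter.Eventually.of_forall fun N => ENNReal.toReal_nonneg) hbound hg0
  have hbad : Tendsto (fun N => (ℙ : Measure Ω) {ω | |∑ k ∈ Finset.range N, Z k ω| ≤ t N})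
      atTop (nhds 0) := by
    have h := ENNReal.tendsto_ofReal hts
    rw [ENNReal.ofReal_zero] at h
    have heq : (fun N => (ℙ : Measure Ω) {ω | |∑ k ∈ Finset.range N, Z k ω| ≤ t N})
        = fun N => ENNReal.ofReal
            (((ℙ : Measure Ω) {ω | |∑ k ∈ Finset.range N, Z k ω| ≤ t N}).toReal) := by
      funext N
      rw [ENNReal.ofReal_toReal (measure_ne_top _ _)]
    rw [heq]
    exact h
  -- identify the original event with the sign-sum event
  have hAeq : ∀ N, (ℙ : Measure Ω) {ω | φ N < |∑ k ∈ Finset.range N, Z k ω * X k ω|}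
      = (ℙ : Measure Ω) {ω | t N < |∑ k ∈ Finset.range N, Z k ω|} := by
    intro N
    apply measure_congr
    have hae : ∀ᵐ ω ∂(ℙ : Measure Ω), ∀ k, X k ω = c := ae_all_iff.2 hXc
    filter_upwards [hae] with ω hω
    have hsum : ∑ k ∈ Finset.range N, Z k ω * X k ω = (∑ k ∈ Finset.range N, Z k ω) * c := by
      rw [Finset.sum_mul]
      exact Finset.sum_congr rfl fun k _ => by rw [hω k]
    show (φ N < |∑ k ∈ Finset.range N, Z k ω * X k ω|)
        = (t N < |∑ k ∈ Finset.range N, Z k ω|)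
    rw [hsum, abs_mul, eq_iff_iff]
    exact Iff.symm (div_lt_iff₀ hct)
  have hgood : ∀ N, (ℙ : Measure Ω) {ω | t N < |∑ k ∈ Finset.range N, Z k ω|}
      = 1 - (ℙ : Measure Ω) {ω | |∑ k ∈ Finset.range N, Z k ω| ≤ t N} := by
    intro N
    rw [show {ω | t N < |∑ k ∈ Finset.range N, Z k ω|}
        = {ω | |∑ k ∈ Finset.range N, Z k ω| ≤ t N}ᶜ from by ext ω; simp [not_le]]
    exact prob_compl_eq_one_sub (hbadmeas N)
  simp only [hAeq, hgood]
  have hfinal := ENNReal.Tendsto.sub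
    (tendsto_const_nhds : Tendsto (fun _ : ℕ => (1:ℝ≥0∞)) atTop (nhds 1)) hbad
    (Or.inl ENNReal.one_ne_top)
  simpa using hfinal
end

section
/- Let ρ > 0 and let S be a finite subset of ρℤ ∩ (0, ∞). Let (ζ⁻_k)_{k∈ℕ} and (ζ⁺_k)_{k∈ℕ} be two independent i.i.d. sequences of random variables, each with support exactly S. Consider the Markov process s⁰ₓ = x, s_{k+1}ˣ = s_kˣ − ζ⁻_k 1_{{s_kˣ > 0}} + ζ⁺_k 1_{{s_kˣ ≤ 0}}. Then for every x in the additive group gr(S) generated by S, the process (s_kˣ)_{k∈ℕ} almost surely visits 0 infinitely often. -/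
open MeasureTheory ProbabilityTheory Filter
open scoped ENNReal

/-- The Markov process `s_0 = x`, `s_{k+1} = s_k − ζ⁻_k 1{s_k > 0} + ζ⁺_k 1{s_k ≤ 0}`. -/
noncomputable def schelling {Ω : Type} (ζm ζp : ℕ → Ω → ℝ) (x : ℝ) (ω : Ω) : ℕ → ℝ
  | 0 => x
  | k + 1 =>
    if 0 < schelling ζm ζp x ω k then schelling ζm ζp x ω k - ζm k ω
    else schelling ζm ζp x ω k + ζp k ω

namespace SchellingProofAux

variable {Ω : Type}

lemma schelling_zero (ζm ζp : ℕ → Ω → ℝ) (x : ℝ) (ω : Ω) : schelling ζm ζp x ω 0 = x := rfl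

lemma schelling_succ (ζm ζp : ℕ → Ω → ℝ) (x : ℝ) (ω : Ω) (k : ℕ) :
    schelling ζm ζp x ω (k + 1) =
      if 0 < schelling ζm ζp x ω k then schelling ζm ζp x ω k - ζm k ω
      else schelling ζm ζp x ω k + ζp k ω := rfl

lemma schelling_add (ζm ζp : ℕ → Ω → ℝ) (x : ℝ) (ω : Ω) (t : ℕ) (k : ℕ) :
    schelling ζm ζp x ω (t + k) =
      schelling (fun i => ζm (t + i)) (fun i => ζp (t + i)) (schelling ζm ζp x ω t) ω k := by
  induction k with
  | zero => rfl
  | succ k ih => rw [← Nat.add_assoc, schelling_succ, ih, schelling_succ]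

lemma schelling_measurable {M : MeasurableSpace Ω} {ζm ζp : ℕ → Ω → ℝ} (x : ℝ) :
    ∀ {k : ℕ}, (∀ i < k, Measurable[M] (ζm i)) → (∀ i < k, Measurable[M] (ζp i)) →
      Measurable[M] (fun ω => schelling ζm ζp x ω k) := by
  intro k
  induction k with
  | zero => intro _ _; simp only [schelling_zero]; exact measurable_const
  | succ k ih =>
    intro h1 h2
    have hs := ih (fun i hi => h1 i (hi.trans (Nat.lt_succ_self k)))
      (fun i hi => h2 i (hi.trans (Nat.lt_succ_self k)))
    simp only [schelling_succ]
    exact Measurable.ite (measurableSet_lt measurable_const hs)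
      (hs.sub (h1 k (Nat.lt_succ_self k))) (hs.add (h2 k (Nat.lt_succ_self k)))

lemma schelling_agree {ζm ζp : ℕ → Ω → ℝ} {f g : ℕ → ℝ} {ω : Ω} {n : ℕ}
    (h : ∀ i < n, ζm i ω = f i ∧ ζp i ω = g i) (x : ℝ) :
    ∀ k ≤ n, schelling ζm ζp x ω k = schelling (fun i _ => f i) (fun i _ => g i) x () k := by
  intro k
  induction k with
  | zero => intro _; rfl
  | succ k ih =>
    intro hk
    have hk' : k ≤ n := (Nat.lt_succ_self k).le.trans hk
    have hkn : k < n := hk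
    rw [schelling_succ, schelling_succ, ih hk', (h k hkn).1, (h k hkn).2]

lemma closure_multiset {S : Set ℝ} {x : ℝ} (hx : x ∈ AddSubgroup.closure S) :
    ∃ A B : Multiset ℝ, (∀ a ∈ A, a ∈ S) ∧ (∀ b ∈ B, b ∈ S) ∧ x = A.sum - B.sum := by
  induction hx using AddSubgroup.closure_induction with
  | mem s hs => exact ⟨{s}, 0, by simpa using hs, by simp, by simp⟩
  | zero => exact ⟨0, 0, by simp, by simp, by simp⟩
  | add a b _ _ iha ihb =>
    obtain ⟨A1, B1, h1, h2, h3⟩ := iha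
    obtain ⟨A2, B2, h4, h5, h6⟩ := ihb
    refine ⟨A1 + A2, B1 + B2, ?_, ?_, ?_⟩
    · intro a ha; rcases Multiset.mem_add.1 ha with h | h; exacts [h1 _ h, h4 _ h]
    · intro a ha; rcases Multiset.mem_add.1 ha with h | h; exacts [h2 _ h, h5 _ h]
    · simp only [Multiset.sum_add, h3, h6]; ring
  | neg a _ iha =>
    obtain ⟨A1, B1, h1, h2, h3⟩ := iha
    exact ⟨B1, A1, h2, h1, by simp [h3]⟩

lemma reach {S : Finset ℝ} (hpos : ∀ s ∈ S, 0 < s) {s₀ : ℝ} (hs₀ : s₀ ∈ S) :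
    ∀ (c : ℕ) (A B : Multiset ℝ), A.card + B.card = c → (∀ a ∈ A, a ∈ S) → (∀ b ∈ B, b ∈ S) →
    ∀ x : ℝ, x = A.sum - B.sum →
    ∃ (n : ℕ) (f g : ℕ → ℝ), (∀ i, f i ∈ S) ∧ (∀ i, g i ∈ S) ∧
      schelling (fun i (_ : Unit) => f i) (fun i _ => g i) x () n = 0 := by
  intro c
  induction c using Nat.strong_induction_on with
  | _ c ih =>
    intro A B hc hA hB x hx
    rcases lt_trichotomy x 0 with hx0 | hx0 | hx0
    · -- x < 0 : use an element of B
      have hBne : B ≠ 0 := by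
        rintro rfl
        have : (0:ℝ) ≤ A.sum := Multiset.sum_nonneg (fun a ha => (hpos a (hA a ha)).le)
        simp only [Multiset.sum_zero, sub_zero] at hx
        linarith
      obtain ⟨b, hb⟩ := Multiset.exists_mem_of_ne_zero hBne
      have hsum : B.sum = b + (B.erase b).sum := by
        rw [← Multiset.sum_cons, Multiset.cons_erase hb]
      have hcard : A.card + (B.erase b).card < c := by
        rw [Multiset.card_erase_of_mem hb, Nat.pred_eq_sub_one]
        have : 0 < B.card := Multiset.card_pos.2 hBne
        omega
      obtain ⟨n, f, g, hf, hg, h0⟩ := ih _ hcard A (B.erase b) rfl hA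
        (fun b' hb' => hB b' (Multiset.mem_of_mem_erase hb')) (x + b) (by rw [hx, hsum]; ring)
      refine ⟨n + 1, fun i => if i = 0 then s₀ else f (i - 1),
        fun i => if i = 0 then b else g (i - 1), ?_, ?_, ?_⟩
      · intro i; dsimp only; split; exacts [hs₀, hf _]
      · intro i; dsimp only; split; exacts [hB b hb, hg _]
      · rw [← Nat.add_comm 1 n, schelling_add]
        have hstep : schelling (fun i (_ : Unit) => if i = 0 then s₀ else f (i - 1))
            (fun i _ => if i = 0 then b else g (i - 1)) x () 1 = x + b := by
          rw [schelling_succ]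
          simp [schelling_zero, hx0.not_gt]
        rw [hstep]
        have e1 : (fun i (_ : Unit) => if 1 + i = 0 then s₀ else f (1 + i - 1)) =
            (fun i (_ : Unit) => f i) := by funext i u; simp
        have e2 : (fun i (_ : Unit) => if 1 + i = 0 then b else g (1 + i - 1)) =
            (fun i (_ : Unit) => g i) := by funext i u; simp
        exact e1 ▸ e2 ▸ h0
    · exact ⟨0, fun _ => s₀, fun _ => s₀, fun _ => hs₀, fun _ => hs₀, hx0⟩
    · -- x > 0 : use an element of A
      have hAne : A ≠ 0 := by
        rintro rfl
        have : (0:ℝ) ≤ B.sum := Multiset.sum_nonneg (fun a ha => (hpos a (hB a ha)).le)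
        simp only [Multiset.sum_zero, zero_sub] at hx
        linarith
      obtain ⟨a, ha⟩ := Multiset.exists_mem_of_ne_zero hAne
      have hsum : A.sum = a + (A.erase a).sum := by
        rw [← Multiset.sum_cons, Multiset.cons_erase ha]
      have hcard : (A.erase a).card + B.card < c := by
        rw [Multiset.card_erase_of_mem ha, Nat.pred_eq_sub_one]
        have : 0 < A.card := Multiset.card_pos.2 hAne
        omega
      obtain ⟨n, f, g, hf, hg, h0⟩ := ih _ hcard (A.erase a) B rfl
        (fun a' ha' => hA a' (Multiset.mem_of_mem_erase ha')) hB (x - a) (by rw [hx, hsum]; ring)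
      refine ⟨n + 1, fun i => if i = 0 then a else f (i - 1),
        fun i => if i = 0 then s₀ else g (i - 1), ?_, ?_, ?_⟩
      · intro i; dsimp only; split; exacts [hA a ha, hf _]
      · intro i; dsimp only; split; exacts [hs₀, hg _]
      · rw [← Nat.add_comm 1 n, schelling_add]
        have hstep : schelling (fun i (_ : Unit) => if i = 0 then a else f (i - 1))
            (fun i _ => if i = 0 then s₀ else g (i - 1)) x () 1 = x - a := by
          rw [schelling_succ]
          simp [schelling_zero, hx0]
        rw [hstep]
        have e1 : (fun i (_ : Unit) => if 1 + i = 0 then a else f (1 + i - 1)) =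
            (fun i (_ : Unit) => f i) := by funext i u; simp
        have e2 : (fun i (_ : Unit) => if 1 + i = 0 then s₀ else g (1 + i - 1)) =
            (fun i (_ : Unit) => g i) := by funext i u; simp
        exact e1 ▸ e2 ▸ h0


lemma schelling_abs_le {Ω : Type} {ζm ζp : ℕ → Ω → ℝ} {x : ℝ} {ω : Ω} {S : Finset ℝ}
    {ρ M : ℝ} (hρ : 0 < ρ) (hSne : S.Nonempty) (hSb : ∀ s ∈ S, ρ ≤ s ∧ s ≤ M) :
    ∀ k : ℕ, (∀ i < k, ζm i ω ∈ S ∧ ζp i ω ∈ S) →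
      |schelling ζm ζp x ω k| ≤ max (|x| - k * ρ) M := by
  have hρM : ρ ≤ M := by
    obtain ⟨s, hs⟩ := hSne
    exact (hSb s hs).1.trans (hSb s hs).2
  intro k
  induction k with
  | zero =>
    intro _
    rw [show schelling ζm ζp x ω 0 = x from rfl]
    simp
  | succ k ihk =>
    intro hinc
    have hk := ihk (fun i hi => hinc i (hi.trans (Nat.lt_succ_self k)))
    obtain ⟨hm1, hp1⟩ := hinc k (Nat.lt_succ_self k)
    obtain ⟨hm2, hm3⟩ := hSb _ hm1
    obtain ⟨hp2, hp3⟩ := hSb _ hp1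
    set s := schelling ζm ζp x ω k with hs
    have hM0 : 0 < M := lt_of_lt_of_le hρ hρM
    rw [schelling_succ, ← hs]
    rcases le_or_gt |s| M with hsM | hsM
    · have h1 : -M ≤ s := neg_le_of_abs_le hsM
      have h2 : s ≤ M := le_of_abs_le hsM
      refine le_max_of_le_right (abs_le.2 ?_)
      split <;> constructor <;> linarith
    · have hbig : |s| ≤ |x| - k * ρ := by
        rcases max_cases (|x| - k * ρ) M with ⟨h, _⟩ | ⟨h, _⟩ <;> [skip; linarith] <;>
          (rw [h] at hk; exact hk)
      rcases lt_or_ge 0 s with hspos | hsneg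
      · have hseq : |s| = s := abs_of_pos hspos
        have hMs : M < s := by rwa [hseq] at hsM
        rw [if_pos hspos]
        refine le_max_of_le_left ?_
        have : |s - ζm k ω| = s - ζm k ω := abs_of_pos (by linarith)
        rw [this]
        push_cast
        rw [hseq] at hbig
        linarith
      · have hseq : |s| = -s := abs_of_nonpos hsneg
        have hMs : s < -M := by rw [hseq] at hsM; linarith
        rw [if_neg (not_lt.2 hsneg)]
        refine le_max_of_le_left ?_
        have : |s + ζp k ω| = -(s + ζp k ω) := abs_of_nonpos (by linarith)
        rw [this]
        push_cast
        rw [hseq] at hbig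
        linarith

lemma schelling_mem_addSubgroup {Ω : Type} {ζm ζp : ℕ → Ω → ℝ} {x : ℝ} {ω : Ω} {S : Finset ℝ}
    {G : AddSubgroup ℝ} (hSG : (S : Set ℝ) ⊆ G) (hx : x ∈ G) :
    ∀ k : ℕ, (∀ i < k, ζm i ω ∈ S ∧ ζp i ω ∈ S) → schelling ζm ζp x ω k ∈ G := by
  intro k
  induction k with
  | zero => intro _; exact hx
  | succ k ihk =>
    intro hinc
    have hk := ihk (fun i hi => hinc i (hi.trans (Nat.lt_succ_self k)))
    obtain ⟨hm1, hp1⟩ := hinc k (Nat.lt_succ_self k)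
    rw [schelling_succ]
    split
    · exact sub_mem hk (hSG hm1)
    · exact add_mem hk (hSG hp1)


set_option linter.unusedSectionVars false

variable [MeasureSpace Ω] [IsProbabilityMeasure (ℙ : Measure Ω)] {ζm ζp : ℕ → Ω → ℝ}

lemma null_outside {ζ : Ω → ℝ} (hm : Measurable ζ) {S : Finset ℝ}
    (hsupp : ∀ x : ℝ, x ∈ (S : Set ℝ) ↔ ∀ ε > (0:ℝ), 0 < (ℙ : Measure Ω) {ω | |ζ ω - x| < ε}) :
    (ℙ : Measure Ω) {ω | ζ ω ∉ (S : Set ℝ)} = 0 := by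
  have hSm : MeasurableSet ((S : Set ℝ)ᶜ) := (S.finite_toSet.measurableSet).compl
  have h1 : {ω | ζ ω ∉ (S : Set ℝ)} = ζ ⁻¹' ((S : Set ℝ)ᶜ) := rfl
  rw [h1, ← Measure.map_apply hm hSm]
  refine measure_null_of_locally_null _ (fun y hy => ?_)
  have : ¬ ∀ ε > (0:ℝ), 0 < (ℙ : Measure Ω) {ω | |ζ ω - y| < ε} := fun h => hy ((hsupp y).2 h)
  push_neg at this
  obtain ⟨ε, hε, h0⟩ := this
  refine ⟨Metric.ball y ε, mem_nhdsWithin_of_mem_nhds (Metric.ball_mem_nhds y hε), ?_⟩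
  rw [Measure.map_apply hm measurableSet_ball]
  have : ζ ⁻¹' Metric.ball y ε = {ω | |ζ ω - y| < ε} := by
    ext ω; simp [Metric.mem_ball, Real.dist_eq]
  rw [this]
  exact le_antisymm h0 zero_le

lemma atom_pos {ζ : Ω → ℝ} (hm : Measurable ζ) {S : Finset ℝ}
    (hsupp : ∀ x : ℝ, x ∈ (S : Set ℝ) ↔ ∀ ε > (0:ℝ), 0 < (ℙ : Measure Ω) {ω | |ζ ω - x| < ε})
    {s : ℝ} (hs : s ∈ S) : 0 < (ℙ : Measure Ω) {ω | ζ ω = s} := by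
  classical
  set T := S.erase s with hT
  obtain ⟨ε, hε, hεle⟩ : ∃ ε > (0:ℝ), ∀ t ∈ T, ε ≤ |t - s| := by
    rcases T.eq_empty_or_nonempty with h | h
    · exact ⟨1, one_pos, by simp [h]⟩
    · refine ⟨(T.image (fun t => |t - s|)).min' (h.image _), ?_,
        fun t ht => Finset.min'_le _ _ (Finset.mem_image_of_mem _ ht)⟩
      obtain ⟨t, ht, hteq⟩ := Finset.mem_image.1 ((T.image (fun t => |t - s|)).min'_mem (h.image _))
      rw [gt_iff_lt, ← hteq]
      have : t ≠ s := Finset.ne_of_mem_erase ht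
      exact abs_pos.2 (sub_ne_zero.2 this)
  have hsub : {ω | |ζ ω - s| < ε} ⊆ {ω | ζ ω = s} ∪ {ω | ζ ω ∉ (S : Set ℝ)} := by
    intro ω hω
    by_cases hωS : ζ ω ∈ (S : Set ℝ)
    · left
      by_contra hne
      have : ζ ω ∈ T := Finset.mem_erase.2 ⟨hne, hωS⟩
      exact absurd hω (not_lt.2 (hεle _ this))
    · exact Or.inr hωS
  have h1 : 0 < (ℙ : Measure Ω) {ω | |ζ ω - s| < ε} := ((hsupp s).1 hs) ε hε
  have h3 : (ℙ : Measure Ω) {ω | ζ ω ∉ (S : Set ℝ)} = 0 := null_outside hm hsupp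
  calc (0:ℝ≥0∞) < (ℙ : Measure Ω) {ω | |ζ ω - s| < ε} := h1
    _ ≤ (ℙ : Measure Ω) ({ω | ζ ω = s} ∪ {ω | ζ ω ∉ (S : Set ℝ)}) := measure_mono hsub
    _ ≤ (ℙ : Measure Ω) {ω | ζ ω = s} + (ℙ : Measure Ω) {ω | ζ ω ∉ (S : Set ℝ)} :=
        measure_union_le _ _
    _ = (ℙ : Measure Ω) {ω | ζ ω = s} := by rw [h3, add_zero]



lemma ident_atom {ζ ζ' : Ω → ℝ} (h1 : Measurable ζ)
    (hid : Measure.map ζ (ℙ : Measure Ω) = Measure.map ζ' ℙ) (h2 : Measurable ζ') (c : ℝ) :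
    (ℙ : Measure Ω) {ω | ζ ω = c} = ℙ {ω | ζ' ω = c} := by
  have e1 : {ω | ζ ω = c} = ζ ⁻¹' {c} := rfl
  have e2 : {ω | ζ' ω = c} = ζ' ⁻¹' {c} := rfl
  rw [e1, e2, ← Measure.map_apply h1 (measurableSet_singleton c),
    ← Measure.map_apply h2 (measurableSet_singleton c), hid]

lemma block_prob (hmm : ∀ k, Measurable (ζm k)) (hmp : ∀ k, Measurable (ζp k))
    (hindep : iIndepFun (Sum.elim ζm ζp) ℙ)
    (hidm : ∀ k, Measure.map (ζm k) (ℙ : Measure Ω) = Measure.map (ζm 0) ℙ)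
    (hidp : ∀ k, Measure.map (ζp k) (ℙ : Measure Ω) = Measure.map (ζp 0) ℙ)
    (t n : ℕ) (f g : ℕ → ℝ) :
    (ℙ : Measure Ω) (⋂ i ∈ Finset.range n, ({ω | ζm (t+i) ω = f i} ∩ {ω | ζp (t+i) ω = g i}))
      = ∏ i ∈ Finset.range n,
          ((ℙ : Measure Ω) {ω | ζm 0 ω = f i} * (ℙ : Measure Ω) {ω | ζp 0 ω = g i}) := by
  classical
  set Fm : Finset (ℕ ⊕ ℕ) := (Finset.range n).image (fun i => Sum.inl (t+i)) with hFm
  set Fp : Finset (ℕ ⊕ ℕ) := (Finset.range n).image (fun i => Sum.inr (t+i)) with hFp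
  set E : ℕ ⊕ ℕ → Set Ω := Sum.elim (fun j => {ω | ζm j ω = f (j - t)})
    (fun j => {ω | ζp j ω = g (j - t)}) with hE
  have hdisj : Disjoint Fm Fp := by
    rw [Finset.disjoint_left]
    rintro a ha hb
    simp only [hFm, hFp, Finset.mem_image] at ha hb
    obtain ⟨i, _, rfl⟩ := ha
    obtain ⟨j, _, h⟩ := hb
    exact Sum.inl_ne_inr h.symm
  have hinjl : Set.InjOn (fun i => (Sum.inl (t+i) : ℕ ⊕ ℕ)) (Finset.range n) := by
    intro i _ j _ h; simpa using h
  have hinjr : Set.InjOn (fun i => (Sum.inr (t+i) : ℕ ⊕ ℕ)) (Finset.range n) := by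
    intro i _ j _ h; simpa using h
  have hset : (⋂ j ∈ Fm ∪ Fp, E j)
      = ⋂ i ∈ Finset.range n, ({ω | ζm (t+i) ω = f i} ∩ {ω | ζp (t+i) ω = g i}) := by
    ext ω
    simp only [Set.mem_iInter, Finset.mem_union, Finset.mem_image, Finset.mem_range,
      Set.mem_inter_iff, Set.mem_setOf_eq, hFm, hFp, hE]
    constructor
    · intro h i hi
      have h1 := h _ (Or.inl ⟨i, hi, rfl⟩)
      have h2 := h _ (Or.inr ⟨i, hi, rfl⟩)
      simp only [Sum.elim_inl, Sum.elim_inr, Nat.add_sub_cancel_left, Set.mem_setOf_eq] at h1 h2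
      exact ⟨h1, h2⟩
    · rintro h j (⟨i, hi, rfl⟩ | ⟨i, hi, rfl⟩)
      · simpa only [Sum.elim_inl, Nat.add_sub_cancel_left, Set.mem_setOf_eq] using (h i hi).1
      · simpa only [Sum.elim_inr, Nat.add_sub_cancel_left, Set.mem_setOf_eq] using (h i hi).2
  have hmeas : ∀ j ∈ Fm ∪ Fp,
      MeasurableSet[MeasurableSpace.comap (Sum.elim ζm ζp j) Real.measurableSpace] (E j) := by
    intro j hj
    rcases j with j | j
    · exact ⟨{f (j - t)}, measurableSet_singleton _, rfl⟩
    · exact ⟨{g (j - t)}, measurableSet_singleton _, rfl⟩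
  have hprod := hindep.meas_biInter (S := Fm ∪ Fp) (s := E) hmeas
  rw [hset] at hprod
  rw [hprod, Finset.prod_union hdisj, Finset.prod_image hinjl, Finset.prod_image hinjr,
    ← Finset.prod_mul_distrib]
  refine Finset.prod_congr rfl (fun i _ => ?_)
  have e1 : E (Sum.inl (t+i)) = {ω | ζm (t+i) ω = f i} := by
    simp [hE, Nat.add_sub_cancel_left]
  have e2 : E (Sum.inr (t+i)) = {ω | ζp (t+i) ω = g i} := by
    simp [hE, Nat.add_sub_cancel_left]
  rw [e1, e2, ident_atom (hmm (t+i)) (hidm (t+i)) (hmm 0), ident_atom (hmp (t+i)) (hidp (t+i)) (hmp 0)]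

lemma past_future (hmm : ∀ k, Measurable (ζm k)) (hmp : ∀ k, Measurable (ζp k))
    (hindep : iIndepFun (Sum.elim ζm ζp) ℙ) (t : ℕ)
    {C B : Set Ω}
    (hC : MeasurableSet[⨆ j ∈ {j : ℕ ⊕ ℕ | Sum.elim id id j < t},
      MeasurableSpace.comap (Sum.elim ζm ζp j) Real.measurableSpace] C)
    (hB : MeasurableSet[⨆ j ∈ {j : ℕ ⊕ ℕ | Sum.elim id id j < t}ᶜ,
      MeasurableSpace.comap (Sum.elim ζm ζp j) Real.measurableSpace] B) :
    (ℙ : Measure Ω) (C ∩ B) = (ℙ : Measure Ω) C * (ℙ : Measure Ω) B := by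
  have h_le : ∀ j : ℕ ⊕ ℕ,
      MeasurableSpace.comap (Sum.elim ζm ζp j) Real.measurableSpace
        ≤ (inferInstance : MeasurableSpace Ω) := by
    intro j
    rcases j with j | j
    · exact (hmm j).comap_le
    · exact (hmp j).comap_le
  have hind := indep_biSup_compl h_le hindep.iIndep {j : ℕ ⊕ ℕ | Sum.elim id id j < t}
  exact (Indep_iff _ _ _).1 hind C B hC hB



end SchellingProofAux

open SchellingProofAux

/-- Lemma (Markov recurrence), item i: if the increments `ζ⁻, ζ⁺` are two independent
i.i.d. sequences whose common laws both have support exactly a finite set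
`S ⊆ ρℤ ∩ (0, ∞)`, then from every starting point `x` in the additive group generated by
`S`, the process visits `0` infinitely often almost surely. -/
theorem schelling_hits_zero_io_of_finite_rational
    {Ω : Type} [MeasureSpace Ω] [IsProbabilityMeasure (ℙ : Measure Ω)]
    (ρ : ℝ) (hρ : 0 < ρ) (S : Finset ℝ)
    (hS : ∀ s ∈ S, 0 < s ∧ ∃ k : ℤ, s = ρ * k)
    (ζm ζp : ℕ → Ω → ℝ)
    (hmm : ∀ k, Measurable (ζm k)) (hmp : ∀ k, Measurable (ζp k))
    (hindep : iIndepFun (Sum.elim ζm ζp) ℙ)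
    (hidm : ∀ k, Measure.map (ζm k) (ℙ : Measure Ω) = Measure.map (ζm 0) ℙ)
    (hidp : ∀ k, Measure.map (ζp k) (ℙ : Measure Ω) = Measure.map (ζp 0) ℙ)
    (hsuppm : ∀ x : ℝ, x ∈ (S : Set ℝ) ↔
      ∀ ε > (0 : ℝ), 0 < (ℙ : Measure Ω) {ω | |ζm 0 ω - x| < ε})
    (hsuppp : ∀ x : ℝ, x ∈ (S : Set ℝ) ↔
      ∀ ε > (0 : ℝ), 0 < (ℙ : Measure Ω) {ω | |ζp 0 ω - x| < ε}) :
    ∀ x ∈ AddSubgroup.closure (S : Set ℝ),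
      ∀ᵐ ω ∂(ℙ : Measure Ω), ∀ m : ℕ, ∃ k : ℕ, m ≤ k ∧ schelling ζm ζp x ω k = 0 := by
  classical
  intro x hx
  -- basic facts about S
  have hSpos : ∀ s ∈ S, 0 < s := fun s hs => (hS s hs).1
  have hSne : S.Nonempty := by
    by_contra h
    rw [Finset.not_nonempty_iff_eq_empty] at h
    have h0 := null_outside (hmm 0) hsuppm
    rw [h] at h0
    simp only [Finset.coe_empty, Set.mem_empty_iff_false, not_false_iff, Set.setOf_true,
      measure_univ] at h0
    exact one_ne_zero h0
  obtain ⟨s₀, hs₀⟩ := hSne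
  set M : ℝ := S.max' ⟨s₀, hs₀⟩ with hM
  have hSb : ∀ s ∈ S, ρ ≤ s ∧ s ≤ M := by
    intro s hs
    refine ⟨?_, S.le_max' s hs⟩
    obtain ⟨k, hk⟩ := (hS s hs).2
    have hk0 : 0 < (k : ℝ) := by
      by_contra hkneg
      push_neg at hkneg
      have : s ≤ 0 := hk ▸ mul_nonpos_of_nonneg_of_nonpos hρ.le hkneg
      exact absurd this (not_le.2 (hSpos s hs))
    have hkz : (0 : ℤ) < k := by exact_mod_cast hk0
    have : (1 : ℝ) ≤ (k : ℝ) := by exact_mod_cast hkz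
    calc ρ = ρ * 1 := (mul_one ρ).symm
      _ ≤ ρ * k := by nlinarith
      _ = s := hk.symm
  have hρM : ρ ≤ M := (hSb s₀ hs₀).1.trans (hSb s₀ hs₀).2
  have hM0 : 0 < M := lt_of_lt_of_le hρ hρM
  set G := AddSubgroup.closure (S : Set ℝ) with hG
  have hSG : (S : Set ℝ) ⊆ G := AddSubgroup.subset_closure
  have hGρ : ∀ v ∈ G, ∃ k : ℤ, v = ρ * k := by
    have hle : G ≤ AddSubgroup.zmultiples ρ := by
      rw [hG, AddSubgroup.closure_le]
      intro s hs
      obtain ⟨k, hk⟩ := (hS s hs).2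
      exact AddSubgroup.mem_zmultiples_iff.2 ⟨k, by rw [zsmul_eq_mul, hk, mul_comm]⟩
    intro v hv
    obtain ⟨k, hk⟩ := AddSubgroup.mem_zmultiples_iff.1 (hle hv)
    exact ⟨k, by rw [← hk, zsmul_eq_mul, mul_comm]⟩
  -- the finite set of relevant states
  set V : Finset ℝ :=
    ((Finset.Icc (⌈-(M/ρ)⌉) (⌊M/ρ⌋)).image (fun k : ℤ => ρ * k)).filter (fun v => v ∈ G) with hV
  have hmemV : ∀ v : ℝ, v ∈ G → |v| ≤ M → v ∈ V := by
    intro v hvG hvM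
    obtain ⟨k, hk⟩ := hGρ v hvG
    have habs : |(k : ℝ)| ≤ M / ρ := by
      rw [le_div_iff₀ hρ]
      calc |(k:ℝ)| * ρ = |v| := by rw [hk, abs_mul, abs_of_pos hρ]; ring
        _ ≤ M := hvM
    rw [abs_le] at habs
    refine Finset.mem_filter.2 ⟨Finset.mem_image.2 ⟨k, Finset.mem_Icc.2 ⟨?_, ?_⟩, hk.symm⟩, hvG⟩
    · rw [Int.ceil_le]; push_cast; linarith [habs.1]
    · rw [Int.le_floor]; exact habs.2
  have hVne : V.Nonempty := ⟨0, hmemV 0 (zero_mem G) (by simp [abs_of_nonneg, hM0.le])⟩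
  have hVG : ∀ v ∈ V, v ∈ G := fun v hv => (Finset.mem_filter.1 hv).2
  -- words leading to zero
  have hword : ∀ v : ℝ, ∃ (n : ℕ) (f g : ℕ → ℝ), (∀ i, f i ∈ S) ∧ (∀ i, g i ∈ S) ∧
      (v ∈ V → schelling (fun i (_ : Unit) => f i) (fun i _ => g i) v () n = 0) := by
    intro v
    by_cases hv : v ∈ V
    · obtain ⟨A, B, hA, hB, hAB⟩ := closure_multiset (hVG v hv)
      obtain ⟨n, f, g, hf, hg, h0⟩ :=
        reach hSpos hs₀ (A.card + B.card) A B rfl hA hB v hAB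
      exact ⟨n, f, g, hf, hg, fun _ => h0⟩
    · exact ⟨0, fun _ => s₀, fun _ => s₀, fun _ => hs₀, fun _ => hs₀, fun h => absurd h hv⟩
  choose nw fw gw hfw hgw h0w using hword
  set N : ℕ := V.sup nw + 1 with hN
  have hnwN : ∀ v ∈ V, nw v < N := fun v hv => Nat.lt_succ_of_le (Finset.le_sup hv)
  have hN1 : 1 ≤ N := Nat.succ_le_succ (Nat.zero_le _)
  -- atoms and the uniform lower bound δ
  have hATm : ∀ c ∈ S, 0 < (ℙ : Measure Ω) {ω | ζm 0 ω = c} := fun c hc =>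
    atom_pos (hmm 0) hsuppm hc
  have hATp : ∀ c ∈ S, 0 < (ℙ : Measure Ω) {ω | ζp 0 ω = c} := fun c hc =>
    atom_pos (hmp 0) hsuppp hc
  set δv : ℝ → ℝ≥0∞ := fun v => ∏ i ∈ Finset.range (nw v),
    ((ℙ : Measure Ω) {ω | ζm 0 ω = fw v i} * (ℙ : Measure Ω) {ω | ζp 0 ω = gw v i}) with hδv
  have hδvpos : ∀ v, 0 < δv v := by
    intro v
    rw [hδv]
    refine CanonicallyOrderedAdd.prod_pos.2 (fun i _ => ?_)
    exact ENNReal.mul_pos (hATm _ (hfw v i)).ne' (hATp _ (hgw v i)).ne'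
  set δ : ℝ≥0∞ := V.inf' hVne δv with hδ
  have hδpos : 0 < δ := (Finset.lt_inf'_iff _).2 (fun v _ => hδvpos v)
  have hδle : ∀ v ∈ V, δ ≤ δv v := fun v hv => Finset.inf'_le _ hv
  set c : ℝ≥0∞ := 1 - δ with hc
  have hclt : c < 1 := ENNReal.sub_lt_self ENNReal.one_ne_top one_ne_zero hδpos.ne'
  have hcne : c ≠ ⊤ := (hclt.trans ENNReal.one_lt_top).ne
  -- σ-algebras of the past
  set Mpast : ℕ → MeasurableSpace Ω := fun t =>
    ⨆ j ∈ {j : ℕ ⊕ ℕ | Sum.elim id id j < t},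
      MeasurableSpace.comap (Sum.elim ζm ζp j) Real.measurableSpace with hMpast
  have hζmM : ∀ t i, i < t → Measurable[Mpast t] (ζm i) := by
    intro t i hi
    rw [hMpast]
    exact measurable_iff_comap_le.2
      (le_iSup₂ (f := fun (j : ℕ ⊕ ℕ) (_ : j ∈ {j : ℕ ⊕ ℕ | Sum.elim id id j < t}) =>
        MeasurableSpace.comap (Sum.elim ζm ζp j) Real.measurableSpace) (Sum.inl i) hi)
  have hζpM : ∀ t i, i < t → Measurable[Mpast t] (ζp i) := by
    intro t i hi
    rw [hMpast]
    exact measurable_iff_comap_le.2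
      (le_iSup₂ (f := fun (j : ℕ ⊕ ℕ) (_ : j ∈ {j : ℕ ⊕ ℕ | Sum.elim id id j < t}) =>
        MeasurableSpace.comap (Sum.elim ζm ζp j) Real.measurableSpace) (Sum.inr i) hi)
  have hsM : ∀ t k, k ≤ t → Measurable[Mpast t] (fun ω => schelling ζm ζp x ω k) :=
    fun t k hk => schelling_measurable x (fun i hi => hζmM t i (lt_of_lt_of_le hi hk))
      (fun i hi => hζpM t i (lt_of_lt_of_le hi hk))
  have hsA : ∀ k, Measurable (fun ω => schelling ζm ζp x ω k) :=
    fun k => schelling_measurable x (fun i _ => hmm i) (fun i _ => hmp i)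
  have hSmeas : MeasurableSet (S : Set ℝ) := S.finite_toSet.measurableSet
  -- events
  set Eset : ℕ → Set Ω := fun t => ⋂ i ∈ Finset.range t,
    ({ω | ζm i ω ∈ (S : Set ℝ)} ∩ {ω | ζp i ω ∈ (S : Set ℝ)}) with hEset
  have hEsetM : ∀ t, MeasurableSet[Mpast t] (Eset t) := by
    intro t
    refine Finset.measurableSet_biInter _ (fun i hi => ?_)
    have hit : i < t := Finset.mem_range.1 hi
    exact ((hζmM t i hit) hSmeas).inter ((hζpM t i hit) hSmeas)
  have hEsetA : ∀ t, MeasurableSet (Eset t) := by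
    intro t
    refine Finset.measurableSet_biInter _ (fun i hi => ?_)
    exact ((hmm i) hSmeas).inter ((hmp i) hSmeas)
  have hEsetInc : ∀ t (ω : Ω), ω ∈ Eset t → ∀ i < t, ζm i ω ∈ (S : Set ℝ) ∧ ζp i ω ∈ (S : Set ℝ) := by
    intro t ω hω i hi
    have := Set.mem_iInter₂.1 hω i (Finset.mem_range.2 hi)
    exact ⟨this.1, this.2⟩
  set T0 : ℕ := ⌈|x| / ρ⌉₊ with hT0
  have hstate : ∀ t, T0 ≤ t → ∀ ω ∈ Eset t, schelling ζm ζp x ω t ∈ V := by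
    intro t ht ω hω
    have hinc := hEsetInc t ω hω
    have h1 : |schelling ζm ζp x ω t| ≤ max (|x| - t * ρ) M :=
      schelling_abs_le hρ ⟨s₀, hs₀⟩ hSb t hinc
    have h2 : |x| ≤ t * ρ := by
      have : |x| / ρ ≤ (T0 : ℝ) := Nat.le_ceil _
      have h3 : (T0 : ℝ) ≤ (t : ℝ) := by exact_mod_cast ht
      rw [div_le_iff₀ hρ] at this
      nlinarith
    have h4 : |schelling ζm ζp x ω t| ≤ M := h1.trans (max_le (by linarith) le_rfl)
    exact hmemV _ (schelling_mem_addSubgroup hSG hx t hinc) h4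
  -- main estimate for each starting index m
  have hBad : ∀ m : ℕ, (ℙ : Measure Ω)
      {ω | (∀ i, ζm i ω ∈ (S : Set ℝ) ∧ ζp i ω ∈ (S : Set ℝ)) ∧
        ∀ k, m ≤ k → schelling ζm ζp x ω k ≠ 0} = 0 := by
    intro m
    set T : ℕ := max T0 m with hT
    set tJ : ℕ → ℕ := fun J => T + J * N with htJ
    have htJmono : ∀ {a b : ℕ}, a ≤ b → tJ a ≤ tJ b := by
      intro a b hab
      simp only [htJ]
      have : a * N ≤ b * N := Nat.mul_le_mul_right _ hab
      omega
    have htJT0 : ∀ J, T0 ≤ tJ J := fun J => le_trans (le_max_left _ _) (Nat.le_add_right _ _)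
    have htJm : ∀ J, m ≤ tJ J := fun J => le_trans (le_max_right _ _) (Nat.le_add_right _ _)
    set Hset : ℕ → Set Ω := fun J => ⋃ k ∈ Finset.Ico (tJ J) (tJ J + N),
      {ω | schelling ζm ζp x ω k = 0} with hHset
    have hHsetA : ∀ J, MeasurableSet (Hset J) :=
      fun J => Finset.measurableSet_biUnion _
        (fun k _ => (hsA k) (measurableSet_singleton 0))
    have hHsetM : ∀ J t, tJ J + N ≤ t → MeasurableSet[Mpast t] (Hset J) := by
      intro J t ht
      refine Finset.measurableSet_biUnion _ (fun k hk => ?_)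
      have hkt : k ≤ t := le_trans (le_of_lt (Finset.mem_Ico.1 hk).2) ht
      exact (hsM t k hkt) (measurableSet_singleton 0)
    set C : ℕ → Set Ω := fun J => Eset (tJ J) ∩ ⋂ j ∈ Finset.range J, (Hset j)ᶜ with hC2
    have hCM : ∀ J, MeasurableSet[Mpast (tJ J)] (C J) := by
      intro J
      refine (hEsetM _).inter (Finset.measurableSet_biInter _ (fun j hj => ?_))
      have : tJ j + N ≤ tJ J := by
        have : tJ (j + 1) ≤ tJ J := htJmono (Finset.mem_range.1 hj)
        simpa [htJ, Nat.add_mul, Nat.one_mul, Nat.add_assoc] using this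
      exact (hHsetM j _ this).compl
    have hCA : ∀ J, MeasurableSet (C J) := by
      intro J
      exact (hEsetA _).inter
        (Finset.measurableSet_biInter _ (fun j hj => (hHsetA j).compl))
    have key : ∀ J, (ℙ : Measure Ω) (C (J + 1)) ≤ c * (ℙ : Measure Ω) (C J) := by
      intro J
      set t₀ : ℕ := tJ J with ht₀
      set Dv : ℝ → Set Ω := fun v => C J ∩ {ω | schelling ζm ζp x ω t₀ = v} with hDv
      set Bv : ℝ → Set Ω := fun v => ⋂ i ∈ Finset.range (nw v),
        ({ω | ζm (t₀ + i) ω = fw v i} ∩ {ω | ζp (t₀ + i) ω = gw v i}) with hBv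
      have hDvM : ∀ v, MeasurableSet[Mpast t₀] (Dv v) :=
        fun v => (hCM J).inter ((hsM t₀ t₀ le_rfl) (measurableSet_singleton v))
      have hDvA : ∀ v, MeasurableSet (Dv v) :=
        fun v => (hCA J).inter ((hsA t₀) (measurableSet_singleton v))
      have hBvA : ∀ v, MeasurableSet (Bv v) := fun v =>
        Finset.measurableSet_biInter _ (fun i _ =>
          ((hmm (t₀ + i)) (measurableSet_singleton _)).inter
            ((hmp (t₀ + i)) (measurableSet_singleton _)))
      have hCcover : C J = ⋃ v ∈ V, Dv v := by
        ext ω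
        constructor
        · intro hω
          have hV' : schelling ζm ζp x ω t₀ ∈ V := hstate t₀ (htJT0 J) ω hω.1
          exact Set.mem_iUnion₂.2 ⟨_, hV', hω, rfl⟩
        · intro hω
          obtain ⟨v, hv, hmem⟩ := Set.mem_iUnion₂.1 hω
          exact hmem.1
      have hDdisj : Set.PairwiseDisjoint (V : Set ℝ) Dv := by
        intro v hv w hw hvw
        refine Set.disjoint_left.2 (fun ω h1 h2 => hvw ?_)
        have e1 : schelling ζm ζp x ω t₀ = v := h1.2
        have e2 : schelling ζm ζp x ω t₀ = w := h2.2
        rw [← e1, e2]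
      have hsum1 : (ℙ : Measure Ω) (C J) = ∑ v ∈ V, (ℙ : Measure Ω) (Dv v) := by
        rw [hCcover]
        exact measure_biUnion_finset hDdisj (fun v _ => hDvA v)
      have hBprob : ∀ v, (ℙ : Measure Ω) (Bv v) = δv v := fun v =>
        block_prob hmm hmp hindep hidm hidp t₀ (nw v) (fw v) (gw v)
      have hBvM : ∀ v, MeasurableSet[⨆ j ∈ {j : ℕ ⊕ ℕ | Sum.elim id id j < t₀}ᶜ,
          MeasurableSpace.comap (Sum.elim ζm ζp j) Real.measurableSpace] (Bv v) := by
        intro v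
        refine Finset.measurableSet_biInter _ (fun i _ => MeasurableSet.inter ?_ ?_)
        · have hmem : (Sum.inl (t₀ + i) : ℕ ⊕ ℕ) ∈ {j : ℕ ⊕ ℕ | Sum.elim id id j < t₀}ᶜ := by
            simp
          exact (le_iSup₂ (f := fun (j : ℕ ⊕ ℕ)
              (_ : j ∈ {j : ℕ ⊕ ℕ | Sum.elim id id j < t₀}ᶜ) =>
              MeasurableSpace.comap (Sum.elim ζm ζp j) Real.measurableSpace)
            (Sum.inl (t₀ + i)) hmem) _ ⟨{fw v i}, measurableSet_singleton _, rfl⟩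
        · have hmem : (Sum.inr (t₀ + i) : ℕ ⊕ ℕ) ∈ {j : ℕ ⊕ ℕ | Sum.elim id id j < t₀}ᶜ := by
            simp
          exact (le_iSup₂ (f := fun (j : ℕ ⊕ ℕ)
              (_ : j ∈ {j : ℕ ⊕ ℕ | Sum.elim id id j < t₀}ᶜ) =>
              MeasurableSpace.comap (Sum.elim ζm ζp j) Real.measurableSpace)
            (Sum.inr (t₀ + i)) hmem) _ ⟨{gw v i}, measurableSet_singleton _, rfl⟩
      have hindepDB : ∀ v, (ℙ : Measure Ω) (Dv v ∩ Bv v)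
          = (ℙ : Measure Ω) (Dv v) * (ℙ : Measure Ω) (Bv v) := by
        intro v
        exact past_future hmm hmp hindep t₀ (hDvM v) (hBvM v)
      have hDBsub : ∀ v ∈ V, Dv v ∩ Bv v ⊆ C J ∩ Hset J := by
        intro v hv ω hω
        obtain ⟨⟨hωC, hωs⟩, hωB⟩ := hω
        refine ⟨hωC, ?_⟩
        have hagree : ∀ i < nw v, ζm (t₀ + i) ω = fw v i ∧ ζp (t₀ + i) ω = gw v i := by
          intro i hi
          have := Set.mem_iInter₂.1 hωB i (Finset.mem_range.2 hi)
          exact ⟨this.1, this.2⟩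
        have h1 : schelling ζm ζp x ω (t₀ + nw v) = 0 := by
          rw [schelling_add, hωs, schelling_agree hagree v (nw v) le_rfl]
          exact h0w v hv
        refine Set.mem_iUnion₂.2 ⟨t₀ + nw v, Finset.mem_Ico.2
          ⟨Nat.le_add_right _ _, by have := hnwN v hv; omega⟩, h1⟩
      have hsum2 : (ℙ : Measure Ω) (⋃ v ∈ V, (Dv v ∩ Bv v))
          = ∑ v ∈ V, (ℙ : Measure Ω) (Dv v ∩ Bv v) :=
        measure_biUnion_finset (hDdisj.mono (fun v => Set.inter_subset_left))
          (fun v _ => (hDvA v).inter (hBvA v))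
      have hlow : δ * (ℙ : Measure Ω) (C J) ≤ (ℙ : Measure Ω) (C J ∩ Hset J) := by
        calc δ * (ℙ : Measure Ω) (C J) = δ * ∑ v ∈ V, (ℙ : Measure Ω) (Dv v) := by rw [hsum1]
          _ = ∑ v ∈ V, δ * (ℙ : Measure Ω) (Dv v) := Finset.mul_sum _ _ _
          _ ≤ ∑ v ∈ V, (ℙ : Measure Ω) (Dv v ∩ Bv v) := by
              refine Finset.sum_le_sum (fun v hv => ?_)
              rw [hindepDB v, mul_comm]
              exact mul_le_mul_right ((hBprob v).symm ▸ hδle v hv) _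
          _ = (ℙ : Measure Ω) (⋃ v ∈ V, (Dv v ∩ Bv v)) := hsum2.symm
          _ ≤ (ℙ : Measure Ω) (C J ∩ Hset J) := measure_mono (Set.iUnion₂_subset hDBsub)
      have hsub : C (J + 1) ⊆ C J \ (C J ∩ Hset J) := by
        intro ω hω
        obtain ⟨hE, hH⟩ := hω
        have hEJ : ω ∈ Eset (tJ J) := by
          refine Set.mem_iInter₂.2 (fun i hi => ?_)
          exact Set.mem_iInter₂.1 hE i (Finset.mem_range.2
            (lt_of_lt_of_le (Finset.mem_range.1 hi) (htJmono (Nat.le_succ J))))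
        have hHJ : ω ∈ ⋂ j ∈ Finset.range J, (Hset j)ᶜ := by
          refine Set.mem_iInter₂.2 (fun j hj => ?_)
          exact Set.mem_iInter₂.1 hH j (Finset.mem_range.2
            (lt_of_lt_of_le (Finset.mem_range.1 hj) (Nat.le_succ J)))
        have hnotH : ω ∉ Hset J :=
          Set.mem_iInter₂.1 hH J (Finset.mem_range.2 (Nat.lt_succ_self J))
        exact ⟨⟨hEJ, hHJ⟩, fun hin => hnotH hin.2⟩
      calc (ℙ : Measure Ω) (C (J + 1)) ≤ (ℙ : Measure Ω) (C J \ (C J ∩ Hset J)) :=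
            measure_mono hsub
        _ = (ℙ : Measure Ω) (C J) - (ℙ : Measure Ω) (C J ∩ Hset J) :=
            measure_diff Set.inter_subset_left
              ((hCA J).inter (hHsetA J)).nullMeasurableSet (measure_ne_top _ _)
        _ ≤ (ℙ : Measure Ω) (C J) - δ * (ℙ : Measure Ω) (C J) := tsub_le_tsub_left hlow _
        _ = c * (ℙ : Measure Ω) (C J) := by
            rw [hc, ENNReal.sub_mul (fun _ _ => measure_ne_top _ _), one_mul]
    have hCJ : ∀ J, (ℙ : Measure Ω) (C J) ≤ c ^ J := by
      intro J
      induction J with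
      | zero => simpa using prob_le_one
      | succ J ih =>
        calc (ℙ : Measure Ω) (C (J + 1)) ≤ c * (ℙ : Measure Ω) (C J) := key J
          _ ≤ c * c ^ J := by exact mul_le_mul_right ih c
          _ = c ^ (J + 1) := by rw [pow_succ, mul_comm]
    -- the bad set is inside every C J
    have hBadC : ∀ J, {ω | (∀ i, ζm i ω ∈ (S : Set ℝ) ∧ ζp i ω ∈ (S : Set ℝ)) ∧
        ∀ k, m ≤ k → schelling ζm ζp x ω k ≠ 0} ⊆ C J := by
      intro J ω hω
      obtain ⟨hω1, hω2⟩ := hω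
      constructor
      · exact Set.mem_iInter₂.2 (fun i _ => ⟨(hω1 i).1, (hω1 i).2⟩)
      · refine Set.mem_iInter₂.2 (fun j _ => ?_)
        intro hωH
        obtain ⟨k, hk1, hk2⟩ := Set.mem_iUnion₂.1 hωH
        exact hω2 k (le_trans (htJm j) (Finset.mem_Ico.1 hk1).1) hk2
    refine le_antisymm ?_ zero_le
    have htend : Tendsto (fun J : ℕ => c ^ J) atTop (nhds 0) :=
      ENNReal.tendsto_pow_atTop_nhds_zero_of_lt_one hclt
    exact ge_of_tendsto htend (Filter.Eventually.of_forall
      (fun J => le_trans (measure_mono (hBadC J)) (hCJ J)))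
  have hEnull : (ℙ : Measure Ω)
      {ω | ¬ ∀ i, ζm i ω ∈ (S : Set ℝ) ∧ ζp i ω ∈ (S : Set ℝ)} = 0 := by
    have hm0 : ∀ i, (ℙ : Measure Ω) {ω | ζm i ω ∉ (S : Set ℝ)} = 0 := by
      intro i
      have e : {ω | ζm i ω ∉ (S : Set ℝ)} = ζm i ⁻¹' ((S : Set ℝ)ᶜ) := rfl
      rw [e, ← Measure.map_apply (hmm i) hSmeas.compl, hidm i,
        Measure.map_apply (hmm 0) hSmeas.compl]
      exact null_outside (hmm 0) hsuppm
    have hp0 : ∀ i, (ℙ : Measure Ω) {ω | ζp i ω ∉ (S : Set ℝ)} = 0 := by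
      intro i
      have e : {ω | ζp i ω ∉ (S : Set ℝ)} = ζp i ⁻¹' ((S : Set ℝ)ᶜ) := rfl
      rw [e, ← Measure.map_apply (hmp i) hSmeas.compl, hidp i,
        Measure.map_apply (hmp 0) hSmeas.compl]
      exact null_outside (hmp 0) hsuppp
    refine measure_mono_null ?_
      (measure_iUnion_null (fun i => measure_union_null (hm0 i) (hp0 i)))
    intro ω hω
    simp only [Set.mem_setOf_eq, not_forall] at hω
    obtain ⟨i, hi⟩ := hω
    rw [not_and_or] at hi
    exact Set.mem_iUnion.2 ⟨i, hi.elim Or.inl Or.inr⟩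
  rw [ae_iff]
  refine measure_mono_null ?_ (measure_union_null hEnull (measure_iUnion_null hBad))
  intro ω hω
  by_cases hinc : ∀ i, ζm i ω ∈ (S : Set ℝ) ∧ ζp i ω ∈ (S : Set ℝ)
  · right
    simp only [Set.mem_setOf_eq, not_forall, not_exists] at hω
    obtain ⟨m, hm'⟩ := hω
    refine Set.mem_iUnion.2 ⟨m, ⟨hinc, fun k hk h0 => ?_⟩⟩
    have := hm' k
    rw [not_and_or] at this
    exact this.elim (fun h => h hk) (fun h => h h0)
  · exact Or.inl hinc
end

section
/- Let 0 < K₁ ≤ K₃ and let S ⊂ [K₁, K₃] be a set containing two elements x̄, ȳ whose ratio x̄/ȳ is irrational. Let (ζ⁻_k)_{k∈ℕ} and (ζ⁺_k)_{k∈ℕ} be two independent i.i.d. sequences of random variables, each with support exactly S. Consider the Markov process s⁰ₓ = x, s_{k+1}ˣ = s_kˣ − ζ⁻_k 1_{{s_kˣ > 0}} + ζ⁺_k 1_{{s_kˣ ≤ 0}}. Then for every x ∈ ℝ and every ε > 0, almost surely the process (s_kˣ)_{k∈ℕ} visits the interval (−ε, ε) infinitely often. -/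
open MeasureTheory ProbabilityTheory Filter
open scoped ENNReal

noncomputable section AuxSchelling


/-- Reduction of `z` into `(-L, 0]` modulo `L`. -/
def rho (L z : ℝ) : ℝ := z - L * ⌈z / L⌉

lemma rho_mem_Ioc {L : ℝ} (hL : 0 < L) (z : ℝ) : rho L z ∈ Set.Ioc (-L) 0 := by
  have h1 := Int.ceil_lt_add_one (z / L)
  have h2 := Int.le_ceil (z / L)
  have h3 : L * (z / L) = z := by field_simp
  constructor
  · have : L * (⌈z / L⌉ : ℝ) < L * (z / L + 1) := by exact (mul_lt_mul_iff_right₀ hL).2 h1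
    unfold rho; nlinarith
  · have : L * (z / L) ≤ L * (⌈z / L⌉ : ℝ) := (mul_le_mul_iff_right₀ hL).2 h2
    unfold rho; nlinarith

lemma rho_add_int_mul {L : ℝ} (hL : 0 < L) (z : ℝ) (n : ℤ) :
    rho L (z + L * n) = rho L z := by
  have hL0 : L ≠ 0 := ne_of_gt hL
  have : (z + L * n) / L = z / L + n := by field_simp
  unfold rho
  rw [this, Int.ceil_add_intCast]
  push_cast
  ring

lemma rho_eq_self {L : ℝ} (hL : 0 < L) {z : ℝ} (h : z ∈ Set.Ioc (-L) 0) : rho L z = z := by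
  have h1 : ⌈z / L⌉ = 0 := by
    rw [Int.ceil_eq_zero_iff]
    constructor
    · show -1 < z / L
      rw [lt_div_iff₀ hL]
      nlinarith [h.1]
    · exact div_nonpos_of_nonpos_of_nonneg h.2 hL.le
  unfold rho
  rw [h1]
  simp

lemma rho_congr {L : ℝ} (hL : 0 < L) {z w : ℝ} (n : ℤ) (h : z = w + L * n) :
    rho L z = rho L w := by
  rw [h, rho_add_int_mul hL]

lemma rho_eq_of_mem {L : ℝ} (hL : 0 < L) {z y : ℝ} (n : ℤ) (h : z = y + L * n)
    (hy : y ∈ Set.Ioc (-L) 0) : rho L z = y := by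
  rw [rho_congr hL n h, rho_eq_self hL hy]






lemma rho_sub_int (L : ℝ) (z : ℝ) : z - rho L z = L * ⌈z / L⌉ := by
  unfold rho; ring

lemma rot_dense {L θ : ℝ} (hL : 0 < L)
    (hirr : ∀ n : ℕ, 0 < n → ∀ m : ℤ, (n : ℝ) * θ ≠ L * m) {δ : ℝ} (hδ : 0 < δ) :
    ∃ M : ℕ, ∀ c : ℝ, ∃ n ≤ M, -δ < rho L (c + n * θ) := by
  rcases le_or_gt δ L with hδL | hδL
  swap
  · refine ⟨0, fun c => ⟨0, le_refl 0, ?_⟩⟩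
    have := (rho_mem_Ioc hL (c + (0 : ℕ) * θ)).1
    linarith
  classical
  set g : ℕ → ℤ := fun k => ⌊(rho L (k * θ) + L) / δ⌋ with hg
  have hmaps : ∀ k : ℕ, g k ∈ Finset.Icc (0 : ℤ) ⌊L / δ⌋ := by
    intro k
    have h1 := rho_mem_Ioc hL ((k : ℝ) * θ)
    have hpos : 0 ≤ (rho L (k * θ) + L) / δ := by
      apply div_nonneg _ hδ.le
      linarith [h1.1]
    have hle : (rho L (k * θ) + L) / δ ≤ L / δ := by
      gcongr
      linarith [h1.2]
    simp only [Finset.mem_Icc]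
    exact ⟨Int.floor_nonneg.2 hpos, Int.floor_le_floor hle⟩
  have hLδ0 : (0 : ℤ) ≤ ⌊L / δ⌋ := Int.floor_nonneg.2 (by positivity)
  obtain ⟨k₁, hk₁, k₂, hk₂, hne, heq⟩ :
      ∃ k₁ ∈ Finset.range ((⌊L / δ⌋).toNat + 2), ∃ k₂ ∈ Finset.range ((⌊L / δ⌋).toNat + 2),
        k₁ ≠ k₂ ∧ g k₁ = g k₂ := by
    have hcard : (Finset.Icc (0 : ℤ) ⌊L / δ⌋).card < (Finset.range ((⌊L / δ⌋).toNat + 2)).card := by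
      rw [Int.card_Icc, Finset.card_range]
      omega
    obtain ⟨k₁, hk₁, k₂, hk₂, hne, heq⟩ :=
      Finset.exists_ne_map_eq_of_card_lt_of_maps_to hcard (fun k _ => hmaps k)
    exact ⟨k₁, hk₁, k₂, hk₂, hne, heq⟩
  wlog hlt : k₁ < k₂ generalizing k₁ k₂
  · exact this k₂ hk₂ k₁ hk₁ hne.symm heq.symm (by omega)
  set d : ℝ := rho L (k₂ * θ) - rho L (k₁ * θ) with hd
  have habs : |d| < δ := by
    set a : ℝ := (rho L (k₂ * θ) + L) / δ with ha
    set b : ℝ := (rho L (k₁ * θ) + L) / δ with hb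
    have h1 : a < g k₂ + 1 := Int.lt_floor_add_one _
    have h2 : (g k₂ : ℝ) ≤ b := by rw [← heq]; exact Int.floor_le _
    have h3 : b < g k₁ + 1 := Int.lt_floor_add_one _
    have h4 : (g k₁ : ℝ) ≤ a := by rw [heq]; exact Int.floor_le _
    have hda : d = (a - b) * δ := by
      rw [hd, ha, hb]; field_simp; ring
    rw [hda, abs_mul, abs_of_pos hδ]
    have : |a - b| < 1 := by
      rw [abs_lt]; constructor <;> linarith
    nlinarith [this]
  set m : ℕ := k₂ - k₁ with hm
  have hm0 : 0 < m := by omega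
  have hmcast : (m : ℝ) = (k₂ : ℝ) - (k₁ : ℝ) := by
    rw [hm, Nat.cast_sub hlt.le]
  set q : ℤ := ⌈(k₁ * θ : ℝ) / L⌉ - ⌈(k₂ * θ : ℝ) / L⌉ with hq
  have hdq : d = m * θ + L * q := by
    have e1 := rho_sub_int L ((k₁ : ℝ) * θ)
    have e2 := rho_sub_int L ((k₂ : ℝ) * θ)
    rw [hd, hq, hmcast]
    push_cast
    linarith
  have hd0 : d ≠ 0 := by
    intro h0
    apply hirr m hm0 (-q)
    push_cast
    linarith
  refine ⟨(⌈L / |d|⌉₊ + 1) * m, fun c => ?_⟩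
  have hkey : ∀ j : ℕ, rho L (c + ((j * m : ℕ) : ℝ) * θ) = rho L (rho L c + j * d) := by
    intro j
    have e0 := rho_sub_int L c
    apply rho_congr hL (⌈c / L⌉ - j * q)
    push_cast
    linear_combination e0 - (j:ℝ) * hdq
  have hwc := rho_mem_Ioc hL c
  set w : ℝ := rho L c with hw
  rcases lt_or_ge (-δ) w with hwin | hwout
  · refine ⟨0, Nat.zero_le _, ?_⟩
    simp only [Nat.cast_zero, zero_mul, add_zero]
    rw [← hw]
    exact hwin
  rcases hd0.lt_or_gt with hdneg | hdpos
  · -- d < 0 : walk down, wrap once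
    set β : ℝ := -d with hβ
    have hβ0 : 0 < β := by rw [hβ]; linarith
    have hβδ : β < δ := by
      rw [abs_of_neg hdneg] at habs; rw [hβ]; exact habs
    set j : ℕ := ⌈(w + L) / β⌉₊ with hj
    have hwL : 0 < w + L := by linarith [hwc.1]
    have hja : (w + L) / β ≤ j := Nat.le_ceil _
    have hjb : (j : ℝ) < (w + L) / β + 1 := Nat.ceil_lt_add_one (by positivity)
    have h5 : w - j * β ≤ -L := by
      have : w + L ≤ j * β := by
        rw [div_le_iff₀ hβ0] at hja
        linarith
      linarith
    have h6 : -L - β < w - j * β := by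
      have h8 : (w + L) / β * β = w + L := div_mul_cancel₀ _ (ne_of_gt hβ0)
      nlinarith [mul_lt_mul_of_pos_right hjb hβ0, h8]
    have hwd : w + j * d = w - j * β := by rw [hβ]; ring
    have hv : w + j * d + L ∈ Set.Ioc (-L) (0:ℝ) := by
      constructor
      · rw [hwd]; linarith [hβδ, hδL]
      · rw [hwd]; linarith
    refine ⟨j * m, ?_, ?_⟩
    · have hjle : j ≤ ⌈L / β⌉₊ := by
        apply Nat.ceil_le_ceil
        gcongr
        linarith [hwc.2]
      have hdb : |d| = β := by rw [hβ, abs_of_neg hdneg]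
      gcongr
      rw [hdb]
      omega
    · rw [hkey j]
      have : rho L (w + j * d) = w + j * d + L := by
        apply rho_eq_of_mem hL (-1) _ hv
        push_cast; ring
      rw [this, hwd]
      linarith [h6, hβδ]
  · -- d > 0 : walk up without wrap
    set j : ℕ := ⌊(-δ - w) / d⌋₊ + 1 with hj
    have hwd : 0 ≤ -δ - w := by linarith
    have h7 : (⌊(-δ - w) / d⌋₊ : ℝ) ≤ (-δ - w) / d := Nat.floor_le (by positivity)
    have hja : ((j : ℝ) - 1) * d ≤ -δ - w := by
      have hjc : (j : ℝ) - 1 = (⌊(-δ - w) / d⌋₊ : ℝ) := by rw [hj]; push_cast; ring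
      rw [hjc]
      exact (le_div_iff₀ hdpos).1 h7
    have hjb : -δ - w < j * d := by
      have h8 : (-δ - w) / d < j := by
        rw [hj]; push_cast
        linarith [Nat.lt_floor_add_one ((-δ - w) / d)]
      have h9 : ((-δ - w) / d) * d = -δ - w := by field_simp
      nlinarith [h8, hdpos]
    have habs' : d < δ := by rw [abs_of_pos hdpos] at habs; exact habs
    have hval : w + j * d ∈ Set.Ioc (-δ) (0:ℝ) := by
      constructor
      · linarith
      · nlinarith [hja]
    refine ⟨j * m, ?_, ?_⟩
    · have hjle : j ≤ ⌈L / |d|⌉₊ + 1 := by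
        have h1 : (-δ - w) / d ≤ L / d := by
          gcongr
          linarith [hwc.1]
        have h2 : ⌊(-δ - w) / d⌋₊ ≤ ⌈L / |d|⌉₊ := by
          rw [abs_of_pos hdpos]
          exact le_trans (Nat.floor_le_floor h1) (Nat.floor_le_ceil _)
        omega
      gcongr
    · rw [hkey j]
      have : rho L (w + j * d) = w + j * d := by
        apply rho_eq_self hL
        exact ⟨by linarith [hval.1, hδL], hval.2⟩
      rw [this]
      exact hval.1





/-- The general orbit with step sequences `u` (down steps) and `v` (up steps). -/
def orb (u v : ℕ → ℝ) (s : ℝ) : ℕ → ℝ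
  | 0 => s
  | k + 1 => if 0 < orb u v s k then orb u v s k - u k else orb u v s k + v k

lemma orb_add (u v : ℕ → ℝ) (s : ℝ) (j k : ℕ) :
    orb u v s (j + k) = orb (fun i => u (j + i)) (fun i => v (j + i)) (orb u v s j) k := by
  induction k with
  | zero => rfl
  | succ k ih =>
      show orb u v s ((j + k) + 1) = _
      rw [orb, ih]
      rfl

/-- The exact orbit with constant steps `d` (down) and `e` (up). -/
def exOrb (d e : ℝ) (s : ℝ) : ℕ → ℝ := orb (fun _ => d) (fun _ => e) s

lemma exOrb_add (d e s : ℝ) (j k : ℕ) :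
    exOrb d e s (j + k) = exOrb d e (exOrb d e s j) k :=
  orb_add _ _ s j k

lemma exOrb_succ_pos {d e s : ℝ} (h : 0 < s) : exOrb d e s 1 = s - d := by
  show (if 0 < exOrb d e s 0 then _ - _ else _ + _) = s - d
  simp only [exOrb, orb]
  exact if_pos h

lemma exOrb_succ_nonpos {d e s : ℝ} (h : ¬ 0 < s) : exOrb d e s 1 = s + e := by
  simp only [exOrb, orb]
  exact if_neg h

/-- From a positive point `s ≤ d * n`, the exact orbit reaches `rho d s ∈ (-d, 0]`
within `n` steps. -/
lemma reach_neg (d e : ℝ) (hd : 0 < d) :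
    ∀ n : ℕ, ∀ s : ℝ, 0 < s → s ≤ d * n → ∃ k ≤ n, exOrb d e s k = rho d s := by
  intro n
  induction n with
  | zero => intro s hs hsn; simp at hsn; linarith
  | succ n ih =>
      intro s hs hsn
      rcases le_or_gt (s - d) 0 with h1 | h1
      · refine ⟨1, by omega, ?_⟩
        rw [exOrb_succ_pos hs]
        exact (rho_eq_of_mem hd (n := 1) (by push_cast; ring) ⟨by linarith, h1⟩).symm
      · obtain ⟨k, hk, hke⟩ := ih (s - d) h1 (by push_cast at hsn ⊢; linarith)
        refine ⟨1 + k, by omega, ?_⟩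
        rw [exOrb_add, exOrb_succ_pos hs, hke]
        exact (rho_congr hd (n := 1) (by push_cast; ring)).symm

/-- From a nonpositive point `s ≥ -(e * n)`, the exact orbit reaches a point in `(0, e]`
within `n + 1` steps. -/
lemma reach_pos (d e : ℝ) (he : 0 < e) :
    ∀ n : ℕ, ∀ s : ℝ, ¬ 0 < s → -(e * n) ≤ s →
      ∃ k ≤ n + 1, 0 < exOrb d e s k ∧ exOrb d e s k ≤ e := by
  intro n
  induction n with
  | zero =>
      intro s hs hsn
      push_neg at hs
      simp at hsn
      refine ⟨1, le_refl 1, ?_, ?_⟩ <;> rw [exOrb_succ_nonpos (by linarith)] <;> nlinarith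
  | succ n ih =>
      intro s hs hsn
      push_neg at hs
      rcases lt_or_ge 0 (s + e) with h1 | h1
      · refine ⟨1, by omega, ?_, ?_⟩ <;> rw [exOrb_succ_nonpos (by linarith)] <;> linarith
      · obtain ⟨k, hk, hke⟩ := ih (s + e) (by linarith) (by push_cast at hsn ⊢; linarith)
        refine ⟨1 + k, by omega, ?_⟩
        rw [exOrb_add, exOrb_succ_nonpos (by linarith)]
        exact hke

/-- From any point in `[-K₃, K₃]`, the exact orbit reaches the window `(-d, 0]`. -/
lemma reach_window (d e K3 : ℝ) (hd : 0 < d) (he : 0 < e) (n3 : ℕ)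
    (hdn : K3 ≤ d * n3) (hen : K3 ≤ e * n3) (heK : e ≤ K3) :
    ∀ s : ℝ, |s| ≤ K3 → ∃ k ≤ 2 * n3 + 1, exOrb d e s k ∈ Set.Ioc (-d) 0 := by
  intro s hs
  rw [abs_le] at hs
  rcases lt_or_ge 0 s with h1 | h1
  · obtain ⟨k, hk, hke⟩ := reach_neg d e hd n3 s h1 (le_trans hs.2 hdn)
    exact ⟨k, by omega, hke ▸ rho_mem_Ioc hd s⟩
  · obtain ⟨k, hk, hk1, hk2⟩ := reach_pos d e he n3 s (by linarith) (by linarith)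
    obtain ⟨k', hk', hke'⟩ := reach_neg d e hd n3 (exOrb d e s k) hk1
      (by linarith [le_trans hk2 heK, hdn])
    refine ⟨k + k', by omega, ?_⟩
    rw [exOrb_add, hke']
    exact rho_mem_Ioc hd _

/-- One return cycle from the window `(-d, 0]`: the orbit comes back to the window at the
point `rho d (r + e)`, within `n3 + 1` steps, provided `d ≤ e ≤ d * n3`. -/
lemma cycle (d e : ℝ) (hd : 0 < d) (hde : d ≤ e) (n3 : ℕ) (hen : e ≤ d * n3) :
    ∀ r ∈ Set.Ioc (-d) (0:ℝ), ∃ j, 1 ≤ j ∧ j ≤ n3 + 1 ∧ exOrb d e r j = rho d (r + e) := by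
  intro r hr
  have h1 : exOrb d e r 1 = r + e := exOrb_succ_nonpos (by linarith [hr.2])
  have h2 : 0 < r + e := by linarith [hr.1]
  obtain ⟨k, hk, hke⟩ := reach_neg d e hd n3 (r + e) h2 (by linarith [hr.2])
  refine ⟨1 + k, by omega, by omega, ?_⟩
  rw [exOrb_add, h1, hke]

/-- Exact orbit density: from any starting point in `[-K3, K3]` the exact orbit with irrational
step ratio reaches `(-δ, δ)` within a uniform number of steps. -/
lemma exact_dense (d e K3 : ℝ) (hd : 0 < d) (hde : d ≤ e) (heK : e ≤ K3)
    (hirr : ∀ n : ℕ, 0 < n → ∀ m : ℤ, (n : ℝ) * e ≠ d * m) (δ : ℝ) (hδ : 0 < δ) :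
    ∃ M : ℕ, ∀ s : ℝ, |s| ≤ K3 → ∃ k ≤ M, |exOrb d e s k| < δ := by
  have he : 0 < e := lt_of_lt_of_le hd hde
  -- choose n3 with K3 ≤ d * n3
  obtain ⟨n3, hn3⟩ : ∃ n3 : ℕ, K3 ≤ d * n3 := by
    obtain ⟨n, hn⟩ := exists_nat_ge (K3 / d)
    exact ⟨n, by rw [div_le_iff₀ hd] at hn; linarith⟩
  have hdn : K3 ≤ d * n3 := hn3
  have hen : K3 ≤ e * n3 := le_trans hn3 (mul_le_mul_of_nonneg_right hde (Nat.cast_nonneg n3))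
  obtain ⟨M1, hM1⟩ := rot_dense hd hirr hδ
  refine ⟨(2 * n3 + 1) + M1 * (n3 + 1), fun s hs => ?_⟩
  obtain ⟨k0, hk0, hr0⟩ := reach_window d e K3 hd he n3 hdn hen heK s hs
  set r0 : ℝ := exOrb d e s k0 with hr0def
  -- iterate the cycle: at time `t n ≤ k0 + n * (n3 + 1)` the orbit is at `rho d (r0 + n * e)`
  have hiter : ∀ n : ℕ, ∃ t ≤ k0 + n * (n3 + 1),
      exOrb d e s t = rho d (r0 + n * e) := by
    intro n
    induction n with
    | zero =>
        refine ⟨k0, by omega, ?_⟩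
        simp only [Nat.cast_zero, zero_mul, add_zero]
        rw [rho_eq_self hd hr0]
    | succ n ih =>
        obtain ⟨t, ht, hte⟩ := ih
        have hmem : rho d (r0 + n * e) ∈ Set.Ioc (-d) (0:ℝ) := rho_mem_Ioc hd _
        obtain ⟨j, hj1, hj2, hje⟩ := cycle d e hd hde n3 (le_trans heK hdn) _ hmem
        refine ⟨t + j, by rw [Nat.succ_mul]; omega, ?_⟩
        rw [exOrb_add, hte, hje]
        apply rho_congr hd (n := -⌈(r0 + n * e) / d⌉)
        have : rho d (r0 + n*e) = (r0 + n*e) - d * ⌈(r0 + n*e)/d⌉ := rfl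
        push_cast
        rw [this]
        ring
  obtain ⟨n, hn, hrot⟩ := hM1 r0
  obtain ⟨t, ht, hte⟩ := hiter n
  refine ⟨t, by push_cast; nlinarith [ht, hn], ?_⟩
  rw [hte]
  have hmem := rho_mem_Ioc hd (r0 + n * e)
  rw [abs_lt]
  exact ⟨hrot, lt_of_le_of_lt hmem.2 hδ⟩

open Classical in
/-- Perturbation: if the exact orbit reaches `(-ε/2, ε/2)` within `M` steps, then any orbit with
steps within `ε/(2(M+1))` of the exact ones reaches `(-ε, ε)` within `M` steps. -/
lemma perturb (d e : ℝ) (M : ℕ) (ε : ℝ) (hε : 0 < ε) (s : ℝ)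
    (hE : ∃ k ≤ M, |exOrb d e s k| < ε / 2)
    (u v : ℕ → ℝ) (hu : ∀ i < M, |u i - d| < ε / (2 * (M + 1)) ∧ |v i - e| < ε / (2 * (M + 1))) :
    ∃ k ≤ M, |orb u v s k| < ε := by
  set η : ℝ := ε / (2 * (M + 1)) with hη
  have hη0 : 0 < η := by positivity
  have hMη : (M : ℝ) * η < ε / 2 := by
    have hident : ((M:ℝ) + 1) * η = ε / 2 := by
      rw [hη]; field_simp
    nlinarith [hη0]
  have hP : ∃ k, k ≤ M ∧ |exOrb d e s k| < ε / 2 := by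
    obtain ⟨k, h1, h2⟩ := hE; exact ⟨k, h1, h2⟩
  set K := Nat.find hP with hK
  obtain ⟨hKM, hKval⟩ := Nat.find_spec hP
  have hmin : ∀ k < K, ε / 2 ≤ |exOrb d e s k| := by
    intro k hk
    have := Nat.find_min hP hk
    push_neg at this
    exact this (by omega)
  have hdiff : ∀ k ≤ K, |orb u v s k - exOrb d e s k| ≤ k * η := by
    intro k
    induction k with
    | zero => intro _; simp [orb, exOrb]
    | succ k ih =>
        intro hk1
        have hkK : k < K := by omega
        have hd1 := ih (by omega)
        have hlow := hmin k hkK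
        have hkM : k < M := by omega
        have hkη : (k:ℝ) * η < ε / 2 := by
          calc (k:ℝ) * η ≤ M * η := by
                apply mul_le_mul_of_nonneg_right _ hη0.le
                exact_mod_cast hkM.le
            _ < ε / 2 := hMη
    -- signs agree
        have hsign : (0 < orb u v s k) ↔ (0 < exOrb d e s k) := by
          rcases abs_cases (exOrb d e s k) with ⟨he1, he2⟩ | ⟨he1, he2⟩
          · constructor
            · intro _; nlinarith [hlow, abs_le.1 hd1]
            · intro h; have := abs_le.1 hd1; nlinarith [hlow]
          · constructor
            · intro h; have := abs_le.1 hd1; nlinarith [hlow]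
            · intro h; nlinarith [hlow]
        rcases lt_or_ge 0 (exOrb d e s k) with hpos | hneg
        · have horb : 0 < orb u v s k := hsign.2 hpos
          show |(if 0 < orb u v s k then orb u v s k - u k else _) -
            (if 0 < exOrb d e s k then exOrb d e s k - d else _)| ≤ _
          rw [if_pos horb, if_pos hpos]
          have := (hu k hkM).1
          have habs : |orb u v s k - u k - (exOrb d e s k - d)| ≤
              |orb u v s k - exOrb d e s k| + |u k - d| := by
            have := abs_sub (orb u v s k - exOrb d e s k) (u k - d)
            calc |orb u v s k - u k - (exOrb d e s k - d)|
                = |(orb u v s k - exOrb d e s k) - (u k - d)| := by ring_nf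
              _ ≤ _ := abs_sub _ _
          push_cast
          nlinarith [habs, hd1, (hu k hkM).1]
        · have horb : ¬ 0 < orb u v s k := fun h => absurd (hsign.1 h) (not_lt.2 hneg)
          show |(if 0 < orb u v s k then _ else orb u v s k + v k) -
            (if 0 < exOrb d e s k then _ else exOrb d e s k + e)| ≤ _
          rw [if_neg horb, if_neg (not_lt.2 hneg)]
          have habs : |orb u v s k + v k - (exOrb d e s k + e)| ≤
              |orb u v s k - exOrb d e s k| + |v k - e| := by
            calc |orb u v s k + v k - (exOrb d e s k + e)|
                = |(orb u v s k - exOrb d e s k) + (v k - e)| := by ring_nf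
              _ ≤ _ := abs_add_le _ _
          push_cast
          nlinarith [habs, hd1, (hu k hkM).2]
  refine ⟨K, hKM, ?_⟩
  have h1 := hdiff K (le_refl K)
  have h2 : (K:ℝ) * η ≤ M * η := by
    apply mul_le_mul_of_nonneg_right _ hη0.le
    exact_mod_cast hKM
  calc |orb u v s K| ≤ |exOrb d e s K| + |orb u v s K - exOrb d e s K| := by
        have := abs_add_le (exOrb d e s K) (orb u v s K - exOrb d e s K)
        simpa [add_sub_cancel] using this
    _ < ε / 2 + ε / 2 := by nlinarith [hKval, h1, h2, hMη]
    _ = ε := by ring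

lemma irr_aux {xb yb : ℝ} (hx : 0 < xb) (hy : 0 < yb) (hirr : Irrational (xb / yb)) :
    ∀ n : ℕ, 0 < n → ∀ m : ℤ, (n : ℝ) * yb ≠ xb * m := by
  intro n hn m heq
  have hm : (0:ℝ) < xb * m := heq ▸ by positivity
  have hm0 : (0:ℝ) < m := by nlinarith
  apply hirr
  refine ⟨(n : ℚ) / (m : ℚ), ?_⟩
  have hmne : (m : ℝ) ≠ 0 := ne_of_gt hm0
  push_cast
  rw [div_eq_div_iff hmne (ne_of_gt hy)]
  linarith

/-- Swapped-role irrationality. -/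
lemma irr_inv {xb yb : ℝ} (hx : xb ≠ 0) (hirr : Irrational (xb / yb)) :
    Irrational (yb / xb) := by
  intro ⟨q, hq⟩
  have hy : yb ≠ 0 := by
    intro h
    apply hirr
    exact ⟨0, by simp [h]⟩
  apply hirr
  refine ⟨q⁻¹, ?_⟩
  rw [Rat.cast_inv, hq]  -- q = yb/xb so q⁻¹ = xb/yb
  rw [inv_div]

/-- Main deterministic lemma, case `xb ≤ yb`. -/
lemma D_le (K1 K3 xb yb : ℝ) (hK1 : 0 < K1)
    (hx : xb ∈ Set.Icc K1 K3) (hy : yb ∈ Set.Icc K1 K3) (hxy : xb ≤ yb)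
    (hirr : Irrational (xb / yb)) (ε : ℝ) (hε : 0 < ε) :
    ∃ N : ℕ, ∃ η : ℝ, 1 ≤ N ∧ 0 < η ∧
      ∀ s : ℝ, ∀ u v : ℕ → ℝ, |s| ≤ K3 →
        (∀ i < N, |u i - xb| < η ∧ |v i - yb| < η) →
        ∃ k ≤ N, |orb u v s k| < ε := by
  have hx0 : 0 < xb := lt_of_lt_of_le hK1 hx.1
  have hy0 : 0 < yb := lt_of_lt_of_le hK1 hy.1
  obtain ⟨M, hM⟩ := exact_dense xb yb K3 hx0 hxy hy.2
    (irr_aux hx0 hy0 hirr) (ε / 2) (by positivity)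
  refine ⟨M + 1, ε / (2 * (M + 1)), by omega, by positivity, ?_⟩
  intro s u v hs hu
  obtain ⟨k, hk, hval⟩ := perturb xb yb M ε hε s (hM s hs) u v (fun i hi => hu i (by omega))
  exact ⟨k, by omega, hval⟩

/-- Main deterministic lemma (general). -/
lemma D_main (K1 K3 xb yb : ℝ) (hK1 : 0 < K1)
    (hx : xb ∈ Set.Icc K1 K3) (hy : yb ∈ Set.Icc K1 K3)
    (hirr : Irrational (xb / yb)) (ε : ℝ) (hε : 0 < ε) :
    ∃ N : ℕ, ∃ η : ℝ, 1 ≤ N ∧ 0 < η ∧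
      ∀ s : ℝ, ∀ u v : ℕ → ℝ, |s| ≤ K3 →
        (∀ i < N, |u i - xb| < η ∧ |v i - yb| < η) →
        ∃ k ≤ N, |orb u v s k| < ε := by
  rcases le_or_gt xb yb with hxy | hxy
  · exact D_le K1 K3 xb yb hK1 hx hy hxy hirr ε hε
  · have hx0 : 0 < xb := lt_of_lt_of_le hK1 hx.1
    obtain ⟨N, η, hN, hη, hD⟩ := D_le K1 K3 yb xb hK1 hy hx hxy.le (irr_inv (ne_of_gt hx0) hirr) ε hε
    refine ⟨N, η, hN, hη, ?_⟩
    intro s u v hs hu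
    obtain ⟨k, hk, hval⟩ := hD (-s) v u (by rwa [abs_neg]) (fun i hi => ⟨(hu i hi).2, (hu i hi).1⟩)
    by_cases hzero : ∃ j ≤ k, orb u v s j = 0
    · obtain ⟨j, hj, hj0⟩ := hzero
      exact ⟨j, le_trans hj hk, by rw [hj0]; simpa using hε⟩
    · push_neg at hzero
      have hbridge : ∀ j ≤ k, orb v u (-s) j = - orb u v s j := by
        intro j
        induction j with
        | zero => intro _; simp [orb]
        | succ j ih =>
            intro hj1
            have hne := hzero j (by omega)
            have heq := ih (by omega)
            show (if 0 < orb v u (-s) j then orb v u (-s) j - v j else orb v u (-s) j + u j) = _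
            show _ = - (if 0 < orb u v s j then orb u v s j - u j else orb u v s j + v j)
            rw [heq]
            rcases lt_or_ge 0 (orb u v s j) with hpos | hle
            · rw [if_neg (by linarith), if_pos hpos]
              ring
            · have hlt : orb u v s j < 0 := lt_of_le_of_ne hle hne
              rw [if_pos (by linarith), if_neg (by linarith)]
              ring
      refine ⟨k, hk, ?_⟩
      rw [← abs_neg, ← hbridge k (le_refl k)]
      exact hval

/-- Absorption (staying): once in `[-K3, K3]`, the orbit stays there, if all steps
are in `[K1, K3]`. -/
lemma orb_stay (K1 K3 : ℝ) (hK1 : 0 < K1) (h13 : K1 ≤ K3) (u v : ℕ → ℝ)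
    (hs : ∀ i, u i ∈ Set.Icc K1 K3 ∧ v i ∈ Set.Icc K1 K3) :
    ∀ s : ℝ, |s| ≤ K3 → ∀ k, |orb u v s k| ≤ K3 := by
  intro s hs0 k
  induction k with
  | zero => exact hs0
  | succ k ih =>
      have hik := (hs k).1
      have hvk := (hs k).2
      rw [Set.mem_Icc] at hik hvk
      rw [abs_le] at ih ⊢
      have hrfl : orb u v s (k + 1) =
          if 0 < orb u v s k then orb u v s k - u k else orb u v s k + v k := rfl
      rw [hrfl]
      rcases lt_or_ge 0 (orb u v s k) with hpos | hle
      · rw [if_pos hpos]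
        constructor <;> [nlinarith [hik.2]; nlinarith [hik.1, hK1]]
      · rw [if_neg (not_lt.2 hle)]
        constructor <;> [nlinarith [hvk.1, hK1]; nlinarith [hvk.2]]

lemma orb_reach (K1 K3 : ℝ) (hK1 : 0 < K1) (h13 : K1 ≤ K3) :
    ∀ n : ℕ, ∀ s : ℝ, ∀ u v : ℕ → ℝ,
      (∀ i, u i ∈ Set.Icc K1 K3 ∧ v i ∈ Set.Icc K1 K3) →
      |s| ≤ K3 + K1 * n → ∃ k, |orb u v s k| ≤ K3 := by
  intro n
  induction n with
  | zero => intro s u v _ h; exact ⟨0, by simpa [orb] using h⟩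
  | succ n ih =>
      intro s u v hsteps h
      rcases le_or_gt (|s|) (K3 + K1 * n) with h1 | h1
      · exact ih s u v hsteps h1
      · have hstep : |orb u v s 1| ≤ K3 + K1 * n := by
          have hu0 := (hsteps 0).1
          have hv0 := (hsteps 0).2
          rcases lt_or_ge 0 s with hpos | hneg
          · have habs : |s| = s := abs_of_pos hpos
            show |if 0 < orb u v s 0 then orb u v s 0 - u 0 else _| ≤ _
            rw [show orb u v s 0 = s from rfl, if_pos hpos, abs_le]
            rw [habs] at h h1
            push_cast at h ⊢
            constructor
            · nlinarith [hu0.2, hK1, h1]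
            · nlinarith [hu0.1, h]
          · have habs : |s| = -s := abs_of_nonpos hneg
            show |if 0 < orb u v s 0 then _ else orb u v s 0 + v 0| ≤ _
            rw [show orb u v s 0 = s from rfl, if_neg (not_lt.2 hneg), abs_le]
            rw [habs] at h h1
            push_cast at h ⊢
            constructor
            · nlinarith [hv0.1, h]
            · nlinarith [hv0.2, hK1, h1]
        obtain ⟨k, hk⟩ := ih (orb u v s 1) (fun i => u (1 + i)) (fun i => v (1 + i))
          (fun i => hsteps (1 + i)) hstep
        refine ⟨1 + k, ?_⟩
        rw [orb_add]
        exact hk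



open MeasureTheory ProbabilityTheory Filter
open scoped ENNReal





lemma schelling_eq_orb {Ω : Type} (ζm ζp : ℕ → Ω → ℝ) (x : ℝ) (ω : Ω) (k : ℕ) :
    schelling ζm ζp x ω k = orb (fun i => ζm i ω) (fun i => ζp i ω) x k := by
  induction k with
  | zero => rfl
  | succ k ih => rw [schelling, orb, ih]

/-- The support characterization forces `S` to be closed. -/
lemma S_closed {Ω : Type} [MeasureSpace Ω] (S : Set ℝ) (f : Ω → ℝ)
    (hsupp : ∀ x : ℝ, x ∈ S ↔ ∀ ε > (0 : ℝ), 0 < (ℙ : Measure Ω) {ω | |f ω - x| < ε}) :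
    IsClosed S := by
  rw [← isOpen_compl_iff, isOpen_iff_forall_mem_open]
  intro x hx
  rw [Set.mem_compl_iff, hsupp] at hx
  push_neg at hx
  obtain ⟨ε, hε, hμ⟩ := hx
  refine ⟨Metric.ball x (ε / 2), ?_, Metric.isOpen_ball, Metric.mem_ball_self (by linarith)⟩
  intro y hy
  rw [Set.mem_compl_iff, hsupp]
  push_neg
  refine ⟨ε / 2, by linarith, ?_⟩
  refine le_trans (measure_mono ?_) hμ
  intro ω hω
  simp only [Set.mem_setOf_eq] at hω ⊢
  have hyx : |y - x| < ε / 2 := by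
    have := hy
    rw [Metric.mem_ball, Real.dist_eq] at this
    exact this
  calc |f ω - x| = |(f ω - y) + (y - x)| := by ring_nf
    _ ≤ |f ω - y| + |y - x| := abs_add_le _ _
    _ < ε / 2 + ε / 2 := by linarith
    _ = ε := by ring

/-- Almost surely, an increment with the same law as `g` lies in the support set `S`. -/
lemma ae_mem_S {Ω : Type} [MeasureSpace Ω] (S : Set ℝ) (f g : Ω → ℝ)
    (hf : Measurable f) (hg : Measurable g)
    (hid : Measure.map f (ℙ : Measure Ω) = Measure.map g ℙ)
    (hsupp : ∀ x : ℝ, x ∈ S ↔ ∀ ε > (0 : ℝ), 0 < (ℙ : Measure Ω) {ω | |g ω - x| < ε}) :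
    ∀ᵐ ω ∂(ℙ : Measure Ω), f ω ∈ S := by
  have hSc : IsClosed S := S_closed S g hsupp
  have hnull : Measure.map g (ℙ : Measure Ω) Sᶜ = 0 := by
    apply measure_null_of_locally_null
    intro x hx
    rw [Set.mem_compl_iff, hsupp] at hx
    push_neg at hx
    obtain ⟨ε, hε, hμ⟩ := hx
    refine ⟨Metric.ball x ε, mem_nhdsWithin_of_mem_nhds (Metric.ball_mem_nhds x hε), ?_⟩
    rw [Measure.map_apply hg measurableSet_ball]
    have hset : g ⁻¹' Metric.ball x ε = {ω | |g ω - x| < ε} := by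
      ext ω; simp [Metric.mem_ball, Real.dist_eq]
    rw [hset]
    exact le_zero_iff.1 hμ
  have hnull2 : (ℙ : Measure Ω) (f ⁻¹' Sᶜ) = 0 := by
    rw [← Measure.map_apply hf hSc.measurableSet.compl, hid, hnull]
  rw [ae_iff]
  exact hnull2

/-- Lemma (Markov recurrence), item ii: if the increments `ζ⁻, ζ⁺` are two independent
i.i.d. sequences whose common laws both have support exactly a set `S ⊆ [K₁, K₃]`
(with `0 < K₁ ≤ K₃`) containing two points with irrational ratio, then from every starting
point `x ∈ ℝ` the process visits every neighbourhood of `0` infinitely often almost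
surely. -/
theorem schelling_visits_nhds_zero_io_of_irrational
    {Ω : Type} [MeasureSpace Ω] [IsProbabilityMeasure (ℙ : Measure Ω)]
    (K₁ K₃ : ℝ) (hK₁ : 0 < K₁) (hK₁₃ : K₁ ≤ K₃)
    (S : Set ℝ) (hSsub : S ⊆ Set.Icc K₁ K₃)
    (xb yb : ℝ) (hxb : xb ∈ S) (hyb : yb ∈ S) (hirr : Irrational (xb / yb))
    (ζm ζp : ℕ → Ω → ℝ)
    (hmm : ∀ k, Measurable (ζm k)) (hmp : ∀ k, Measurable (ζp k))
    (hindep : iIndepFun (Sum.elim ζm ζp) ℙ)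
    (hidm : ∀ k, Measure.map (ζm k) (ℙ : Measure Ω) = Measure.map (ζm 0) ℙ)
    (hidp : ∀ k, Measure.map (ζp k) (ℙ : Measure Ω) = Measure.map (ζp 0) ℙ)
    (hsuppm : ∀ x : ℝ, x ∈ S ↔
      ∀ ε > (0 : ℝ), 0 < (ℙ : Measure Ω) {ω | |ζm 0 ω - x| < ε})
    (hsuppp : ∀ x : ℝ, x ∈ S ↔
      ∀ ε > (0 : ℝ), 0 < (ℙ : Measure Ω) {ω | |ζp 0 ω - x| < ε}) :
    ∀ x : ℝ, ∀ ε > (0 : ℝ),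
      ∀ᵐ ω ∂(ℙ : Measure Ω), ∀ m : ℕ, ∃ k : ℕ, m ≤ k ∧ |schelling ζm ζp x ω k| < ε := by
  classical
  intro x ε hε
  obtain ⟨N, η, hN1, hη, hD⟩ := D_main K₁ K₃ xb yb hK₁ (hSsub hxb) (hSsub hyb) hirr ε hε
  -- almost sure bounds on the increments
  have hbound : ∀ᵐ ω ∂(ℙ : Measure Ω), ∀ k,
      ζm k ω ∈ Set.Icc K₁ K₃ ∧ ζp k ω ∈ Set.Icc K₁ K₃ := by
    have h1 : ∀ᵐ ω ∂(ℙ : Measure Ω), ∀ k, ζm k ω ∈ S :=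
      ae_all_iff.2 fun k => ae_mem_S S (ζm k) (ζm 0) (hmm k) (hmm 0) (hidm k) hsuppm
    have h2 : ∀ᵐ ω ∂(ℙ : Measure Ω), ∀ k, ζp k ω ∈ S :=
      ae_all_iff.2 fun k => ae_mem_S S (ζp k) (ζp 0) (hmp k) (hmp 0) (hidp k) hsuppp
    filter_upwards [h1, h2] with ω hm hp k
    exact ⟨hSsub (hm k), hSsub (hp k)⟩
  -- the block events
  set B : ℕ ⊕ ℕ → Set Ω :=
    Sum.elim (fun k => ζm k ⁻¹' Metric.ball xb η) (fun k => ζp k ⁻¹' Metric.ball yb η) with hB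
  set T : ℕ → Finset (ℕ ⊕ ℕ) := fun j =>
    ((Finset.range N).image fun i => Sum.inl (N * j + i)) ∪
    ((Finset.range N).image fun i => Sum.inr (N * j + i)) with hT
  set A : ℕ → Set Ω := fun j => ⋂ t ∈ T j, B t with hA
  have hBmeas : ∀ t, MeasurableSet (B t) := by
    rintro (k | k)
    · exact (hmm k) measurableSet_ball
    · exact (hmp k) measurableSet_ball
  have hAmeas : ∀ j, MeasurableSet (A j) :=
    fun j => Finset.measurableSet_biInter _ (fun t _ => hBmeas t)
  have hBcomap : ∀ t, MeasurableSet[MeasurableSpace.comap (Sum.elim ζm ζp t)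
      Real.measurableSpace] (B t) := by
    rintro (k | k)
    · exact ⟨Metric.ball xb η, measurableSet_ball, rfl⟩
    · exact ⟨Metric.ball yb η, measurableSet_ball, rfl⟩
  have hmeasInter : ∀ S' : Finset (ℕ ⊕ ℕ), (ℙ : Measure Ω) (⋂ t ∈ S', B t) = ∏ t ∈ S', ℙ (B t) :=
    fun S' => hindep.meas_biInter (fun t _ => hBcomap t)
  have hblk : ∀ j i : ℕ, i < N → (N * j + i) / N = j := by
    intro j i hi
    rw [Nat.mul_add_div (by omega), Nat.div_eq_of_lt hi, add_zero]
  have hmemT : ∀ (t : ℕ ⊕ ℕ) (j : ℕ), t ∈ T j ↔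
      (∃ i < N, t = Sum.inl (N * j + i)) ∨ (∃ i < N, t = Sum.inr (N * j + i)) := by
    intro t j
    simp only [hT, Finset.mem_union, Finset.mem_image, Finset.mem_range]
    constructor
    · rintro (⟨i, hi, rfl⟩ | ⟨i, hi, rfl⟩)
      · exact Or.inl ⟨i, hi, rfl⟩
      · exact Or.inr ⟨i, hi, rfl⟩
    · rintro (⟨i, hi, rfl⟩ | ⟨i, hi, rfl⟩)
      · exact Or.inl ⟨i, hi, rfl⟩
      · exact Or.inr ⟨i, hi, rfl⟩
  have hTdisj : ∀ j j' : ℕ, j ≠ j' → Disjoint (T j) (T j') := by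
    intro j j' hne
    rw [Finset.disjoint_left]
    intro t ht ht'
    rw [hmemT] at ht ht'
    apply hne
    rcases ht with ⟨i, hi, rfl⟩ | ⟨i, hi, rfl⟩ <;>
      rcases ht' with ⟨i', hi', he⟩ | ⟨i', hi', he⟩ <;>
        first
        | (simp only [Sum.inl.injEq, Sum.inr.injEq] at he
           rw [← hblk j i hi, he, hblk j' i' hi'])
        | exact absurd he (by simp)
  -- independence of the block events
  have hiIndepA : iIndepSet A (ℙ : Measure Ω) := by
    rw [iIndepSet_iff_meas_biInter hAmeas]
    intro J
    have hset : (⋂ j ∈ J, A j) = ⋂ t ∈ J.biUnion T, B t := by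
      rw [Finset.set_biInter_biUnion]
    rw [hset, hmeasInter, Finset.prod_biUnion
      (fun j _ j' _ hne => hTdisj j j' hne)]
    exact Finset.prod_congr rfl fun j _ => (hmeasInter (T j)).symm
  -- value of ℙ (A j)
  have hmval : ∀ k, (ℙ : Measure Ω) (ζm k ⁻¹' Metric.ball xb η) = ℙ (ζm 0 ⁻¹' Metric.ball xb η) := by
    intro k
    rw [← Measure.map_apply (hmm k) measurableSet_ball, hidm k,
      Measure.map_apply (hmm 0) measurableSet_ball]
  have hpval : ∀ k, (ℙ : Measure Ω) (ζp k ⁻¹' Metric.ball yb η) = ℙ (ζp 0 ⁻¹' Metric.ball yb η) := by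
    intro k
    rw [← Measure.map_apply (hmp k) measurableSet_ball, hidp k,
      Measure.map_apply (hmp 0) measurableSet_ball]
  have hAval : ∀ j, (ℙ : Measure Ω) (A j) =
      (ℙ (ζm 0 ⁻¹' Metric.ball xb η)) ^ N * (ℙ (ζp 0 ⁻¹' Metric.ball yb η)) ^ N := by
    intro j
    have h1 : (ℙ : Measure Ω) (A j) = ∏ t ∈ T j, ℙ (B t) := hmeasInter (T j)
    rw [h1, hT]
    rw [Finset.prod_union (by
      rw [Finset.disjoint_left]
      rintro t ht ht'
      simp only [Finset.mem_image, Finset.mem_range] at ht ht'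
      obtain ⟨i, _, rfl⟩ := ht
      obtain ⟨i', _, he⟩ := ht'
      exact absurd he (by simp))]
    rw [Finset.prod_image (by intro a _ b _ h; simpa using h),
        Finset.prod_image (by intro a _ b _ h; simpa using h)]
    simp only [hB, Sum.elim_inl, Sum.elim_inr]
    rw [Finset.prod_congr rfl (fun i _ => hmval (N * j + i)),
        Finset.prod_congr rfl (fun i _ => hpval (N * j + i))]
    rw [Finset.prod_const, Finset.prod_const, Finset.card_range]
  -- positivity
  have hpm : (ℙ : Measure Ω) (ζm 0 ⁻¹' Metric.ball xb η) ≠ 0 := by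
    have := (hsuppm xb).1 hxb η hη
    have hset : {ω | |ζm 0 ω - xb| < η} = ζm 0 ⁻¹' Metric.ball xb η := by
      ext ω; simp [Metric.mem_ball, Real.dist_eq]
    rw [hset] at this
    exact ne_of_gt this
  have hpp : (ℙ : Measure Ω) (ζp 0 ⁻¹' Metric.ball yb η) ≠ 0 := by
    have := (hsuppp yb).1 hyb η hη
    have hset : {ω | |ζp 0 ω - yb| < η} = ζp 0 ⁻¹' Metric.ball yb η := by
      ext ω; simp [Metric.mem_ball, Real.dist_eq]
    rw [hset] at this
    exact ne_of_gt this
  -- Borel-Cantelli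
  have htsum : (∑' j, (ℙ : Measure Ω) (A j)) = ∞ := by
    rw [tsum_congr hAval]
    exact ENNReal.tsum_const_eq_top_of_ne_zero
      (mul_ne_zero (pow_ne_zero _ hpm) (pow_ne_zero _ hpp))
  have hone : (ℙ : Measure Ω) (limsup A atTop) = 1 :=
    measure_limsup_eq_one hAmeas hiIndepA htsum
  have haelim : ∀ᵐ ω ∂(ℙ : Measure Ω), ω ∈ limsup A atTop := by
    rw [ae_iff]
    have : {a : Ω | ¬ a ∈ limsup A atTop} = (limsup A atTop)ᶜ := rfl
    rw [this, measure_compl (MeasurableSet.measurableSet_limsup hAmeas) (measure_ne_top _ _), hone,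
      measure_univ, tsub_self]
  -- final assembly
  filter_upwards [hbound, haelim] with ω hbnd hlim
  intro m
  set u : ℕ → ℝ := fun i => ζm i ω with hu
  set v : ℕ → ℝ := fun i => ζp i ω with hv
  have hsteps : ∀ i, u i ∈ Set.Icc K₁ K₃ ∧ v i ∈ Set.Icc K₁ K₃ := hbnd
  obtain ⟨n0, hn0⟩ : ∃ n0 : ℕ, |x| ≤ K₃ + K₁ * n0 := by
    obtain ⟨n, hn⟩ := exists_nat_ge (|x| / K₁)
    refine ⟨n, ?_⟩
    rw [div_le_iff₀ hK₁] at hn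
    nlinarith [hK₁, lt_of_lt_of_le hK₁ hK₁₃]
  obtain ⟨k₀, hk₀⟩ := orb_reach K₁ K₃ hK₁ hK₁₃ n0 x u v hsteps hn0
  rw [mem_limsup_iff_frequently_mem, frequently_atTop] at hlim
  obtain ⟨j, hj, hjA⟩ := hlim (max m k₀)
  have hjm : m ≤ j := le_trans (le_max_left _ _) hj
  have hjk₀ : k₀ ≤ j := le_trans (le_max_right _ _) hj
  have hjN : j ≤ N * j := Nat.le_mul_of_pos_left j (by omega)
  have hstate : |orb u v x (N * j)| ≤ K₃ := by
    have hsplit : N * j = k₀ + (N * j - k₀) := by omega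
    rw [hsplit, orb_add]
    exact orb_stay K₁ K₃ hK₁ hK₁₃ _ _ (fun i => hsteps (k₀ + i)) _ hk₀ _
  have hmemA : ∀ i < N, |u (N * j + i) - xb| < η ∧ |v (N * j + i) - yb| < η := by
    intro i hi
    have h1 : ω ∈ B (Sum.inl (N * j + i)) := by
      have ht : Sum.inl (N * j + i) ∈ T j := (hmemT _ j).2 (Or.inl ⟨i, hi, rfl⟩)
      exact Set.mem_iInter₂.1 hjA _ ht
    have h2 : ω ∈ B (Sum.inr (N * j + i)) := by
      have ht : Sum.inr (N * j + i) ∈ T j := (hmemT _ j).2 (Or.inr ⟨i, hi, rfl⟩)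
      exact Set.mem_iInter₂.1 hjA _ ht
    simp only [hB, Sum.elim_inl, Sum.elim_inr, Set.mem_preimage, Metric.mem_ball,
      Real.dist_eq] at h1 h2
    exact ⟨h1, h2⟩
  obtain ⟨k, hk, hval⟩ := hD (orb u v x (N * j))
    (fun i => u (N * j + i)) (fun i => v (N * j + i)) hstate hmemA
  refine ⟨N * j + k, by omega, ?_⟩
  rw [schelling_eq_orb, orb_add]
  exact hval


end AuxSchelling
end

section
/- Let θ ∈ (0,1) be irrational and define f : ℝ → ℝ by f(w) = w − θ if w > 0 and f(w) = w + 1 if w ≤ 0. Then for every z ∈ (0,1] and every ε > 0 there exists an integer m ≥ 1 such that the m-th iterate satisfies −ε ≤ f^m(z) ≤ 0. (The induced first-return map of f on (0,1] is the rotation by the irrational angle θ, whose orbits are dense.) -/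
open Set

/-- The representative of `x` modulo 1 lying in `(0, 1]`. -/
noncomputable def repIoc (x : ℝ) : ℝ := x - ⌈x⌉ + 1

lemma repIoc_mem (x : ℝ) : repIoc x ∈ Set.Ioc (0 : ℝ) 1 := by
  have h1 : x ≤ ⌈x⌉ := Int.le_ceil x
  have h2 : (⌈x⌉ : ℝ) < x + 1 := Int.ceil_lt_add_one x
  constructor <;> simp only [repIoc] <;> linarith

lemma repIoc_eq_of {x w : ℝ} (hw : w ∈ Set.Ioc (0 : ℝ) 1) (k : ℤ)
    (hk : x - w = (k : ℝ)) : repIoc x = w := by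
  have hx := repIoc_mem x
  have hcast : ((⌈x⌉ - 1 - k : ℤ) : ℝ) = w - repIoc x := by
    push_cast
    simp only [repIoc]
    linarith
  have habs : |((⌈x⌉ - 1 - k : ℤ) : ℝ)| < 1 := by
    rw [hcast, abs_lt]
    obtain ⟨hw1, hw2⟩ := hw
    obtain ⟨hx1, hx2⟩ := hx
    constructor <;> linarith
  have hz0 : (⌈x⌉ - 1 - k : ℤ) = 0 := by
    have h' : |(⌈x⌉ - 1 - k : ℤ)| < 1 := by exact_mod_cast habs
    exact Int.abs_lt_one_iff.mp h' 
  rw [hz0] at hcast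
  simp at hcast
  linarith

lemma repIoc_eq_fract {x : ℝ} (h : 0 < Int.fract x) : repIoc x = Int.fract x := by
  refine repIoc_eq_of ⟨h, le_of_lt (Int.fract_lt_one x)⟩ ⌊x⌋ ?_
  exact Int.self_sub_fract x

/-- Every representative `repIoc (z - nθ)` is reached by some iterate of `f`. -/
lemma orbit_hits_rep (θ : ℝ) (hθ : θ ∈ Set.Ioo (0 : ℝ) 1)
    (f : ℝ → ℝ) (hf : ∀ w : ℝ, f w = if 0 < w then w - θ else w + 1)
    (z : ℝ) (hz : z ∈ Set.Ioc (0 : ℝ) 1) :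
    ∀ n : ℕ, ∃ m : ℕ, f^[m] z = repIoc (z - n * θ) := by
  obtain ⟨hθ0, hθ1⟩ := hθ
  intro n
  induction n with
  | zero =>
    refine ⟨0, ?_⟩
    simp only [Function.iterate_zero, id_eq, Nat.cast_zero, zero_mul, sub_zero]
    exact (repIoc_eq_of hz 0 (by simp)).symm
  | succ n ih =>
    obtain ⟨m, hm⟩ := ih
    set v := repIoc (z - n * θ) with hv
    have hvmem := repIoc_mem (z - n * θ)
    obtain ⟨hv0, hv1⟩ := hvmem
    have hdiff : ∃ k : ℤ, (z - n * θ) - v = (k : ℝ) := ⟨⌈z - n * θ⌉ - 1, by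
      push_cast; simp only [hv, repIoc]; ring⟩
    obtain ⟨k, hk⟩ := hdiff
    have hfv : f v = v - θ := by rw [hf, if_pos hv0]
    by_cases hpos : 0 < v - θ
    · refine ⟨m + 1, ?_⟩
      rw [Function.iterate_succ_apply', hm, hfv]
      refine (repIoc_eq_of ⟨hpos, by linarith⟩ k ?_).symm
      push_cast; linarith
    · refine ⟨m + 2, ?_⟩
      have h2 : f^[m + 2] z = f (f (f^[m] z)) := by
        rw [show m + 2 = (m + 1) + 1 by ring, Function.iterate_succ_apply',
          Function.iterate_succ_apply']
      rw [h2, hm, hfv]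
      have hle : v - θ ≤ 0 := not_lt.mp hpos
      have hfv2 : f (v - θ) = v - θ + 1 := by rw [hf, if_neg hpos]
      rw [hfv2]
      refine (repIoc_eq_of ⟨by linarith, by linarith⟩ (k - 1) ?_).symm
      push_cast; linarith

/-- Density of the backward rotation orbit: for irrational `θ`, the fractional parts
`fract (z - nθ)`, `n : ℕ`, meet every open subinterval of `[0, 1]`. -/
lemma fract_orbit_dense (θ : ℝ) (hθirr : Irrational θ) (z a b : ℝ)
    (ha : 0 ≤ a) (hb : b ≤ 1) (hab : a < b) :
    ∃ n : ℕ, Int.fract (z - n * θ) ∈ Set.Ioo a b := by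
  set δ := b - a with hδ
  have hδ0 : 0 < δ := by simp [hδ]; linarith
  -- Dirichlet approximation: find a small positive `c ≡ ±kθ (mod 1)` with `k ≥ 1`.
  obtain ⟨N, hN0, hNδ⟩ : ∃ N : ℕ, 0 < N ∧ 1 / ((N : ℝ) + 1) < δ := by
    refine ⟨⌈1 / δ⌉₊ + 1, Nat.succ_pos _, ?_⟩
    have h1 : (1 : ℝ) / δ ≤ ⌈1 / δ⌉₊ := Nat.le_ceil _
    have h2 : (0 : ℝ) < (⌈1 / δ⌉₊ : ℝ) + 1 + 1 := by positivity
    push_cast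
    rw [div_lt_iff₀ h2]
    rw [div_le_iff₀ hδ0] at h1
    nlinarith
  obtain ⟨j, k, hk0, hkN, hjk⟩ := Real.exists_int_int_abs_mul_sub_le θ hN0
  set u := (k : ℝ) * θ - j with hu
  have hune : u ≠ 0 := by
    intro h
    apply hθirr
    refine ⟨(j : ℚ) / (k : ℚ), ?_⟩
    have hk0' : (k : ℝ) ≠ 0 := by exact_mod_cast hk0.ne'
    have h' : (k : ℝ) * θ - j = 0 := by rw [← hu]; exact h
    push_cast
    rw [div_eq_iff hk0']
    linarith
  set c := |u| with hc
  have hc0 : 0 < c := abs_pos.mpr hune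
  have hcδ : c < δ := lt_of_le_of_lt hjk hNδ
  -- `k.toNat` as a natural number
  set K : ℕ := k.toNat with hK
  have hKk : (K : ℝ) = (k : ℝ) := by
    rw [hK]
    exact_mod_cast congrArg (Int.cast : ℤ → ℝ) (Int.toNat_of_nonneg hk0.le)
  rcases lt_or_gt_of_ne hune with hu_neg | hu_pos
  · -- `u < 0`: `c = j - kθ`, the fractional orbit increases by `c` each `K` steps.
    have hcu : c = (j : ℝ) - k * θ := by rw [hc, abs_of_neg hu_neg, hu]; ring
    set r := (1 + a - Int.fract z) / c with hr
    have hfz := Int.fract_nonneg z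
    have hfz1 := Int.fract_lt_one z
    have hr0 : 0 ≤ r := by rw [hr]; apply div_nonneg _ hc0.le; linarith
    set m : ℕ := ⌊r⌋₊ + 1 with hm
    refine ⟨m * K, ?_⟩
    have key : Int.fract (z - (m * K : ℕ) * θ) = Int.fract (Int.fract z + m * c) := by
      rw [Int.fract_eq_fract]
      refine ⟨⌊z⌋ - m * j, ?_⟩
      push_cast
      rw [hKk]
      have : Int.fract z = z - ⌊z⌋ := rfl
      rw [this, hcu]
      ring
    rw [key]
    set t := Int.fract z + m * c with ht
    have hmr : r < (m : ℝ) := by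
      rw [hm]; push_cast; exact Nat.lt_floor_add_one r
    have h1 : 1 + a < t := by
      have := (div_lt_iff₀ hc0).mp hmr
      rw [ht]; linarith
    have h2 : t < 1 + b := by
      have hfl : (⌊r⌋₊ : ℝ) ≤ r := Nat.floor_le hr0
      have := (le_div_iff₀ hc0).mp hfl
      have hmc : (m : ℝ) * c = (⌊r⌋₊ : ℝ) * c + c := by rw [hm]; push_cast; ring
      rw [ht, hmc]; linarith
    have : Int.fract t = t - 1 := by
      have h3 : Int.fract (t - 1) = t - 1 := Int.fract_eq_self.mpr ⟨by linarith, by linarith⟩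
      have h4 : Int.fract (t - 1) = Int.fract t := by
        rw [show (1 : ℝ) = ((1 : ℤ) : ℝ) by norm_num, Int.fract_sub_intCast]
      rw [← h4, h3]
    rw [this]
    exact ⟨by linarith, by linarith⟩
  · -- `u > 0`: `c = kθ - j`, the fractional orbit decreases by `c` each `K` steps.
    have hcu : c = (k : ℝ) * θ - j := by rw [hc, abs_of_pos hu_pos, hu]
    set r := (Int.fract z - (b - 1)) / c with hr
    have hfz := Int.fract_nonneg z
    have hfz1 := Int.fract_lt_one z
    have hr0 : 0 ≤ r := by rw [hr]; apply div_nonneg _ hc0.le; linarith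
    set m : ℕ := ⌊r⌋₊ + 1 with hm
    refine ⟨m * K, ?_⟩
    have key : Int.fract (z - (m * K : ℕ) * θ) = Int.fract (Int.fract z - m * c) := by
      rw [Int.fract_eq_fract]
      refine ⟨⌊z⌋ - m * j, ?_⟩
      push_cast
      rw [hKk]
      have : Int.fract z = z - ⌊z⌋ := rfl
      rw [this, hcu]
      ring
    rw [key]
    set t := Int.fract z - m * c with ht
    have hmr : r < (m : ℝ) := by
      rw [hm]; push_cast; exact Nat.lt_floor_add_one r
    have h1 : t < b - 1 := by
      have := (div_lt_iff₀ hc0).mp hmr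
      rw [ht]; linarith
    have h2 : a - 1 < t := by
      have hfl : (⌊r⌋₊ : ℝ) ≤ r := Nat.floor_le hr0
      have := (le_div_iff₀ hc0).mp hfl
      have hmc : (m : ℝ) * c = (⌊r⌋₊ : ℝ) * c + c := by rw [hm]; push_cast; ring
      rw [ht, hmc]; linarith
    have : Int.fract t = t + 1 := by
      have h3 : Int.fract (t + 1) = t + 1 := Int.fract_eq_self.mpr ⟨by linarith, by linarith⟩
      have h4 : Int.fract (t + 1) = Int.fract t := by
        rw [show (1 : ℝ) = ((1 : ℤ) : ℝ) by norm_num, Int.fract_add_intCast]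
      rw [← h4, h3]
    rw [this]
    exact ⟨by linarith, by linarith⟩

/-- For irrational `θ ∈ (0,1)` and the map `f(w) = w − θ` for `w > 0`, `f(w) = w + 1` for
`w ≤ 0`, every orbit starting in `(0,1]` enters `[−ε, 0]` for every `ε > 0`: there is an
iterate `m ≥ 1` with `−ε ≤ f^[m] z ≤ 0`. (The induced first-return map of `f` on `(0,1]`
is the rotation by the irrational angle `θ`, whose orbits are dense.) -/
theorem iterate_enters_left_nbhd_of_zero
    (θ : ℝ) (hθirr : Irrational θ) (hθ : θ ∈ Set.Ioo (0 : ℝ) 1)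
    (f : ℝ → ℝ) (hf : ∀ w : ℝ, f w = if 0 < w then w - θ else w + 1) :
    ∀ z ∈ Set.Ioc (0 : ℝ) 1, ∀ ε > (0 : ℝ),
      ∃ m : ℕ, 1 ≤ m ∧ -ε ≤ f^[m] z ∧ f^[m] z ≤ 0 := by
  intro z hz ε hε
  obtain ⟨hθ0, hθ1⟩ := hθ
  set δ := min ε θ with hδ
  have hδ0 : 0 < δ := lt_min hε hθ0
  have hδθ : δ ≤ θ := min_le_right _ _
  have hδε : δ ≤ ε := min_le_left _ _
  -- find `n` with `fract (z - nθ) ∈ (θ - δ/2, θ)`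
  obtain ⟨n, hn⟩ := fract_orbit_dense θ hθirr z (θ - δ / 2) θ (by linarith) (by linarith)
    (by linarith)
  obtain ⟨hn1, hn2⟩ := hn
  have hfr0 : 0 < Int.fract (z - n * θ) := by linarith
  have hrep : repIoc (z - n * θ) = Int.fract (z - n * θ) := repIoc_eq_fract hfr0
  obtain ⟨m, hm⟩ := orbit_hits_rep θ ⟨hθ0, hθ1⟩ f hf z hz n
  rw [hrep] at hm
  refine ⟨m + 1, le_add_self, ?_, ?_⟩
  · rw [Function.iterate_succ_apply', hm, hf]
    simp [hfr0]
    linarith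
  · rw [Function.iterate_succ_apply', hm, hf]
    simp [hfr0]
    linarith
end
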